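/- arXiv:1704.07114 — 6 statements merged into one kernel-verified Lean document; each statement's English description precedes it below -/
import Mathlib

section
/- For every fixed integer k > 1, the parametric complexity satisfies COMP(𝓜_{n/k}) / (n log₂ k) → 1 as n → ∞. -/
open Finset Filter Real

namespace RD

/-- Stirling numbers of the second kind: the number of partitions of an `n`-set into `k`
nonempty blocks. -/
def stirling2 : ℕ → ℕ → ℕ
  | 0, 0 => 1
  | 0, _ + 1 => 0
  | _ + 1, 0 => 0
  | n + 1, k + 1 => (k + 1) * stirling2 n (k + 1) + stirling2 n k

noncomputable section

/-- Rissanen's universal code length for integers: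
`l*(m) = max(0, log₂ m) + max(0, log₂ log₂ m) + ⋯`. -/
def lstar (x : ℝ) : ℝ := ∑' j : ℕ, max 0 ((fun y => Real.logb 2 y)^[j + 1] x)

/-- The upper bound `m_k` for the parametric code length. -/
def mK (n k : ℕ) : ℝ :=
  lstar n
    + lstar ((stirling2 n k * ((n - k + 2).choose 2 + 1) ^ (k.choose 2 + k) + 1 : ℕ))
    + 1

/-- A stochastic block model on `n` labelled vertices: a partition of the vertex set
together with a symmetric, irreducible matrix of rational edge densities of the form
`d_{ij} = h_{ij}/(|V_i||V_j|)` (`i ≠ j`), `d_{ii} = h_{ii}/C(|V_i|,2)`. -/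
structure BlockModel (n : ℕ) where
  /-- The partition of the vertex set. -/
  P : Finpartition (Finset.univ : Finset (Fin n))
  /-- The edge-probability between two blocks (or within a block, on the diagonal). -/
  D : Finset (Fin n) → Finset (Fin n) → ℝ
  symm : ∀ A B : Finset (Fin n), D A B = D B A
  mem01 : ∀ A ∈ P.parts, ∀ B ∈ P.parts, 0 ≤ D A B ∧ D A B ≤ 1
  ratOff : ∀ A ∈ P.parts, ∀ B ∈ P.parts, A ≠ B →
    ∃ h : ℕ, D A B = (h : ℝ) / ((A.card : ℝ) * B.card)
  ratDiag : ∀ A ∈ P.parts, ∃ h : ℕ, D A A = (h : ℝ) / (A.card.choose 2 : ℝ)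
  irred : ∀ A ∈ P.parts, ∀ B ∈ P.parts, A ≠ B → ∃ C ∈ P.parts, D A C ≠ D B C

open Classical in
/-- The probability `P(G ∣ Θ)` that the stochastic block model `Θ` produces the graph
`G`. -/
def modelProb (n : ℕ) (Θ : BlockModel n) (G : SimpleGraph (Fin n)) : ℝ :=
  ∏ p ∈ Finset.univ.filter (fun p : Fin n × Fin n => p.1 < p.2),
    if G.Adj p.1 p.2 then Θ.D (Θ.P.part p.1) (Θ.P.part p.2)
    else 1 - Θ.D (Θ.P.part p.1) (Θ.P.part p.2)

/-- The maximum likelihood `P(G ∣ Θ̂_k(G))` of `G` over the modeling space `𝓜_{n/k}` of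
stochastic block models with exactly `k` blocks. -/
def maxLik (n k : ℕ) (G : SimpleGraph (Fin n)) : ℝ :=
  sSup {x : ℝ | ∃ Θ : BlockModel n, Θ.P.parts.card = k ∧ x = modelProb n Θ G}

/-- The parametric complexity `COMP(𝓜_{n/k}) = log₂ ∑_{G ∈ Ω_n} P(G ∣ Θ̂_k(G))`. -/
def COMP (n k : ℕ) : ℝ :=
  Real.logb 2 (∑ G : SimpleGraph (Fin n), maxLik n k G)

end

end RD

open Finset Filter Real RD

/-! ### Auxiliary definitions -/

noncomputable section

open Classical in
/-- Likelihood of a graph under an arbitrary symmetric weight function. -/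
def W (n : ℕ) (d : Fin n → Fin n → ℝ) (G : SimpleGraph (Fin n)) : ℝ :=
  ∏ p ∈ Finset.univ.filter (fun p : Fin n × Fin n => p.1 < p.2),
    if G.Adj p.1 p.2 then d p.1 p.2 else 1 - d p.1 p.2

/-- The signature of a block model. -/
def sig (n : ℕ) (Θ : BlockModel n) : Fin n → Fin n → ℝ :=
  fun u v => Θ.D (Θ.P.part u) (Θ.P.part v)

lemma modelProb_eq_W (n : ℕ) (Θ : BlockModel n) (G : SimpleGraph (Fin n)) :
    modelProb n Θ G = W n (sig n Θ) G := rfl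

/-- The graph obtained from a finite set of ordered pairs. -/
def graphOfPairs (n : ℕ) (t : Finset (Fin n × Fin n)) : SimpleGraph (Fin n) where
  Adj u v := ((u, v) ∈ t ∧ u < v) ∨ ((v, u) ∈ t ∧ v < u)
  symm := by constructor; intro u v h; tauto
  loopless := by constructor; intro u h; rcases h with ⟨_, h⟩ | ⟨_, h⟩ <;> exact lt_irrefl _ h

/-- The total likelihood over all graphs equals 1. -/
lemma sum_W_eq_one (n : ℕ) (d : Fin n → Fin n → ℝ) :
    ∑ G : SimpleGraph (Fin n), W n d G = 1 := by
  classical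
  set s : Finset (Fin n × Fin n) :=
    Finset.univ.filter (fun p : Fin n × Fin n => p.1 < p.2) with hs
  have hmem : ∀ p : Fin n × Fin n, p ∈ s ↔ p.1 < p.2 := by
    intro p; simp [hs]
  have key : ∑ G : SimpleGraph (Fin n), W n d G
      = ∑ t ∈ s.powerset, (∏ p ∈ t, d p.1 p.2) * ∏ p ∈ s \ t, (1 - d p.1 p.2) := by
    refine Finset.sum_nbij' (fun G => s.filter (fun p => G.Adj p.1 p.2))
      (fun t => graphOfPairs n t) ?_ ?_ ?_ ?_ ?_
    · intro G _; exact Finset.mem_powerset.2 (Finset.filter_subset _ _)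
    · intro t _; exact Finset.mem_univ _
    · intro G _
      ext u v
      simp only [graphOfPairs, Finset.mem_filter, hmem]
      constructor
      · rintro (⟨⟨h1, h2⟩, _⟩ | ⟨⟨h1, h2⟩, _⟩)
        · exact h2
        · exact h2.symm
      · intro h
        rcases lt_or_gt_of_ne h.ne with hlt | hgt
        · exact Or.inl ⟨⟨hlt, h⟩, hlt⟩
        · exact Or.inr ⟨⟨hgt, h.symm⟩, hgt⟩
    · intro t ht
      have hts : t ⊆ s := Finset.mem_powerset.1 ht
      ext p
      rw [Finset.mem_filter]
      simp only [graphOfPairs, hmem]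
      constructor
      · rintro ⟨hp, ⟨h1, _⟩ | ⟨h1, h2⟩⟩
        · exact h1
        · exact absurd ((hmem _).1 (hts h1)) (asymm hp)
      · intro hp
        have := (hmem _).1 (hts hp)
        exact ⟨this, Or.inl ⟨hp, this⟩⟩
    · intro G _
      rw [W, Finset.prod_ite (fun p : Fin n × Fin n => d p.1 p.2)
        (fun p : Fin n × Fin n => 1 - d p.1 p.2), Finset.filter_not]
  rw [key, ← Finset.prod_add (fun p : Fin n × Fin n => d p.1 p.2)
    (fun p : Fin n × Fin n => 1 - d p.1 p.2) s]
  simp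

end
noncomputable section
variable {n k : ℕ}

lemma W_nonneg (d : Fin n → Fin n → ℝ) (hd : ∀ u v, 0 ≤ d u v ∧ d u v ≤ 1)
    (G : SimpleGraph (Fin n)) : 0 ≤ W n d G := by
  refine Finset.prod_nonneg fun p _ => ?_
  split
  · exact (hd p.1 p.2).1
  · linarith [(hd p.1 p.2).2]

lemma sig_mem01 (Θ : BlockModel n) (u v : Fin n) :
    0 ≤ sig n Θ u v ∧ sig n Θ u v ≤ 1 :=
  Θ.mem01 _ (Θ.P.part_mem.2 (Finset.mem_univ u)) _ (Θ.P.part_mem.2 (Finset.mem_univ v))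

lemma modelProb_nonneg (Θ : BlockModel n) (G : SimpleGraph (Fin n)) :
    0 ≤ modelProb n Θ G := by
  rw [modelProb_eq_W]; exact W_nonneg _ (sig_mem01 Θ) G

lemma modelProb_le_one (Θ : BlockModel n) (G : SimpleGraph (Fin n)) :
    modelProb n Θ G ≤ 1 := by
  rw [modelProb_eq_W, W]
  refine Finset.prod_le_one (fun p _ => ?_) (fun p _ => ?_)
  · split
    · exact (sig_mem01 Θ p.1 p.2).1
    · linarith [(sig_mem01 Θ p.1 p.2).2]
  · split
    · exact (sig_mem01 Θ p.1 p.2).2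
    · linarith [(sig_mem01 Θ p.1 p.2).1]

lemma likSet_bddAbove (G : SimpleGraph (Fin n)) :
    BddAbove {x : ℝ | ∃ Θ : BlockModel n, Θ.P.parts.card = k ∧ x = modelProb n Θ G} := by
  refine ⟨1, fun x hx => ?_⟩
  obtain ⟨Θ, -, rfl⟩ := hx
  exact modelProb_le_one Θ G

lemma le_maxLik (G : SimpleGraph (Fin n)) (Θ : BlockModel n) (hΘ : Θ.P.parts.card = k) :
    modelProb n Θ G ≤ maxLik n k G :=
  le_csSup (likSet_bddAbove G) ⟨Θ, hΘ, rfl⟩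

lemma maxLik_nonneg (G : SimpleGraph (Fin n)) : 0 ≤ maxLik n k G := by
  rcases Set.eq_empty_or_nonempty
    {x : ℝ | ∃ Θ : BlockModel n, Θ.P.parts.card = k ∧ x = modelProb n Θ G} with h | h
  · rw [maxLik, h, Real.sSup_empty]
  · obtain ⟨x, Θ, hΘ, rfl⟩ := h
    exact le_trans (modelProb_nonneg Θ G) (le_maxLik G Θ hΘ)

/-! ### Fibers and the block model of a colouring -/

/-- The fiber of a colouring. -/
def fiber (f : Fin n → Fin k) (i : Fin k) : Finset (Fin n) :=
  Finset.univ.filter (fun v => f v = i)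

lemma mem_fiber {f : Fin n → Fin k} {i : Fin k} {v : Fin n} :
    v ∈ fiber f i ↔ f v = i := by simp [fiber]

/-- The partition of `Fin n` into the fibers of a colouring. -/
def partitionOf (f : Fin n → Fin k) (hf : ∀ i, (fiber f i).Nonempty) :
    Finpartition (Finset.univ : Finset (Fin n)) where
  parts := Finset.image (fiber f) Finset.univ
  supIndep := by
    rw [Finset.supIndep_iff_pairwiseDisjoint]
    rintro A hA B hB hAB
    simp only [Finset.coe_image, Set.mem_image] at hA hB
    obtain ⟨i, -, rfl⟩ := hA
    obtain ⟨j, -, rfl⟩ := hB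
    simp only [Function.onFun, id]
    rw [Finset.disjoint_left]
    intro v hv hv'
    exact hAB (by rw [← mem_fiber.1 hv, ← mem_fiber.1 hv'])
  sup_parts := by
    refine le_antisymm le_top fun v _ => ?_
    rw [Finset.mem_sup]
    exact ⟨fiber f (f v), Finset.mem_image_of_mem _ (Finset.mem_univ _), mem_fiber.2 rfl⟩
  bot_notMem := by
    simp only [Finset.bot_eq_empty, Finset.mem_image]
    rintro ⟨i, -, hi⟩
    exact (hf i).ne_empty hi

lemma partitionOf_part (f : Fin n → Fin k) (hf : ∀ i, (fiber f i).Nonempty) (v : Fin n) :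
    (partitionOf f hf).part v = fiber f (f v) :=
  Finpartition.part_eq_of_mem _ (Finset.mem_image_of_mem _ (Finset.mem_univ _)) (mem_fiber.2 rfl)

lemma fiber_injective {f : Fin n → Fin k} (hf : ∀ i, (fiber f i).Nonempty) :
    Function.Injective (fiber f) := by
  intro i j hij
  obtain ⟨v, hv⟩ := hf i
  have hvj : v ∈ fiber f j := hij ▸ hv
  rw [← mem_fiber.1 hv, mem_fiber.1 hvj]

lemma partitionOf_card (f : Fin n → Fin k) (hf : ∀ i, (fiber f i).Nonempty) :
    (partitionOf f hf).parts.card = k := by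
  rw [partitionOf, Finset.card_image_of_injective _ (fiber_injective hf)]
  simp

/-- The graph whose edges join vertices of the same colour. -/
def graphOfColouring (f : Fin n → Fin k) : SimpleGraph (Fin n) where
  Adj u v := u ≠ v ∧ f u = f v
  symm := by constructor; rintro u v ⟨h1, h2⟩; exact ⟨h1.symm, h2.symm⟩
  loopless := by constructor; rintro u ⟨h1, -⟩; exact h1 rfl

/-- The block model associated with a colouring all of whose fibers have at least
two elements. -/
def modelOf (f : Fin n → Fin k) (hf : ∀ i, 2 ≤ (fiber f i).card) : BlockModel n where
  P := partitionOf f (fun i => Finset.card_pos.1 (lt_of_lt_of_le two_pos (hf i)))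
  D A B := if A = B then 1 else 0
  symm A B := by by_cases h : A = B <;> simp [h, eq_comm]
  mem01 A _ B _ := by split <;> norm_num
  ratOff A _ B _ hAB := ⟨0, by simp [hAB]⟩
  ratDiag A hA := by
    refine ⟨A.card.choose 2, ?_⟩
    have h2 : 2 ≤ A.card := by
      simp only [partitionOf, Finset.mem_image] at hA
      obtain ⟨i, -, rfl⟩ := hA
      exact hf i
    have : (0 : ℝ) < (A.card.choose 2 : ℝ) := by
      exact_mod_cast Nat.choose_pos h2
    simp [div_self this.ne']
  irred A hA B hB hAB := ⟨A, hA, by simp [hAB.symm, Ne.symm hAB]⟩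

end
noncomputable section
variable {n k : ℕ}

lemma modelOf_card (f : Fin n → Fin k) (hf : ∀ i, 2 ≤ (fiber f i).card) :
    (modelOf f hf).P.parts.card = k :=
  partitionOf_card f (fun i => Finset.card_pos.1 (lt_of_lt_of_le two_pos (hf i)))

lemma modelProb_modelOf (f : Fin n → Fin k) (hf : ∀ i, 2 ≤ (fiber f i).card) :
    modelProb n (modelOf f hf) (graphOfColouring f) = 1 := by
  rw [modelProb]
  refine Finset.prod_eq_one fun p hp => ?_
  have hlt : p.1 < p.2 := by simpa using hp
  simp only [modelOf]
  rw [partitionOf_part, partitionOf_part]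
  by_cases h : f p.1 = f p.2
  · have hadj : (graphOfColouring f).Adj p.1 p.2 := ⟨hlt.ne, h⟩
    rw [if_pos hadj, h, if_pos rfl]
  · have hadj : ¬ (graphOfColouring f).Adj p.1 p.2 := fun hc => h hc.2
    have hne : fiber f (f p.1) ≠ fiber f (f p.2) := by
      intro hc
      exact h (mem_fiber.1 (hc ▸ mem_fiber.2 rfl))
    rw [if_neg hadj, if_neg hne]
    norm_num

/-- The standard colouring extending `g` with two pinned vertices per colour. -/
def pinned (hk : 0 < k) (hn : 2 * k ≤ n) (g : Fin (n - 2 * k) → Fin k) :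
    Fin n → Fin k := fun v =>
  if h : (v : ℕ) < 2 * k then ⟨(v : ℕ) % k, Nat.mod_lt _ hk⟩
  else g ⟨(v : ℕ) - 2 * k, by omega⟩

lemma pinned_small (hk : 0 < k) (hn : 2 * k ≤ n) (g : Fin (n - 2 * k) → Fin k)
    (v : Fin n) (hv : (v : ℕ) < 2 * k) :
    pinned hk hn g v = ⟨(v : ℕ) % k, Nat.mod_lt _ hk⟩ := dif_pos hv

lemma pinned_big (hk : 0 < k) (hn : 2 * k ≤ n) (g : Fin (n - 2 * k) → Fin k)
    (x : Fin (n - 2 * k)) :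
    pinned hk hn g ⟨2 * k + (x : ℕ), by omega⟩ = g x := by
  rw [pinned, dif_neg (by simp)]
  congr 1
  ext
  simp

lemma pinned_fiber_two (hk : 0 < k) (hn : 2 * k ≤ n) (g : Fin (n - 2 * k) → Fin k)
    (i : Fin k) : 2 ≤ (fiber (pinned hk hn g) i).card := by
  have hik : (i : ℕ) < k := i.2
  have h1 : (⟨(i : ℕ), by omega⟩ : Fin n) ∈ fiber (pinned hk hn g) i := by
    rw [mem_fiber, pinned_small hk hn g _ (by simp; omega)]
    ext
    simp [Nat.mod_eq_of_lt hik]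
  have h2 : (⟨k + (i : ℕ), by omega⟩ : Fin n) ∈ fiber (pinned hk hn g) i := by
    rw [mem_fiber, pinned_small hk hn g _ (by simp; omega)]
    ext
    simp [Nat.add_mod_left, Nat.mod_eq_of_lt hik]
  rw [Nat.succ_le_iff, Finset.one_lt_card]
  exact ⟨_, h1, _, h2, by simp; omega⟩

lemma graph_pinned_injective (hk : 0 < k) (hn : 2 * k ≤ n) :
    Function.Injective (fun g : Fin (n - 2 * k) → Fin k =>
      graphOfColouring (pinned hk hn g)) := by
  intro g g' hgg
  funext x
  set v : Fin n := ⟨2 * k + (x : ℕ), by omega⟩ with hv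
  set w : Fin n := ⟨((g x : ℕ)), by omega⟩ with hw
  have hwval : ∀ g'' : Fin (n - 2 * k) → Fin k, pinned hk hn g'' w = g x := by
    intro g''
    rw [pinned_small hk hn g'' w (by simp [hw]; omega)]
    ext
    simp [hw, Nat.mod_eq_of_lt (g x).2]
  have hadj : (graphOfColouring (pinned hk hn g)).Adj v w := by
    refine ⟨?_, ?_⟩
    · intro hc
      have : 2 * k + (x : ℕ) = (g x : ℕ) := congrArg Fin.val hc
      have := (g x).2
      omega
    · rw [hwval g, pinned_big hk hn g x]
  have hgg' : graphOfColouring (pinned hk hn g) = graphOfColouring (pinned hk hn g') := hgg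
  rw [hgg'] at hadj
  have := hadj.2
  rw [hwval g', pinned_big hk hn g' x] at this
  exact this.symm

/-- Lower bound for the total maximum likelihood. -/
lemma sum_maxLik_lower (hk : 0 < k) (hn : 2 * k ≤ n) :
    ((k : ℝ)) ^ (n - 2 * k) ≤ ∑ G : SimpleGraph (Fin n), maxLik n k G := by
  classical
  set I : Finset (SimpleGraph (Fin n)) :=
    Finset.image (fun g : Fin (n - 2 * k) → Fin k =>
      graphOfColouring (pinned hk hn g)) Finset.univ with hI
  have hIcard : I.card = k ^ (n - 2 * k) := by
    rw [hI, Finset.card_image_of_injective _ (graph_pinned_injective hk hn)]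
    simp
  have hone : ∀ G ∈ I, (1 : ℝ) ≤ maxLik n k G := by
    intro G hG
    rw [hI, Finset.mem_image] at hG
    obtain ⟨g, -, rfl⟩ := hG
    have := le_maxLik (k := k) (graphOfColouring (pinned hk hn g))
      (modelOf _ (pinned_fiber_two hk hn g)) (modelOf_card _ _)
    rwa [modelProb_modelOf] at this
  calc ((k : ℝ)) ^ (n - 2 * k) = ∑ _G ∈ I, (1 : ℝ) := by
        rw [Finset.sum_const, hIcard]; simp
    _ ≤ ∑ G ∈ I, maxLik n k G := Finset.sum_le_sum hone
    _ ≤ ∑ G : SimpleGraph (Fin n), maxLik n k G :=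
        Finset.sum_le_sum_of_subset_of_nonneg (Finset.subset_univ I)
          (fun G _ _ => maxLik_nonneg G)

end
noncomputable section
variable {n k : ℕ}

open Classical in
/-- All rationals `h/d` with `h ≤ d ≤ n²`. -/
def Qset (n : ℕ) : Finset ℝ :=
  Finset.image (fun p : ℕ × ℕ => (p.1 : ℝ) / p.2)
    ((Finset.range (n ^ 2 + 1) ×ˢ Finset.range (n ^ 2 + 1)).filter
      (fun p => p.1 ≤ p.2))

open Classical in
/-- The finite set of possible signatures of `k`-block models. -/
def Uset (n k : ℕ) : Finset (Fin n → Fin n → ℝ) :=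
  Finset.image
    (fun cM : (Fin n → Fin k) × (Fin k → Fin k → ℝ) =>
      fun u v => cM.2 (cM.1 u) (cM.1 v))
    (Finset.univ ×ˢ Fintype.piFinset (fun _ : Fin k =>
      Fintype.piFinset (fun _ : Fin k => Qset n)))

lemma Qset_mem01 {x : ℝ} (hx : x ∈ Qset n) : 0 ≤ x ∧ x ≤ 1 := by
  classical
  rw [Qset, Finset.mem_image] at hx
  obtain ⟨p, hp, rfl⟩ := hx
  rw [Finset.mem_filter] at hp
  rcases Nat.eq_zero_or_pos p.2 with h2 | h2
  · have : p.1 = 0 := by omega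
    simp [this, h2]
  · constructor
    · positivity
    · rw [div_le_one (by exact_mod_cast h2)]
      exact_mod_cast hp.2

lemma Uset_mem01 {d : Fin n → Fin n → ℝ} (hd : d ∈ Uset n k) (u v : Fin n) :
    0 ≤ d u v ∧ d u v ≤ 1 := by
  classical
  rw [Uset, Finset.mem_image] at hd
  obtain ⟨cM, hcM, rfl⟩ := hd
  rw [Finset.mem_product] at hcM
  have := Fintype.mem_piFinset.1 (Fintype.mem_piFinset.1 hcM.2 (cM.1 u)) (cM.1 v)
  exact Qset_mem01 this

lemma Uset_card : (Uset n k).card ≤ k ^ n * (n ^ 2 + 1) ^ (2 * (k * k)) := by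
  classical
  calc (Uset n k).card
      ≤ (Finset.univ ×ˢ Fintype.piFinset (fun _ : Fin k =>
          Fintype.piFinset (fun _ : Fin k => Qset n))).card := Finset.card_image_le
    _ = k ^ n * ((Qset n).card) ^ (k * k) := by
        rw [Finset.card_product, Fintype.card_piFinset]
        simp [Finset.prod_const, pow_mul]
    _ ≤ k ^ n * ((n ^ 2 + 1) ^ 2) ^ (k * k) := by
        have h1 : (Qset n).card ≤ (n ^ 2 + 1) ^ 2 := by
          calc (Qset n).card ≤ ((Finset.range (n ^ 2 + 1) ×ˢ
              Finset.range (n ^ 2 + 1)).filter (fun p => p.1 ≤ p.2)).card :=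
                Finset.card_image_le
            _ ≤ (Finset.range (n ^ 2 + 1) ×ˢ Finset.range (n ^ 2 + 1)).card :=
                Finset.card_filter_le _ _
            _ = (n ^ 2 + 1) ^ 2 := by rw [Finset.card_product]; simp [sq]
        exact Nat.mul_le_mul_left _ (Nat.pow_le_pow_left h1 _)
    _ = k ^ n * (n ^ 2 + 1) ^ (2 * (k * k)) := by rw [← pow_mul]

lemma D_mem_Qset (Θ : BlockModel n) {A B : Finset (Fin n)} (hA : A ∈ Θ.P.parts)
    (hB : B ∈ Θ.P.parts) : Θ.D A B ∈ Qset n := by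
  classical
  have hcardA : A.card ≤ n := by
    simpa using Finset.card_le_card (Finset.subset_univ A)
  have hcardB : B.card ≤ n := by
    simpa using Finset.card_le_card (Finset.subset_univ B)
  have h01 := Θ.mem01 A hA B hB
  rw [Qset, Finset.mem_image]
  by_cases hAB : A = B
  · subst hAB
    obtain ⟨h, hD⟩ := Θ.ratDiag A hA
    rcases Nat.eq_zero_or_pos (A.card.choose 2) with hc | hc
    · refine ⟨(0, 0), by simp, ?_⟩
      rw [hD, hc]
      simp
    · have hh : h ≤ A.card.choose 2 := by
        have := h01.2
        rw [hD, div_le_one (by exact_mod_cast hc)] at this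
        exact_mod_cast this
      have hcn : A.card.choose 2 ≤ n ^ 2 := by
        calc A.card.choose 2 ≤ A.card * (A.card - 1) / 2 := by
              rw [Nat.choose_two_right]
          _ ≤ n ^ 2 := by
              have : A.card * (A.card - 1) ≤ n * n := by
                exact Nat.mul_le_mul hcardA (by omega)
              calc A.card * (A.card - 1) / 2 ≤ A.card * (A.card - 1) := Nat.div_le_self _ _
                _ ≤ n ^ 2 := by rw [sq]; exact this
      refine ⟨(h, A.card.choose 2), ?_, hD.symm⟩
      simp only [Finset.mem_filter, Finset.mem_product, Finset.mem_range]
      omega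
  · obtain ⟨h, hD⟩ := Θ.ratOff A hA B hB hAB
    have hApos : 0 < A.card := Finset.card_pos.2 (Θ.P.nonempty_of_mem_parts hA)
    have hBpos : 0 < B.card := Finset.card_pos.2 (Θ.P.nonempty_of_mem_parts hB)
    have hden : (0 : ℝ) < (A.card : ℝ) * B.card := by positivity
    have hh : h ≤ A.card * B.card := by
      have := h01.2
      rw [hD, div_le_one hden] at this
      exact_mod_cast this
    refine ⟨(h, A.card * B.card), ?_, ?_⟩
    · simp only [Finset.mem_filter, Finset.mem_product, Finset.mem_range]
      have : A.card * B.card ≤ n ^ 2 := by rw [sq]; exact Nat.mul_le_mul hcardA hcardB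
      omega
    · rw [hD]
      push_cast
      ring
lemma sig_mem_Uset (Θ : BlockModel n) (hΘ : Θ.P.parts.card = k) :
    sig n Θ ∈ Uset n k := by
  classical
  have e : (Θ.P.parts : Type _) ≃ Fin k := Finset.equivFinOfCardEq hΘ
  rw [Uset, Finset.mem_image]
  refine ⟨(fun u => e ⟨Θ.P.part u, Θ.P.part_mem.2 (Finset.mem_univ u)⟩,
    fun i j => Θ.D (e.symm i) (e.symm j)), ?_, ?_⟩
  · rw [Finset.mem_product]
    refine ⟨Finset.mem_univ _, ?_⟩
    rw [Fintype.mem_piFinset]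
    intro i
    rw [Fintype.mem_piFinset]
    intro j
    exact D_mem_Qset Θ (e.symm i).2 (e.symm j).2
  · funext u v
    simp only [Equiv.symm_apply_apply]
    rfl

/-- Upper bound for the total maximum likelihood. -/
lemma sum_maxLik_upper (hk : 0 < k) (hn : 2 * k ≤ n) :
    ∑ G : SimpleGraph (Fin n), maxLik n k G
      ≤ ((k ^ n * (n ^ 2 + 1) ^ (2 * (k * k)) : ℕ) : ℝ) := by
  classical
  -- each maxLik is attained
  have hattain : ∀ G : SimpleGraph (Fin n),
      ∃ Θ : BlockModel n, Θ.P.parts.card = k ∧ maxLik n k G = modelProb n Θ G := by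
    intro G
    set S := {x : ℝ | ∃ Θ : BlockModel n, Θ.P.parts.card = k ∧ x = modelProb n Θ G}
      with hS
    have hne : S.Nonempty := by
      refine ⟨modelProb n (modelOf _ (pinned_fiber_two hk hn (fun _ => ⟨0, hk⟩))) G,
        modelOf _ (pinned_fiber_two hk hn (fun _ => ⟨0, hk⟩)), modelOf_card _ _, rfl⟩
    have hfin : S.Finite := by
      have : S ⊆ (fun d => W n d G) '' (Uset n k : Set (Fin n → Fin n → ℝ)) := by
        rintro x ⟨Θ, hΘ, rfl⟩
        exact ⟨sig n Θ, sig_mem_Uset Θ hΘ, (modelProb_eq_W n Θ G).symm⟩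
      exact Set.Finite.subset (Set.Finite.image _ (Finset.finite_toSet _)) this
    have := Set.Nonempty.csSup_mem hne hfin
    rw [hS] at this
    obtain ⟨Θ, hΘ, hx⟩ := this
    exact ⟨Θ, hΘ, hx⟩
  choose Θg hΘg hval using hattain
  calc ∑ G : SimpleGraph (Fin n), maxLik n k G
      = ∑ G : SimpleGraph (Fin n), W n (sig n (Θg G)) G := by
        refine Finset.sum_congr rfl fun G _ => ?_
        rw [hval G, modelProb_eq_W]
    _ ≤ ∑ G : SimpleGraph (Fin n), ∑ d ∈ Uset n k, W n d G := by
        refine Finset.sum_le_sum fun G _ => ?_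
        refine Finset.single_le_sum (f := fun d => W n d G) ?_ (sig_mem_Uset _ (hΘg G))
        intro d hd
        exact W_nonneg d (Uset_mem01 hd) G
    _ = ∑ d ∈ Uset n k, ∑ G : SimpleGraph (Fin n), W n d G := Finset.sum_comm
    _ = (Uset n k).card := by
        rw [Finset.sum_congr rfl (fun d _ => sum_W_eq_one n d)]
        simp
    _ ≤ ((k ^ n * (n ^ 2 + 1) ^ (2 * (k * k)) : ℕ) : ℝ) := by
        exact_mod_cast Uset_card

end
lemma log_sq_div_tendsto :
    Tendsto (fun m : ℕ => Real.log ((m : ℝ) ^ 2 + 1) / (m : ℝ)) atTop (nhds 0) := by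
  have h1 : Tendsto (fun x : ℝ => Real.log x / x) atTop (nhds 0) :=
    Real.isLittleO_log_id_atTop.tendsto_div_nhds_zero
  have h2 : Tendsto (fun m : ℕ => (m : ℝ) + 1) atTop atTop :=
    tendsto_atTop_add_const_right _ 1 tendsto_natCast_atTop_atTop
  have hu : Tendsto (fun m : ℕ => 4 * (Real.log ((m : ℝ) + 1) / ((m : ℝ) + 1)))
      atTop (nhds 0) := by
    have := (h1.comp h2).const_mul (4 : ℝ)
    simpa using this
  refine tendsto_of_tendsto_of_tendsto_of_le_of_le' tendsto_const_nhds hu ?_ ?_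
  · filter_upwards [eventually_ge_atTop 1] with m hm
    have hm1 : (1 : ℝ) ≤ (m : ℝ) := by exact_mod_cast hm
    have hl : 0 ≤ Real.log ((m : ℝ) ^ 2 + 1) := Real.log_nonneg (by nlinarith)
    positivity
  · filter_upwards [eventually_ge_atTop 1] with m hm
    have hm1 : (1 : ℝ) ≤ (m : ℝ) := by exact_mod_cast hm
    have hlog0 : 0 ≤ Real.log ((m : ℝ) + 1) := Real.log_nonneg (by linarith)
    have hle : Real.log ((m : ℝ) ^ 2 + 1) ≤ 2 * Real.log ((m : ℝ) + 1) := by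
      have : (m : ℝ) ^ 2 + 1 ≤ ((m : ℝ) + 1) ^ 2 := by nlinarith
      calc Real.log ((m : ℝ) ^ 2 + 1) ≤ Real.log (((m : ℝ) + 1) ^ 2) :=
            Real.log_le_log (by positivity) this
        _ = 2 * Real.log ((m : ℝ) + 1) := by
            rw [Real.log_pow]
            push_cast
            ring
    calc Real.log ((m : ℝ) ^ 2 + 1) / (m : ℝ)
        ≤ (4 * Real.log ((m : ℝ) + 1)) / ((m : ℝ) + 1) := by
          rw [div_le_div_iff₀ (by linarith) (by linarith)]
          nlinarith
      _ = 4 * (Real.log ((m : ℝ) + 1) / ((m : ℝ) + 1)) := by ring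

/-- Corollary: for fixed `k > 1`, `COMP(𝓜_{n/k}) ∼ n log₂ k` as `n → ∞`. -/
theorem stmt_2 (k : ℕ) (hk : 1 < k) :
    Tendsto (fun n : ℕ => COMP n k / ((n : ℝ) * Real.logb 2 k)) atTop (nhds 1) := by
  have hk0 : 0 < k := by omega
  have hkR : (1 : ℝ) < (k : ℝ) := by exact_mod_cast hk
  set L : ℝ := Real.logb 2 k with hL
  have hLpos : 0 < L := Real.logb_pos one_lt_two hkR
  -- eventual two-sided bounds on COMP
  have hbounds : ∀ n : ℕ, 2 * k + 1 ≤ n →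
      ((n : ℝ) - 2 * k) * L ≤ COMP n k ∧
      COMP n k ≤ (n : ℝ) * L + (2 * (k * k) : ℝ) * Real.logb 2 ((n : ℝ) ^ 2 + 1) := by
    intro n hn
    have hn2k : 2 * k ≤ n := by omega
    have hlow := sum_maxLik_lower hk0 hn2k
    have hup := sum_maxLik_upper hk0 hn2k
    have hpowpos : (0 : ℝ) < (k : ℝ) ^ (n - 2 * k) := by positivity
    have hSpos : 0 < ∑ G : SimpleGraph (Fin n), maxLik n k G := lt_of_lt_of_le hpowpos hlow
    constructor
    · have h1 : Real.logb 2 ((k : ℝ) ^ (n - 2 * k))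
          ≤ Real.logb 2 (∑ G : SimpleGraph (Fin n), maxLik n k G) :=
        Real.logb_le_logb_of_le one_lt_two hpowpos hlow
      rw [Real.logb_pow] at h1
      have hcast : ((n - 2 * k : ℕ) : ℝ) = (n : ℝ) - 2 * k := by
        push_cast [Nat.cast_sub hn2k]; ring
      rw [hcast] at h1
      exact h1
    · have h2 : Real.logb 2 (∑ G : SimpleGraph (Fin n), maxLik n k G)
          ≤ Real.logb 2 ((k : ℝ) ^ n * ((n : ℝ) ^ 2 + 1) ^ (2 * (k * k))) := by
        refine Real.logb_le_logb_of_le one_lt_two hSpos ?_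
        refine hup.trans_eq ?_
        push_cast
        ring
      rw [Real.logb_mul (by positivity) (by positivity), Real.logb_pow, Real.logb_pow] at h2
      refine h2.trans_eq ?_
      push_cast
      ring
  -- lower comparison sequence
  have hlo : Tendsto (fun n : ℕ => 1 - (2 * (k : ℝ)) / n) atTop (nhds 1) := by
    have := tendsto_const_div_atTop_nhds_zero_nat (2 * (k : ℝ))
    have h := (tendsto_const_nhds : Tendsto (fun _ : ℕ => (1:ℝ)) atTop (nhds 1)).sub this
    simpa using h
  -- upper comparison sequence
  have hhi : Tendsto (fun n : ℕ =>
      1 + (2 * (k * k) : ℝ) / (L * Real.log 2) * (Real.log ((n : ℝ) ^ 2 + 1) / n))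
      atTop (nhds 1) := by
    have := (log_sq_div_tendsto).const_mul ((2 * (k * k) : ℝ) / (L * Real.log 2))
    have h := (tendsto_const_nhds : Tendsto (fun _ : ℕ => (1:ℝ)) atTop (nhds 1)).add this
    simpa using h
  refine tendsto_of_tendsto_of_tendsto_of_le_of_le' hlo hhi ?_ ?_
  · filter_upwards [eventually_ge_atTop (2 * k + 1)] with n hn
    have hnpos : (0 : ℝ) < (n : ℝ) := by
      have : 0 < n := by omega
      exact_mod_cast this
    have h := (hbounds n hn).1
    rw [← sub_nonneg]
    have key : COMP n k / ((n : ℝ) * L) - (1 - 2 * (k : ℝ) / n)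
        = (COMP n k - ((n : ℝ) - 2 * k) * L) / ((n : ℝ) * L) := by
      field_simp
    rw [key]
    apply div_nonneg (by linarith) (by positivity)
  · filter_upwards [eventually_ge_atTop (2 * k + 1)] with n hn
    have hnpos : (0 : ℝ) < (n : ℝ) := by
      have : 0 < n := by omega
      exact_mod_cast this
    have h := (hbounds n hn).2
    rw [← sub_nonneg]
    have hlogb : Real.logb 2 ((n : ℝ) ^ 2 + 1) = Real.log ((n : ℝ) ^ 2 + 1) / Real.log 2 :=
      rfl
    have hlog2 : (0 : ℝ) < Real.log 2 := Real.log_pos one_lt_two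
    have key : (1 + (2 * (k * k) : ℝ) / (L * Real.log 2) * (Real.log ((n : ℝ) ^ 2 + 1) / n))
        - COMP n k / ((n : ℝ) * L)
        = (((n : ℝ) * L + (2 * (k * k) : ℝ) * Real.logb 2 ((n : ℝ) ^ 2 + 1)) - COMP n k)
          / ((n : ℝ) * L) := by
      rw [hlogb]
      field_simp
    rw [key]
    apply div_nonneg (by linarith) (by positivity)
end

section
/- Let 0 < α < 1/2 and 0 < p < 1, let n be such that n^α divides n, and consider a random bipartite graph G_p on disjoint vertex sets X and Y with |X| = |Y| = n, where X and Y are each partitioned into n^{1−α} blocks of size n^α, and for each pair (X_i, Y_j) of blocks independently, with probability p all |X_i||Y_j| edges between X_i and Y_j are present and with probability 1 − p none is, and there are no other edges. Then for every ε > 0, the probability that the pair (X, Y) is ε-regular in G_p is at least 1 − 2·4^n·exp(−2 ε⁸ n^{2(1−α)}). -/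
open Finset Filter Real

namespace RD

noncomputable section

open Classical in
/-- The link density `d(X',Y')` between vertex subsets `X' ⊆ X`, `Y' ⊆ Y` of the random
bipartite graph determined by the block indicators `ζ`: vertices are pairs
(block index, position inside block), and `x` is joined to `y` iff `ζ (x.1, y.1)`. -/
def bdens {M s : ℕ} (ζ : Fin M × Fin M → Bool)
    (X' Y' : Finset (Fin M × Fin s)) : ℝ :=
  (∑ x ∈ X', ∑ y ∈ Y', if ζ (x.1, y.1) then (1 : ℝ) else 0)
    / ((X'.card : ℝ) * Y'.card)

/-- The pair `(X,Y)` (the two full sides of the bipartition) is `ε`-regular for the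
bipartite graph given by `ζ`. -/
def bipRegular {M s : ℕ} (ζ : Fin M × Fin M → Bool) (ε : ℝ) : Prop :=
  ∀ X' : Finset (Fin M × Fin s), ∀ Y' : Finset (Fin M × Fin s),
    ε * ((Finset.univ : Finset (Fin M × Fin s)).card : ℝ) < X'.card →
    ε * ((Finset.univ : Finset (Fin M × Fin s)).card : ℝ) < Y'.card →
    |bdens ζ X' Y' - bdens ζ (Finset.univ : Finset (Fin M × Fin s)) (Finset.univ : Finset (Fin M × Fin s))| < ε

open Classical in
/-- The probability that the pair `(X,Y)` is `ε`-regular, where independently each block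
pair `(X_i,Y_j)` is fully joined with probability `p` and empty otherwise. -/
def probRegular (M s : ℕ) (p ε : ℝ) : ℝ :=
  ∑ ζ ∈ (Finset.univ : Finset (Fin M × Fin M → Bool)).filter
      (fun ζ => bipRegular (M := M) (s := s) ζ ε),
    ∏ q : Fin M × Fin M, (if ζ q then p else 1 - p)

end

end RD

namespace RDAux

noncomputable section

variable {M s : ℕ}

/-- indicator of a Bool as a real -/
def ind (b : Bool) : ℝ := if b then 1 else 0

/-- probability weight of a configuration -/
def PP (p : ℝ) (ζ : Fin M × Fin M → Bool) : ℝ := ∏ q, (if ζ q then p else 1 - p)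

lemma PP_nonneg {p : ℝ} (hp0 : 0 ≤ p) (hp1 : p ≤ 1) (ζ : Fin M × Fin M → Bool) :
    0 ≤ PP p ζ :=
  Finset.prod_nonneg fun q _ => by cases h : ζ q <;> simp [h] <;> linarith

lemma sum_fun_bool (g : Fin M × Fin M → Bool → ℝ) :
    ∑ ζ : Fin M × Fin M → Bool, ∏ q, g q (ζ q) = ∏ q, (g q true + g q false) := by
  classical
  rw [← Fintype.piFinset_univ, Finset.sum_prod_piFinset]
  refine Finset.prod_congr rfl fun q _ => ?_
  simp [Fintype.sum_bool]

lemma PP_sum_one {p : ℝ} : ∑ ζ : Fin M × Fin M → Bool, PP p ζ = 1 := by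
  unfold PP
  rw [sum_fun_bool (fun q b => if b then p else 1 - p)]
  simp

lemma bernoulli_mgf {p : ℝ} (hp0 : 0 < p) (hp1 : p < 1) (t : ℝ) :
    p * Real.exp (t * (1 - p)) + (1 - p) * Real.exp (t * (0 - p)) ≤ Real.exp (t ^ 2 / 2) := by
  have conv : ∀ a b : ℝ, 0 ≤ a → 0 ≤ b → a + b = 1 →
      Real.exp (a * t + b * (-t)) ≤ a * Real.exp t + b * Real.exp (-t) := by
    intro a b ha hb hab
    simpa [smul_eq_mul] using
      convexOn_exp.2 (Set.mem_univ t) (Set.mem_univ (-t)) ha hb hab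
  have c1 := conv ((2 - p)/2) (p/2) (by linarith) (by linarith) (by ring)
  have c2 := conv ((1 - p)/2) ((1 + p)/2) (by linarith) (by linarith) (by ring)
  rw [show (2 - p)/2 * t + p/2 * (-t) = t * (1 - p) by ring] at c1
  rw [show (1 - p)/2 * t + (1 + p)/2 * (-t) = t * (0 - p) by ring] at c2
  have e1 := mul_le_mul_of_nonneg_left c1 hp0.le
  have e2 := mul_le_mul_of_nonneg_left c2 (by linarith : (0:ℝ) ≤ 1 - p)
  calc p * Real.exp (t * (1 - p)) + (1 - p) * Real.exp (t * (0 - p))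
      ≤ p * ((2 - p)/2 * Real.exp t + p/2 * Real.exp (-t))
        + (1 - p) * ((1 - p)/2 * Real.exp t + (1 + p)/2 * Real.exp (-t)) := add_le_add e1 e2
    _ = (Real.exp t + Real.exp (-t)) / 2 := by ring
    _ = Real.cosh t := (Real.cosh_eq t).symm
    _ ≤ Real.exp (t ^ 2 / 2) := Real.cosh_le_exp_half_sq t

lemma mgf_le {p : ℝ} (hp0 : 0 < p) (hp1 : p < 1) (v : Fin M × Fin M → ℝ) :
    ∑ ζ : Fin M × Fin M → Bool, PP p ζ * Real.exp (∑ q, v q * (ind (ζ q) - p))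
      ≤ Real.exp (∑ q, (v q) ^ 2 / 2) := by
  have h1 : ∀ ζ : Fin M × Fin M → Bool,
      PP p ζ * Real.exp (∑ q, v q * (ind (ζ q) - p))
        = ∏ q, ((if ζ q then p else 1 - p) * Real.exp (v q * (ind (ζ q) - p))) := by
    intro ζ
    rw [Real.exp_sum, PP, ← Finset.prod_mul_distrib]
  calc ∑ ζ : Fin M × Fin M → Bool, PP p ζ * Real.exp (∑ q, v q * (ind (ζ q) - p))
      = ∑ ζ : Fin M × Fin M → Bool,
          ∏ q, ((if ζ q then p else 1 - p) * Real.exp (v q * (ind (ζ q) - p))) :=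
        Finset.sum_congr rfl fun ζ _ => h1 ζ
    _ = ∏ q, (p * Real.exp (v q * (ind true - p)) + (1 - p) * Real.exp (v q * (ind false - p))) := by
        rw [sum_fun_bool (fun q b => (if b then p else 1 - p) * Real.exp (v q * (ind b - p)))]
        simp
    _ ≤ ∏ q, Real.exp ((v q) ^ 2 / 2) := by
        apply Finset.prod_le_prod
        · intro q _
          have := Real.exp_pos (v q * (ind true - p))
          have := Real.exp_pos (v q * (ind false - p))
          nlinarith
        · intro q _
          simpa [ind] using bernoulli_mgf hp0 hp1 (v q)
    _ = Real.exp (∑ q, (v q) ^ 2 / 2) := (Real.exp_sum _ _).symm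

lemma tail_le {p ε S : ℝ} (hp0 : 0 < p) (hp1 : p < 1) (hε : 0 < ε) (hS : 0 < S)
    (v : Fin M × Fin M → ℝ) (hv : ∑ q, (v q) ^ 2 ≤ S) :
    ∑ ζ ∈ Finset.univ.filter
        (fun ζ : Fin M × Fin M → Bool => ε ≤ ∑ q, v q * (ind (ζ q) - p)), PP p ζ
      ≤ Real.exp (-(ε ^ 2 / (2 * S))) := by
  classical
  set lam := ε / S with hlam
  have hlam0 : 0 < lam := div_pos hε hS
  have hPPnn := PP_nonneg (M := M) hp0.le hp1.le
  calc ∑ ζ ∈ Finset.univ.filter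
        (fun ζ : Fin M × Fin M → Bool => ε ≤ ∑ q, v q * (ind (ζ q) - p)), PP p ζ
      ≤ ∑ ζ ∈ Finset.univ.filter
        (fun ζ : Fin M × Fin M → Bool => ε ≤ ∑ q, v q * (ind (ζ q) - p)),
          PP p ζ * Real.exp (lam * ((∑ q, v q * (ind (ζ q) - p)) - ε)) := by
        apply Finset.sum_le_sum
        intro ζ hζ
        have hmem := (Finset.mem_filter.1 hζ).2
        have h1 : (1:ℝ) ≤ Real.exp (lam * ((∑ q, v q * (ind (ζ q) - p)) - ε)) := by
          rw [← Real.exp_zero]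
          apply Real.exp_le_exp.2
          have : (0:ℝ) ≤ (∑ q, v q * (ind (ζ q) - p)) - ε := by linarith
          positivity
        nlinarith [hPPnn ζ]
    _ ≤ ∑ ζ : Fin M × Fin M → Bool,
          PP p ζ * Real.exp (lam * ((∑ q, v q * (ind (ζ q) - p)) - ε)) := by
        apply Finset.sum_le_sum_of_subset_of_nonneg (Finset.filter_subset _ _)
        intro ζ _ _
        exact mul_nonneg (hPPnn ζ) (Real.exp_pos _).le
    _ = Real.exp (-(lam * ε)) * ∑ ζ : Fin M × Fin M → Bool,
          PP p ζ * Real.exp (∑ q, (lam * v q) * (ind (ζ q) - p)) := by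
        rw [Finset.mul_sum]
        apply Finset.sum_congr rfl
        intro ζ _
        rw [show (∑ q, (lam * v q) * (ind (ζ q) - p))
            = lam * (∑ q, v q * (ind (ζ q) - p)) by rw [Finset.mul_sum]; apply Finset.sum_congr rfl; intro q _; ring]
        rw [show lam * ((∑ q, v q * (ind (ζ q) - p)) - ε)
            = -(lam * ε) + lam * (∑ q, v q * (ind (ζ q) - p)) by ring]
        rw [Real.exp_add]
        ring
    _ ≤ Real.exp (-(lam * ε)) * Real.exp (∑ q, (lam * v q) ^ 2 / 2) := by
        exact mul_le_mul_of_nonneg_left (mgf_le hp0 hp1 (fun q => lam * v q)) (Real.exp_pos _).le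
    _ ≤ Real.exp (-(ε ^ 2 / (2 * S))) := by
        rw [← Real.exp_add]
        apply Real.exp_le_exp.2
        have hsum : ∑ q, (lam * v q) ^ 2 / 2 = lam ^ 2 / 2 * ∑ q, (v q) ^ 2 := by
          rw [Finset.mul_sum]; apply Finset.sum_congr rfl; intro q _; ring
        rw [hsum]
        have h2 : lam ^ 2 / 2 * ∑ q, (v q) ^ 2 ≤ lam ^ 2 / 2 * S :=
          mul_le_mul_of_nonneg_left hv (by positivity)
        have e1 : lam * ε = ε ^ 2 / S := by rw [hlam]; field_simp
        have e2 : lam ^ 2 / 2 * S = ε ^ 2 / (2 * S) := by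
          rw [hlam]; field_simp
        rw [e1]
        rw [e2] at h2
        have : ε ^ 2 / (2 * S) + ε ^ 2 / (2 * S) = ε ^ 2 / S := by field_simp; ring
        linarith

/-- number of elements of `T` in block `i`, as a real -/
def cnt (T : Finset (Fin M × Fin s)) (i : Fin M) : ℝ :=
  ((T.filter fun x => x.1 = i).card : ℝ)

lemma sum_fst (T : Finset (Fin M × Fin s)) (g : Fin M → ℝ) :
    ∑ x ∈ T, g x.1 = ∑ i, cnt T i * g i := by
  classical
  rw [← Finset.sum_fiberwise' T (fun x => x.1) g]
  apply Finset.sum_congr rfl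
  intro i _
  rw [Finset.sum_const, nsmul_eq_mul, cnt]

lemma cnt_nonneg (T : Finset (Fin M × Fin s)) (i : Fin M) : 0 ≤ cnt T i :=
  Nat.cast_nonneg _

lemma cnt_univ (i : Fin M) : cnt (Finset.univ : Finset (Fin M × Fin s)) i = s := by
  classical
  have h : ((Finset.univ : Finset (Fin M × Fin s)).filter fun x => x.1 = i)
      = {i} ×ˢ Finset.univ := by
    ext x
    simp only [Finset.mem_filter, Finset.mem_univ, true_and, Finset.mem_product,
      Finset.mem_singleton, and_true]
  rw [cnt, h, Finset.card_product]
  simp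

lemma cnt_le (T : Finset (Fin M × Fin s)) (i : Fin M) : cnt T i ≤ s := by
  have h := Finset.card_le_card
    (Finset.filter_subset_filter (fun x : Fin M × Fin s => x.1 = i) (Finset.subset_univ T))
  have h2 := cnt_univ (s := s) i
  rw [cnt, ← h2, cnt]
  exact_mod_cast h

lemma sum_cnt (T : Finset (Fin M × Fin s)) : ∑ i, cnt T i = T.card := by
  have h := sum_fst T (fun _ => (1:ℝ))
  simpa using h.symm

lemma sum_cnt_sq_le (T : Finset (Fin M × Fin s)) :
    ∑ i, (cnt T i) ^ 2 ≤ (s : ℝ) * T.card := by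
  calc ∑ i, (cnt T i) ^ 2 ≤ ∑ i, (s : ℝ) * cnt T i := by
        apply Finset.sum_le_sum
        intro i _
        nlinarith [cnt_le T i, cnt_nonneg T i]
    _ = (s : ℝ) * T.card := by rw [← Finset.mul_sum, sum_cnt]

lemma bdens_expand (ζ : Fin M × Fin M → Bool) (X' Y' : Finset (Fin M × Fin s)) :
    RD.bdens ζ X' Y' = (∑ q : Fin M × Fin M, cnt X' q.1 * cnt Y' q.2 * ind (ζ q))
      / ((X'.card : ℝ) * Y'.card) := by
  unfold RD.bdens
  congr 1
  calc ∑ x ∈ X', ∑ y ∈ Y', (if ζ (x.1, y.1) then (1:ℝ) else 0)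
      = ∑ x ∈ X', ∑ y ∈ Y', ind (ζ (x.1, y.1)) := by
        apply Finset.sum_congr rfl; intro x _
        apply Finset.sum_congr rfl; intro y _
        cases h : ζ (x.1, y.1) <;> simp [ind, h]
    _ = ∑ i, cnt X' i * ∑ y ∈ Y', ind (ζ (i, y.1)) :=
        sum_fst X' (fun i => ∑ y ∈ Y', ind (ζ (i, y.1)))
    _ = ∑ i, cnt X' i * ∑ j, cnt Y' j * ind (ζ (i, j)) := by
        apply Finset.sum_congr rfl; intro i _
        rw [sum_fst Y' (fun j => ind (ζ (i, j)))]
    _ = ∑ q : Fin M × Fin M, cnt X' q.1 * cnt Y' q.2 * ind (ζ q) := by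
        rw [Fintype.sum_prod_type]
        apply Finset.sum_congr rfl; intro i _
        rw [Finset.mul_sum]
        apply Finset.sum_congr rfl; intro j _
        ring

set_option maxHeartbeats 2000000 in
lemma pair_bound {p ε : ℝ} (hp0 : 0 < p) (hp1 : p < 1) (hε0 : 0 < ε) (hε1 : ε < 1)
    (hM : 0 < M) (hs : 0 < s) (X' Y' : Finset (Fin M × Fin s)) :
    ∑ ζ ∈ Finset.univ.filter (fun ζ : Fin M × Fin M → Bool =>
        ε * ((Finset.univ : Finset (Fin M × Fin s)).card : ℝ) < X'.card ∧
        ε * ((Finset.univ : Finset (Fin M × Fin s)).card : ℝ) < Y'.card ∧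
        ε ≤ |RD.bdens ζ X' Y' -
          RD.bdens ζ (Finset.univ : Finset (Fin M × Fin s)) Finset.univ|),
      PP p ζ
      ≤ 2 * Real.exp (-2 * ε ^ 8 * (M : ℝ) ^ 2) := by
  classical
  have hPPnn := PP_nonneg (M := M) hp0.le hp1.le
  by_cases hc : ε * ((Finset.univ : Finset (Fin M × Fin s)).card : ℝ) < X'.card ∧
      ε * ((Finset.univ : Finset (Fin M × Fin s)).card : ℝ) < Y'.card
  case neg =>
    rw [Finset.filter_false_of_mem]
    · simp only [Finset.sum_empty]
      positivity
    · intro ζ _ h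
      exact hc ⟨h.1, h.2.1⟩
  obtain ⟨hA, hB⟩ := hc
  have hMpos : (0:ℝ) < M := by exact_mod_cast hM
  have hM0 : (M:ℝ) ≠ 0 := ne_of_gt hMpos
  have hspos : (0:ℝ) < s := by exact_mod_cast hs
  have hucard : ((Finset.univ : Finset (Fin M × Fin s)).card : ℝ) = (M:ℝ) * s := by
    simp [Finset.card_univ]
  rw [hucard] at hA hB
  set A := (X'.card : ℝ) with hAdef
  set B := (Y'.card : ℝ) with hBdef
  have hA0 : (0:ℝ) < A := lt_of_le_of_lt (by positivity) hA
  have hB0 : (0:ℝ) < B := lt_of_le_of_lt (by positivity) hB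
  set w : Fin M × Fin M → ℝ :=
    fun q => cnt X' q.1 * cnt Y' q.2 / (A * B) - 1 / (M:ℝ)^2 with hw
  -- total weight is 0
  have hprodX : ∑ q : Fin M × Fin M, cnt X' q.1 * cnt Y' q.2 = A * B := by
    rw [Fintype.sum_prod_type, ← Finset.sum_mul_sum, sum_cnt, sum_cnt]
  have hsum1 : ∑ q : Fin M × Fin M, cnt X' q.1 * cnt Y' q.2 / (A * B) = 1 := by
    rw [← Finset.sum_div, hprodX, div_self (by positivity)]
  have hw0 : ∑ q, w q = 0 := by
    simp only [hw]
    rw [Finset.sum_sub_distrib, ← Finset.sum_div, hprodX, Finset.sum_const,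
      Finset.card_univ]
    simp only [Fintype.card_prod, Fintype.card_fin]
    rw [div_self (by positivity)]
    push_cast
    field_simp
    ring_nf; simp [hM0]
  -- the key identity
  have key : ∀ ζ : Fin M × Fin M → Bool,
      RD.bdens ζ X' Y' -
        RD.bdens ζ (Finset.univ : Finset (Fin M × Fin s)) Finset.univ
      = ∑ q, w q * (ind (ζ q) - p) := by
    intro ζ
    rw [bdens_expand, bdens_expand]
    have e1 : (∑ q : Fin M × Fin M, cnt X' q.1 * cnt Y' q.2 * ind (ζ q)) / (A * B)
        = ∑ q : Fin M × Fin M, (cnt X' q.1 * cnt Y' q.2 / (A * B)) * ind (ζ q) := by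
      rw [Finset.sum_div]
      apply Finset.sum_congr rfl; intro q _; ring
    have e2 : (∑ q : Fin M × Fin M,
          cnt (Finset.univ : Finset (Fin M × Fin s)) q.1 *
            cnt (Finset.univ : Finset (Fin M × Fin s)) q.2 * ind (ζ q)) /
          (((Finset.univ : Finset (Fin M × Fin s)).card : ℝ) *
            ((Finset.univ : Finset (Fin M × Fin s)).card : ℝ))
        = ∑ q : Fin M × Fin M, (1 / (M:ℝ)^2) * ind (ζ q) := by
      rw [Finset.sum_div]
      apply Finset.sum_congr rfl; intro q _
      rw [cnt_univ, cnt_univ, hucard]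
      field_simp
    rw [e1, e2, ← Finset.sum_sub_distrib]
    have e3 : ∑ q, w q * (ind (ζ q) - p)
        = (∑ q, w q * ind (ζ q)) - p * ∑ q, w q := by
      rw [Finset.mul_sum, ← Finset.sum_sub_distrib]
      apply Finset.sum_congr rfl; intro q _; ring
    rw [e3, hw0, mul_zero, sub_zero]
    apply Finset.sum_congr rfl; intro q _
    simp only [hw]
    ring
  -- variance bound
  set S := (1 - ε^2) / (ε^2 * (M:ℝ)^2) with hSdef
  have hS : 0 < S := div_pos (by nlinarith) (by positivity)
  have hsq : ∑ q : Fin M × Fin M, (cnt X' q.1 * cnt Y' q.2 / (A * B))^2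
      = (∑ i, (cnt X' i)^2) * (∑ j, (cnt Y' j)^2) / (A * B)^2 := by
    have h1 : ∑ q : Fin M × Fin M, (cnt X' q.1)^2 * (cnt Y' q.2)^2
        = (∑ i, (cnt X' i)^2) * (∑ j, (cnt Y' j)^2) := by
      rw [Fintype.sum_prod_type, Finset.sum_mul_sum]
    rw [← h1, Finset.sum_div]
    apply Finset.sum_congr rfl; intro q _; ring
  have hexp : ∑ q, (w q)^2
      = (∑ i, (cnt X' i)^2) * (∑ j, (cnt Y' j)^2) / (A * B)^2 - 1/(M:ℝ)^2 := by
    have hper : ∀ q : Fin M × Fin M, (w q)^2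
        = (cnt X' q.1 * cnt Y' q.2 / (A * B))^2
          - (2/(M:ℝ)^2) * (cnt X' q.1 * cnt Y' q.2 / (A * B)) + 1/(M:ℝ)^4 := by
      intro q; simp only [hw]; ring
    rw [Finset.sum_congr rfl fun q _ => hper q]
    rw [Finset.sum_add_distrib, Finset.sum_sub_distrib, hsq, ← Finset.mul_sum, hsum1,
      Finset.sum_const, Finset.card_univ]
    simp only [Fintype.card_prod, Fintype.card_fin]
    push_cast
    field_simp
    ring_nf
    rw [show (M:ℝ)^4 * A^2 * B^2 * (M:ℝ)⁻¹^4 = A^2 * B^2 by field_simp]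
    ring
  have hXY : (∑ i, (cnt X' i)^2) * (∑ j, (cnt Y' j)^2) ≤ (s:ℝ)^2 * (A*B) := by
    have h1 := sum_cnt_sq_le X'
    have h2 := sum_cnt_sq_le Y'
    calc (∑ i, (cnt X' i)^2) * (∑ j, (cnt Y' j)^2)
        ≤ ((s:ℝ) * A) * ((s:ℝ) * B) := by
          apply mul_le_mul h1 h2 (Finset.sum_nonneg fun j _ => sq_nonneg _) (by positivity)
      _ = (s:ℝ)^2 * (A*B) := by ring
  have hABbig : ε^2 * (M:ℝ)^2 * (s:ℝ)^2 ≤ A * B := by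
    have h := mul_le_mul hA.le hB.le (by positivity) hA0.le
    calc ε^2 * (M:ℝ)^2 * (s:ℝ)^2 = (ε * ((M:ℝ) * s)) * (ε * ((M:ℝ) * s)) := by ring
      _ ≤ A * B := h
  have hterm : (∑ i, (cnt X' i)^2) * (∑ j, (cnt Y' j)^2) / (A * B)^2
      ≤ 1/(ε^2*(M:ℝ)^2) := by
    have hABpos : (0:ℝ) < A * B := by positivity
    calc (∑ i, (cnt X' i)^2) * (∑ j, (cnt Y' j)^2) / (A * B)^2
        ≤ (s:ℝ)^2 * (A*B) / (A * B)^2 := by gcongr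
      _ = (s:ℝ)^2 / (A*B) := by field_simp
      _ ≤ (s:ℝ)^2 / (ε^2*(M:ℝ)^2*(s:ℝ)^2) := by
          apply div_le_div_of_nonneg_left (by positivity) (by positivity) hABbig
      _ = 1/(ε^2*(M:ℝ)^2) := by field_simp
  have hvar : ∑ q, (w q)^2 ≤ S := by
    rw [hexp, hSdef]
    have heq : 1/(ε^2*(M:ℝ)^2) - 1/(M:ℝ)^2 = (1 - ε^2) / (ε^2 * (M:ℝ)^2) := by
      field_simp
    linarith
  -- tails
  have t1 := tail_le (M := M) hp0 hp1 hε0 hS w hvar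
  have t2 := tail_le (M := M) hp0 hp1 hε0 hS (fun q => -(w q))
    (by simpa only [neg_sq] using hvar)
  set F1 := Finset.univ.filter
    (fun ζ : Fin M × Fin M → Bool => ε ≤ ∑ q, w q * (ind (ζ q) - p)) with hF1
  set F2 := Finset.univ.filter
    (fun ζ : Fin M × Fin M → Bool => ε ≤ ∑ q, (-(w q)) * (ind (ζ q) - p)) with hF2
  have hsub : Finset.univ.filter (fun ζ : Fin M × Fin M → Bool =>
        ε * ((Finset.univ : Finset (Fin M × Fin s)).card : ℝ) < X'.card ∧
        ε * ((Finset.univ : Finset (Fin M × Fin s)).card : ℝ) < Y'.card ∧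
        ε ≤ |RD.bdens ζ X' Y' -
          RD.bdens ζ (Finset.univ : Finset (Fin M × Fin s)) Finset.univ|)
      ⊆ F1 ∪ F2 := by
    intro ζ hζ
    have h3 := (Finset.mem_filter.1 hζ).2.2.2
    rw [key ζ] at h3
    rcases le_abs.1 h3 with h | h
    · exact Finset.mem_union_left _ (Finset.mem_filter.2 ⟨Finset.mem_univ _, h⟩)
    · apply Finset.mem_union_right
      apply Finset.mem_filter.2
      refine ⟨Finset.mem_univ _, ?_⟩
      rw [show ∑ q, (-(w q)) * (ind (ζ q) - p) = -∑ q, w q * (ind (ζ q) - p) by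
        rw [← Finset.sum_neg_distrib]; apply Finset.sum_congr rfl; intro q _; ring]
      exact h
  calc ∑ ζ ∈ Finset.univ.filter (fun ζ : Fin M × Fin M → Bool =>
        ε * ((Finset.univ : Finset (Fin M × Fin s)).card : ℝ) < X'.card ∧
        ε * ((Finset.univ : Finset (Fin M × Fin s)).card : ℝ) < Y'.card ∧
        ε ≤ |RD.bdens ζ X' Y' -
          RD.bdens ζ (Finset.univ : Finset (Fin M × Fin s)) Finset.univ|),
      PP p ζ
      ≤ ∑ ζ ∈ F1 ∪ F2, PP p ζ :=
        Finset.sum_le_sum_of_subset_of_nonneg hsub (fun ζ _ _ => hPPnn ζ)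
    _ ≤ (∑ ζ ∈ F1, PP p ζ) + ∑ ζ ∈ F2, PP p ζ := by
        have hui := Finset.sum_union_inter (s₁ := F1) (s₂ := F2) (f := PP p)
        have h0 : 0 ≤ ∑ ζ ∈ F1 ∩ F2, PP p ζ := Finset.sum_nonneg fun ζ _ => hPPnn ζ
        linarith
    _ ≤ Real.exp (-(ε^2/(2*S))) + Real.exp (-(ε^2/(2*S))) := add_le_add t1 t2
    _ ≤ 2 * Real.exp (-2 * ε^8 * (M:ℝ)^2) := by
        have h48 : 4*ε^4*(1-ε^2) ≤ 1 := by
          nlinarith [mul_nonneg (sq_nonneg ε) (sq_nonneg (ε^2 - 1/2)), sq_nonneg ε]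
        have hSeq : ε^2/(2*S) = ε^4*(M:ℝ)^2/(2*(1-ε^2)) := by
          rw [hSdef]; field_simp
        have hle : 2*ε^8*(M:ℝ)^2 ≤ ε^2/(2*S) := by
          rw [hSeq, le_div_iff₀ (by nlinarith : (0:ℝ) < 2*(1-ε^2))]
          nlinarith [mul_le_mul_of_nonneg_left h48 (by positivity : (0:ℝ) ≤ ε^4*(M:ℝ)^2)]
        have hexp2 : Real.exp (-(ε^2/(2*S))) ≤ Real.exp (-2*ε^8*(M:ℝ)^2) := by
          apply Real.exp_le_exp.2; linarith
        linarith

end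

end RDAux

open Finset Filter Real RD

set_option maxHeartbeats 2000000

/-- Proposition: for `0 < α < 1/2`, `0 < p < 1`, `n = M·n^α` with block size `s = n^α`,
the random block-bipartite graph `G_p` on parts of size `n` has `ε`-regular bipartition
`(X,Y)` with probability at least `1 - 2·4^n·exp(-2ε⁸n^{2(1-α)})`. -/
theorem stmt_11 (α p : ℝ) (hα0 : 0 < α) (hα : α < 1 / 2) (hp0 : 0 < p) (hp1 : p < 1)
    (n M s : ℕ) (hn : 0 < n) (hs : (s : ℝ) = (n : ℝ) ^ α) (hMs : n = M * s)
    (ε : ℝ) (hε : 0 < ε) :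
    1 - 2 * 4 ^ n * Real.exp (-2 * ε ^ 8 * (n : ℝ) ^ (2 * (1 - α)))
      ≤ probRegular M s p ε := by
  classical
  have hPPnn := RDAux.PP_nonneg (M := M) hp0.le hp1.le
  have hMpos : 0 < M := by
    rcases Nat.eq_zero_or_pos M with h | h
    · subst h; simp at hMs; omega
    · exact h
  have hspos : 0 < s := by
    rcases Nat.eq_zero_or_pos s with h | h
    · subst h; simp at hMs; omega
    · exact h
  have hn' : (0:ℝ) < n := by exact_mod_cast hn
  -- the probability as a sum over the regular configurations
  have hprob : probRegular M s p ε
      = ∑ ζ ∈ Finset.univ.filter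
          (fun ζ : Fin M × Fin M → Bool => RD.bipRegular (M := M) (s := s) ζ ε),
          RDAux.PP p ζ := by
    rfl
  have hsplit : (∑ ζ ∈ Finset.univ.filter
        (fun ζ : Fin M × Fin M → Bool => RD.bipRegular (M := M) (s := s) ζ ε),
        RDAux.PP p ζ)
      + ∑ ζ ∈ Finset.univ.filter
        (fun ζ : Fin M × Fin M → Bool => ¬ RD.bipRegular (M := M) (s := s) ζ ε),
        RDAux.PP p ζ = 1 := by
    rw [Finset.sum_filter_add_sum_filter_not]
    exact RDAux.PP_sum_one
  -- the exponent
  have hsr : (0:ℝ) < (s:ℝ) := by exact_mod_cast hspos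
  have hMr : (M:ℝ) = (n:ℝ) ^ ((1:ℝ) - α) := by
    have hcast : (n:ℝ) = (M:ℝ) * s := by exact_mod_cast hMs
    rw [Real.rpow_sub hn', Real.rpow_one, ← hs, hcast, mul_div_assoc,
      div_self (ne_of_gt hsr), mul_one]
  have hexp_eq : (n:ℝ) ^ (2 * (1 - α)) = (M:ℝ)^2 := by
    rw [show (2 * (1 - α)) = (1 - α) * 2 by ring, Real.rpow_mul hn'.le, ← hMr,
      show ((2:ℝ)) = ((2:ℕ):ℝ) by norm_num, Real.rpow_natCast]
  -- number of subsets
  have hcardF : ((Finset.univ : Finset (Finset (Fin M × Fin s))).card : ℝ) = 2 ^ n := by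
    rw [Finset.card_univ, Fintype.card_finset]
    simp [Fintype.card_prod, hMs]
  by_cases hε1 : ε < 1
  · -- main case: union bound
    have hbad : ∑ ζ ∈ Finset.univ.filter
          (fun ζ : Fin M × Fin M → Bool => ¬ RD.bipRegular (M := M) (s := s) ζ ε),
          RDAux.PP p ζ
        ≤ (2:ℝ)^n * ((2:ℝ)^n * (2 * Real.exp (-2 * ε ^ 8 * (M : ℝ) ^ 2))) := by
      have step1 : ∀ ζ ∈ Finset.univ.filter
            (fun ζ : Fin M × Fin M → Bool => ¬ RD.bipRegular (M := M) (s := s) ζ ε),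
          RDAux.PP p ζ ≤ ∑ X' : Finset (Fin M × Fin s), ∑ Y' : Finset (Fin M × Fin s),
            (if (ε * ((Finset.univ : Finset (Fin M × Fin s)).card : ℝ) < X'.card ∧
                ε * ((Finset.univ : Finset (Fin M × Fin s)).card : ℝ) < Y'.card ∧
                ε ≤ |RD.bdens ζ X' Y' -
                  RD.bdens ζ (Finset.univ : Finset (Fin M × Fin s)) Finset.univ|)
              then RDAux.PP p ζ else 0) := by
        intro ζ hζ
        have hnreg := (Finset.mem_filter.1 hζ).2
        simp only [RD.bipRegular] at hnreg
        push_neg at hnreg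
        obtain ⟨X₀, Y₀, h1, h2, h3⟩ := hnreg
        have hnn : ∀ X' Y' : Finset (Fin M × Fin s),
            0 ≤ (if (ε * ((Finset.univ : Finset (Fin M × Fin s)).card : ℝ) < X'.card ∧
                ε * ((Finset.univ : Finset (Fin M × Fin s)).card : ℝ) < Y'.card ∧
                ε ≤ |RD.bdens ζ X' Y' -
                  RD.bdens ζ (Finset.univ : Finset (Fin M × Fin s)) Finset.univ|)
              then RDAux.PP p ζ else 0) := by
          intro X' Y'
          split_ifs
          · exact hPPnn ζ
          · exact le_refl 0
        have hterm : RDAux.PP p ζ ≤ ∑ Y' : Finset (Fin M × Fin s),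
            (if (ε * ((Finset.univ : Finset (Fin M × Fin s)).card : ℝ) < X₀.card ∧
                ε * ((Finset.univ : Finset (Fin M × Fin s)).card : ℝ) < Y'.card ∧
                ε ≤ |RD.bdens ζ X₀ Y' -
                  RD.bdens ζ (Finset.univ : Finset (Fin M × Fin s)) Finset.univ|)
              then RDAux.PP p ζ else 0) := by
          have hsing := Finset.single_le_sum (f := fun Y' : Finset (Fin M × Fin s) =>
            (if (ε * ((Finset.univ : Finset (Fin M × Fin s)).card : ℝ) < X₀.card ∧
                ε * ((Finset.univ : Finset (Fin M × Fin s)).card : ℝ) < Y'.card ∧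
                ε ≤ |RD.bdens ζ X₀ Y' -
                  RD.bdens ζ (Finset.univ : Finset (Fin M × Fin s)) Finset.univ|)
              then RDAux.PP p ζ else 0)) (fun Y' _ => hnn X₀ Y') (Finset.mem_univ Y₀)
          beta_reduce at hsing
          rw [if_pos (⟨h1, h2, h3⟩ : _ ∧ _ ∧ _)] at hsing
          exact hsing
        refine le_trans hterm ?_
        exact Finset.single_le_sum (f := fun X' : Finset (Fin M × Fin s) =>
            ∑ Y' : Finset (Fin M × Fin s),
            (if (ε * ((Finset.univ : Finset (Fin M × Fin s)).card : ℝ) < X'.card ∧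
                ε * ((Finset.univ : Finset (Fin M × Fin s)).card : ℝ) < Y'.card ∧
                ε ≤ |RD.bdens ζ X' Y' -
                  RD.bdens ζ (Finset.univ : Finset (Fin M × Fin s)) Finset.univ|)
              then RDAux.PP p ζ else 0))
          (fun X' _ => Finset.sum_nonneg fun Y' _ => hnn X' Y') (Finset.mem_univ X₀)
      calc ∑ ζ ∈ Finset.univ.filter
            (fun ζ : Fin M × Fin M → Bool => ¬ RD.bipRegular (M := M) (s := s) ζ ε),
            RDAux.PP p ζ
          ≤ ∑ ζ ∈ Finset.univ.filter
            (fun ζ : Fin M × Fin M → Bool => ¬ RD.bipRegular (M := M) (s := s) ζ ε),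
            ∑ X' : Finset (Fin M × Fin s), ∑ Y' : Finset (Fin M × Fin s),
            (if (ε * ((Finset.univ : Finset (Fin M × Fin s)).card : ℝ) < X'.card ∧
                ε * ((Finset.univ : Finset (Fin M × Fin s)).card : ℝ) < Y'.card ∧
                ε ≤ |RD.bdens ζ X' Y' -
                  RD.bdens ζ (Finset.univ : Finset (Fin M × Fin s)) Finset.univ|)
              then RDAux.PP p ζ else 0) := Finset.sum_le_sum step1
        _ = ∑ X' : Finset (Fin M × Fin s), ∑ Y' : Finset (Fin M × Fin s),
            ∑ ζ ∈ Finset.univ.filter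
            (fun ζ : Fin M × Fin M → Bool => ¬ RD.bipRegular (M := M) (s := s) ζ ε),
            (if (ε * ((Finset.univ : Finset (Fin M × Fin s)).card : ℝ) < X'.card ∧
                ε * ((Finset.univ : Finset (Fin M × Fin s)).card : ℝ) < Y'.card ∧
                ε ≤ |RD.bdens ζ X' Y' -
                  RD.bdens ζ (Finset.univ : Finset (Fin M × Fin s)) Finset.univ|)
              then RDAux.PP p ζ else 0) := by
            rw [Finset.sum_comm]
            apply Finset.sum_congr rfl
            intro X' _
            rw [Finset.sum_comm]
        _ ≤ ∑ X' : Finset (Fin M × Fin s), ∑ Y' : Finset (Fin M × Fin s),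
            (2 * Real.exp (-2 * ε ^ 8 * (M : ℝ) ^ 2)) := by
            apply Finset.sum_le_sum
            intro X' _
            apply Finset.sum_le_sum
            intro Y' _
            have hmono : ∑ ζ ∈ Finset.univ.filter
                (fun ζ : Fin M × Fin M → Bool => ¬ RD.bipRegular (M := M) (s := s) ζ ε),
                (if (ε * ((Finset.univ : Finset (Fin M × Fin s)).card : ℝ) < X'.card ∧
                    ε * ((Finset.univ : Finset (Fin M × Fin s)).card : ℝ) < Y'.card ∧
                    ε ≤ |RD.bdens ζ X' Y' -
                      RD.bdens ζ (Finset.univ : Finset (Fin M × Fin s)) Finset.univ|)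
                  then RDAux.PP p ζ else 0)
                ≤ ∑ ζ : Fin M × Fin M → Bool,
                (if (ε * ((Finset.univ : Finset (Fin M × Fin s)).card : ℝ) < X'.card ∧
                    ε * ((Finset.univ : Finset (Fin M × Fin s)).card : ℝ) < Y'.card ∧
                    ε ≤ |RD.bdens ζ X' Y' -
                      RD.bdens ζ (Finset.univ : Finset (Fin M × Fin s)) Finset.univ|)
                  then RDAux.PP p ζ else 0) := by
              apply Finset.sum_le_sum_of_subset_of_nonneg (Finset.filter_subset _ _)
              intro ζ _ _
              split_ifs
              · exact hPPnn ζ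
              · exact le_refl 0
            refine le_trans hmono ?_
            rw [← Finset.sum_filter]
            exact RDAux.pair_bound hp0 hp1 hε hε1 hMpos hspos X' Y'
        _ = (2:ℝ)^n * ((2:ℝ)^n * (2 * Real.exp (-2 * ε ^ 8 * (M : ℝ) ^ 2))) := by
            rw [Finset.sum_const, Finset.sum_const, nsmul_eq_mul, nsmul_eq_mul, hcardF]
    have h1 : 1 - (2:ℝ)^n * ((2:ℝ)^n * (2 * Real.exp (-2 * ε ^ 8 * (M : ℝ) ^ 2)))
        ≤ probRegular M s p ε := by
      rw [hprob]
      linarith [hbad, hsplit]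
    refine le_trans ?_ h1
    rw [hexp_eq]
    have : (2:ℝ)^n * ((2:ℝ)^n * (2 * Real.exp (-2 * ε ^ 8 * (M : ℝ) ^ 2)))
        = 2 * 4^n * Real.exp (-2 * ε ^ 8 * (M : ℝ) ^ 2) := by
      rw [show ((4:ℝ)) = 2 * 2 by norm_num, mul_pow]
      ring
    rw [this]
  · -- trivial case ε ≥ 1
    have hreg : ∀ ζ : Fin M × Fin M → Bool, RD.bipRegular (M := M) (s := s) ζ ε := by
      intro ζ X' Y' hX' _
      exfalso
      have h1 : (X'.card : ℝ) ≤ ((Finset.univ : Finset (Fin M × Fin s)).card : ℝ) := by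
        exact_mod_cast Finset.card_le_card (Finset.subset_univ X')
      have h2 : ((Finset.univ : Finset (Fin M × Fin s)).card : ℝ)
          ≤ ε * ((Finset.univ : Finset (Fin M × Fin s)).card : ℝ) := by
        have hc0 : (0:ℝ) ≤ ((Finset.univ : Finset (Fin M × Fin s)).card : ℝ) :=
          Nat.cast_nonneg _
        nlinarith [hc0, not_lt.1 hε1]
      linarith
    have hone : probRegular M s p ε = 1 := by
      rw [hprob, Finset.filter_true_of_mem (fun ζ _ => hreg ζ)]
      exact RDAux.PP_sum_one
    rw [hone]
    have : 0 ≤ 2 * 4 ^ n * Real.exp (-2 * ε ^ 8 * (n : ℝ) ^ (2 * (1 - α))) := by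
      positivity
    linarith
end

section
/- Let X be a real random variable whose moment generating function φ_X(β) = E[e^{βX}] is finite on an open interval 𝓓_X containing 0, with rate function I_X(x) = −inf_{β ∈ 𝓓_X} ( log φ_X(β) − βx ). Assume the closure of the support of X is the closure of an interval (x⁻, x⁺), and that the restrictions I⁻_X of I_X to (x⁻, E[X]] and I⁺_X of I_X to [E[X], x⁺) are bijections onto [0, ∞). Then for every z ≥ 0, P( I_X(X) > z ) ≤ e^{−(z − log 2)⁺}; equivalently, I_X(X) is stochastically dominated by log 2 + Y, where Y is an Exponential(1) random variable. -/
open Filter Real MeasureTheory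

namespace RD

noncomputable section

/-- The moment generating function `φ_X(β) = E[e^{βX}]` of `X` under `μ`. -/
def mgfun {Ω : Type*} [MeasurableSpace Ω] (μ : Measure Ω) (X : Ω → ℝ) (β : ℝ) : ℝ :=
  ∫ ω, Real.exp (β * X ω) ∂μ

/-- The rate function `I_X(x) = sup_{β ∈ 𝓓} (βx - log φ_X(β))`. -/
def rateFn {Ω : Type*} [MeasurableSpace Ω] (μ : Measure Ω) (X : Ω → ℝ) (Dom : Set ℝ)
    (x : ℝ) : ℝ :=
  ⨆ β ∈ Dom, (β * x - Real.log (mgfun μ X β))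

end

end RD

open Filter Real MeasureTheory RD Topology

section Aux

variable {Ω : Type*} [MeasurableSpace Ω] {μ : Measure Ω} {X : Ω → ℝ} {Dom : Set ℝ}

/-- Upper bound on the rate function from termwise bounds. -/
lemma RD.rate_le {x c : ℝ} (hc : 0 ≤ c)
    (h : ∀ β ∈ Dom, β * x - Real.log (mgfun μ X β) ≤ c) :
    rateFn μ X Dom x ≤ c :=
  Real.iSup_le (fun β => Real.iSup_le (fun hβ => h β hβ) hc) hc

/-- If the rate function equals a positive value, every term is bounded by it. -/
lemma RD.term_le {x z : ℝ} (hz : 0 < z) (hrate : rateFn μ X Dom x = z) :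
    ∀ β ∈ Dom, β * x - Real.log (mgfun μ X β) ≤ z := by
  intro β hβ
  set g : ℝ → ℝ := fun β => ⨆ _ : β ∈ Dom, (β * x - Real.log (mgfun μ X β)) with hg
  have hsup : (⨆ b, g b) = z := hrate
  by_cases hb : BddAbove (Set.range g)
  · have h1 : g β ≤ ⨆ b, g b := le_ciSup hb β
    have h2 : g β = β * x - Real.log (mgfun μ X β) := ciSup_pos hβ
    rw [h2, hsup] at h1
    exact h1
  · rw [Real.iSup_of_not_bddAbove hb] at hsup
    linarith

/-- If the rate function equals a positive value `z`, then there are terms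
arbitrarily close to `z`. -/
lemma RD.exists_term {x z : ℝ} (hz : 0 < z) (hrate : rateFn μ X Dom x = z)
    {ε : ℝ} (hε0 : 0 < ε) (hεz : ε ≤ z) :
    ∃ β ∈ Dom, z - ε < β * x - Real.log (mgfun μ X β) := by
  set g : ℝ → ℝ := fun β => ⨆ _ : β ∈ Dom, (β * x - Real.log (mgfun μ X β)) with hg
  have hsup : (⨆ b, g b) = z := hrate
  have hlt : z - ε < ⨆ b, g b := by rw [hsup]; linarith
  obtain ⟨β, hβ⟩ := exists_lt_of_lt_ciSup hlt
  by_cases hd : β ∈ Dom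
  · exact ⟨β, hd, by rwa [show g β = _ from ciSup_pos hd] at hβ⟩
  · exfalso
    haveI : IsEmpty (β ∈ Dom) := ⟨hd⟩
    have h0 : g β = 0 := Real.iSup_of_isEmpty _
    rw [h0] at hβ
    linarith

/-- Jensen's inequality: `exp(β E[X]) ≤ E[exp(β X)]`. -/
lemma RD.jensen [IsProbabilityMeasure μ] (hXint : Integrable X μ) {β : ℝ}
    (hβ : Integrable (fun ω => Real.exp (β * X ω)) μ) :
    Real.exp (β * ∫ ω, X ω ∂μ) ≤ mgfun μ X β := by
  set m := ∫ ω, X ω ∂μ with hm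
  have hpt : ∀ ω, Real.exp (β * m) * (β * X ω + (1 - β * m)) ≤ Real.exp (β * X ω) := by
    intro ω
    have h1 := Real.add_one_le_exp (β * (X ω - m))
    have h2 : Real.exp (β * m) * (β * (X ω - m) + 1)
        ≤ Real.exp (β * m) * Real.exp (β * (X ω - m)) :=
      mul_le_mul_of_nonneg_left h1 (Real.exp_pos _).le
    calc Real.exp (β * m) * (β * X ω + (1 - β * m))
        = Real.exp (β * m) * (β * (X ω - m) + 1) := by ring
      _ ≤ Real.exp (β * m) * Real.exp (β * (X ω - m)) := h2
      _ = Real.exp (β * X ω) := by rw [← Real.exp_add]; ring_nf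
  have hint0 : Integrable (fun ω => β * X ω + (1 - β * m)) μ :=
    (hXint.const_mul β).add (integrable_const _)
  have hint1 : Integrable (fun ω => Real.exp (β * m) * (β * X ω + (1 - β * m))) μ :=
    hint0.const_mul _
  have hmono := integral_mono hint1 hβ hpt
  have hcomp : ∫ ω, Real.exp (β * m) * (β * X ω + (1 - β * m)) ∂μ = Real.exp (β * m) := by
    rw [integral_const_mul, integral_add (hXint.const_mul β) (integrable_const _),
      integral_const_mul, integral_const]
    simp only [← hm, measure_univ, probReal_univ, ENNReal.toReal_one, one_smul]
    ring
  rw [hcomp] at hmono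
  exact hmono

end Aux

/-- Lemma: if the moment generating function of `X` is finite on an open interval `Dom`
containing `0`, the closed support of `X` is the closure of `(xm, xp)`, and the two
branches of the rate function `I_X` are bijections from `(xm, E X]` resp. `[E X, xp)`
onto `[0,∞)`, then `P(I_X(X) > z) ≤ e^{-(z - log 2)⁺}` for every `z ≥ 0`; that is,
`I_X(X)` is stochastically dominated by `log 2 + Y` with `Y ∼ Exp(1)`. -/
theorem stmt_12 {Ω : Type*} [MeasurableSpace Ω] (μ : Measure Ω) [IsProbabilityMeasure μ]
    (X : Ω → ℝ) (hX : Measurable X)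
    (Dom : Set ℝ) (hopen : IsOpen Dom) (hconn : Dom.OrdConnected) (h0 : 0 ∈ Dom)
    (hfin : ∀ β ∈ Dom, Integrable (fun ω => Real.exp (β * X ω)) μ)
    (xm xp : ℝ) (hx : xm < xp)
    -- the closure of the support of `X` is the closure of the interval `(xm, xp)`:
    (hsupp₁ : ∀ᵐ ω ∂μ, X ω ∈ Set.Icc xm xp)
    (hsupp₂ : ∀ U : Set ℝ, IsOpen U → (U ∩ Set.Ioo xm xp).Nonempty → 0 < μ (X ⁻¹' U))
    -- the two branches of the rate function are bijections onto `[0,∞)`: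
    (hbij₁ : Set.BijOn (rateFn μ X Dom) (Set.Ioc xm (∫ ω, X ω ∂μ)) (Set.Ici 0))
    (hbij₂ : Set.BijOn (rateFn μ X Dom) (Set.Ico (∫ ω, X ω ∂μ) xp) (Set.Ici 0)) :
    ∀ z : ℝ, 0 ≤ z →
      (μ {ω | rateFn μ X Dom (X ω) > z}).toReal
        ≤ Real.exp (-(max (z - Real.log 2) 0)) := by
  intro z hz
  rcases le_or_gt z (Real.log 2) with hcase | hcase
  · -- trivial case: bound by 1
    have h1 : max (z - Real.log 2) 0 = 0 := max_eq_right (by linarith)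
    rw [h1, neg_zero, Real.exp_zero]
    calc (μ {ω | rateFn μ X Dom (X ω) > z}).toReal
        ≤ (μ Set.univ).toReal :=
          ENNReal.toReal_mono (measure_ne_top μ _) (measure_mono (Set.subset_univ _))
      _ = 1 := by simp
  · -- main case: z > log 2 > 0
    have hlog2 : 0 < Real.log 2 := Real.log_pos one_lt_two
    have hz0 : 0 < z := lt_trans hlog2 hcase
    set m := ∫ ω, X ω ∂μ with hm
    obtain ⟨a, ha, haz⟩ := hbij₁.surjOn (Set.mem_Ici.mpr hz)
    obtain ⟨b, hbmem, hbz⟩ := hbij₂.surjOn (Set.mem_Ici.mpr hz)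
    -- X is integrable (bounded a.e.)
    have hXint : Integrable X μ := by
      refine Integrable.mono' (integrable_const (max |xm| |xp|)) hX.aestronglyMeasurable ?_
      filter_upwards [hsupp₁] with ω hω
      rw [Real.norm_eq_abs]
      exact abs_le_max_abs_abs hω.1 hω.2
    -- positivity of the mgf
    have hφpos : ∀ β ∈ Dom, 0 < mgfun μ X β := fun β hβ =>
      ProbabilityTheory.mgf_pos (hfin β hβ)
    -- a.e. inclusion of the event into the two tails
    have hsub : μ {ω | rateFn μ X Dom (X ω) > z}
        ≤ μ ({ω | X ω ≤ a} ∪ {ω | b ≤ X ω}) := by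
      apply measure_mono_ae
      show ∀ᵐ ω ∂μ, ω ∈ {ω | rateFn μ X Dom (X ω) > z} → ω ∈ ({ω | X ω ≤ a} ∪ {ω | b ≤ X ω})
      filter_upwards [hsupp₁] with ω hω hgt
      by_contra hnot
      simp only [Set.mem_union, Set.mem_setOf_eq, not_or, not_le] at hnot
      obtain ⟨hlt1, hlt2⟩ := hnot
      have hbound : rateFn μ X Dom (X ω) ≤ z := by
        refine RD.rate_le hz0.le fun β hβ => ?_
        have h1 := RD.term_le hz0 haz β hβ
        have h2 := RD.term_le hz0 hbz β hβ
        rcases le_or_gt 0 β with hβ0 | hβ0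
        · have : β * X ω ≤ β * b := mul_le_mul_of_nonneg_left hlt2.le hβ0
          linarith
        · have : β * X ω ≤ β * a := mul_le_mul_of_nonpos_left hlt1.le hβ0.le
          linarith
      exact absurd hgt (by simp only [Set.mem_setOf_eq, gt_iff_lt, not_lt]; exact hbound)
    -- right tail bound
    have tailb : ∀ ε : ℝ, 0 < ε → ε ≤ z →
        (μ {ω | b ≤ X ω}).toReal ≤ Real.exp (-(z - ε)) := by
      intro ε hε hεz
      obtain ⟨β, hβD, hβval⟩ := RD.exists_term hz0 hbz hε hεz
      have hφ := hφpos β hβD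
      have hβpos : 0 ≤ β := by
        by_contra hneg
        push_neg at hneg
        have hj : β * m ≤ Real.log (mgfun μ X β) :=
          (Real.le_log_iff_exp_le hφ).2 (RD.jensen hXint (hfin β hβD))
        have hbm : m ≤ b := hbmem.1
        have hmul : β * b ≤ β * m := mul_le_mul_of_nonpos_left hbm hneg.le
        linarith
      have hch := ProbabilityTheory.measure_ge_le_exp_mul_mgf (μ := μ) (X := X) (t := β)
        b hβpos (hfin β hβD)
      have heq : Real.exp (-β * b) * ProbabilityTheory.mgf X μ β
          = Real.exp (-(β * b - Real.log (mgfun μ X β))) := by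
        rw [show ProbabilityTheory.mgf X μ β = mgfun μ X β from rfl,
          ← Real.exp_log hφ, ← Real.exp_add]
        rw [Real.exp_log hφ]
        congr 1
        ring
      rw [heq] at hch
      exact hch.trans (Real.exp_le_exp.2 (by linarith))
    -- left tail bound
    have taila : ∀ ε : ℝ, 0 < ε → ε ≤ z →
        (μ {ω | X ω ≤ a}).toReal ≤ Real.exp (-(z - ε)) := by
      intro ε hε hεz
      obtain ⟨β, hβD, hβval⟩ := RD.exists_term hz0 haz hε hεz
      have hφ := hφpos β hβD
      have hβneg : β ≤ 0 := by
        by_contra hpos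
        push_neg at hpos
        have hj : β * m ≤ Real.log (mgfun μ X β) :=
          (Real.le_log_iff_exp_le hφ).2 (RD.jensen hXint (hfin β hβD))
        have ham : a ≤ m := ha.2
        have hmul : β * a ≤ β * m := mul_le_mul_of_nonneg_left ham hpos.le
        linarith
      have hch := ProbabilityTheory.measure_le_le_exp_mul_mgf (μ := μ) (X := X) (t := β)
        a hβneg (hfin β hβD)
      have heq : Real.exp (-β * a) * ProbabilityTheory.mgf X μ β
          = Real.exp (-(β * a - Real.log (mgfun μ X β))) := by
        rw [show ProbabilityTheory.mgf X μ β = mgfun μ X β from rfl,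
          ← Real.exp_log hφ, ← Real.exp_add]
        rw [Real.exp_log hφ]
        congr 1
        ring
      rw [heq] at hch
      exact hch.trans (Real.exp_le_exp.2 (by linarith))
    -- combined bound for every ε
    have key : ∀ ε ∈ Set.Ioo (0 : ℝ) z,
        (μ {ω | rateFn μ X Dom (X ω) > z}).toReal ≤ 2 * Real.exp (-(z - ε)) := by
      intro ε hε
      have h1 := taila ε hε.1 hε.2.le
      have h2 := tailb ε hε.1 hε.2.le
      have hsum : μ {ω | rateFn μ X Dom (X ω) > z}
          ≤ μ {ω | X ω ≤ a} + μ {ω | b ≤ X ω} :=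
        hsub.trans (measure_union_le _ _)
      have htr := ENNReal.toReal_mono
        (ENNReal.add_ne_top.2 ⟨measure_ne_top μ _, measure_ne_top μ _⟩) hsum
      rw [ENNReal.toReal_add (measure_ne_top μ _) (measure_ne_top μ _)] at htr
      linarith
    -- pass to the limit ε → 0⁺
    have hlim : Tendsto (fun ε : ℝ => 2 * Real.exp (-(z - ε))) (𝓝[>] 0)
        (𝓝 (2 * Real.exp (-z))) := by
      have hc : Continuous fun ε : ℝ => 2 * Real.exp (-(z - ε)) := by continuity
      have h : Tendsto (fun ε : ℝ => 2 * Real.exp (-(z - ε))) (𝓝[>] (0 : ℝ))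
          (𝓝 (2 * Real.exp (-(z - 0)))) :=
        (hc.tendsto 0).mono_left nhdsWithin_le_nhds
      simpa using h
    have hfinal : (μ {ω | rateFn μ X Dom (X ω) > z}).toReal ≤ 2 * Real.exp (-z) := by
      refine ge_of_tendsto hlim ?_
      filter_upwards [Ioo_mem_nhdsGT_of_mem (Set.mem_Ico.mpr ⟨le_refl 0, hz0⟩)] with ε hε
      exact key ε hε
    have hmax : max (z - Real.log 2) 0 = z - Real.log 2 := max_eq_left (by linarith)
    rw [hmax]
    have hrhs : Real.exp (-(z - Real.log 2)) = 2 * Real.exp (-z) := by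
      rw [neg_sub, sub_eq_add_neg, Real.exp_add, Real.exp_log two_pos]
    rw [hrhs]
    exact hfinal
end

section
/- Let p ∈ (0,1), let n ≥ 2 and 1 ≤ m ≤ n−1 be integers, and let x₁ ∈ {0,…,m}, x₂ ∈ {0,…,n−m}; write s = x₁ + x₂. Then, with I(x:q) = x log(x/q) + (1−x) log((1−x)/(1−q)) and the convention 0·log 0 = 0, the following identities hold: m·I(x₁/m : p) + (n−m)·I(x₂/(n−m) : p) − n·I(s/n : p) = s·I(x₁/s : m/n) + (n−s)·I((m−x₁)/(n−s) : m/n) = m·I(x₁/m : s/n) + (n−m)·I(x₂/(n−m) : s/n). -/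
open Real

namespace RD

noncomputable section

/-- The Kullback–Leibler divergence `I(x:q)` between Bernoulli(x) and Bernoulli(q)
(natural logarithms, with the convention `0·log 0 = 0`, automatic since
`Real.log 0 = 0`). -/
def Ibern (x q : ℝ) : ℝ :=
  x * Real.log (x / q) + (1 - x) * Real.log ((1 - x) / (1 - q))

end

end RD

open Real RD

lemma stmt_13_hlog (t c : ℝ) (ht : 0 ≤ t) (hc : c ≠ 0) :
    t * Real.log (t / c) = t * Real.log t - t * Real.log c := by
  rcases ht.eq_or_lt' with h | h
  · subst h; simp
  · rw [Real.log_div h.ne' hc]; ring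

lemma stmt_13_key (q t M : ℝ) (hq0 : 0 < q) (hq1 : q < 1) (hM : 0 < M)
    (ht0 : 0 ≤ t) (ht : t ≤ M) :
    M * Ibern (t / M) q
      = t * Real.log t + (M - t) * Real.log (M - t) - M * Real.log M
        - t * Real.log q - (M - t) * Real.log (1 - q) := by
  have hM' : M ≠ 0 := hM.ne'
  have h1 : 1 - t / M = (M - t) / M := by field_simp
  have hq1' : (0:ℝ) < 1 - q := by linarith
  have e1 := stmt_13_hlog t (M * q) ht0 (by positivity)
  have e2 := stmt_13_hlog (M - t) (M * (1 - q)) (by linarith) (by positivity)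
  have l1 : Real.log (M * q) = Real.log M + Real.log q := Real.log_mul hM' hq0.ne'
  have l2 : Real.log (M * (1 - q)) = Real.log M + Real.log (1 - q) :=
    Real.log_mul hM' hq1'.ne'
  calc M * Ibern (t / M) q
      = t * Real.log (t / (M * q)) + (M - t) * Real.log ((M - t) / (M * (1 - q))) := by
        rw [Ibern, h1, div_div, div_div, mul_add, ← mul_assoc, ← mul_assoc,
          mul_div_cancel₀ _ hM', mul_div_cancel₀ _ hM']
    _ = _ := by rw [e1, e2, l1, l2]; ring

lemma stmt_13_IbernSelf (q : ℝ) (hq0 : q ≠ 0) (hq1 : q ≠ 1) : Ibern q q = 0 := by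
  have : (1:ℝ) - q ≠ 0 := sub_ne_zero.2 (Ne.symm hq1)
  simp [Ibern, div_self hq0, div_self this]

lemma stmt_13_Ibern00 : Ibern 0 0 = 0 := by simp [Ibern]

lemma stmt_13_Ibern11 : Ibern 1 1 = 0 := by simp [Ibern]

lemma stmt_13_main (p a b M N : ℝ) (hp0 : 0 < p) (hp1 : p < 1)
    (hM1 : 1 ≤ M) (hM2 : M ≤ N - 1)
    (ha0 : 0 ≤ a) (ha : a ≤ M) (hb0 : 0 ≤ b) (hb : b ≤ N - M) :
    (M * Ibern (a / M) p + (N - M) * Ibern (b / (N - M)) p - N * Ibern ((a + b) / N) p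
      = (a + b) * Ibern (a / (a + b)) (M / N)
        + (N - (a + b)) * Ibern ((M - a) / (N - (a + b))) (M / N))
    ∧ (M * Ibern (a / M) p + (N - M) * Ibern (b / (N - M)) p - N * Ibern ((a + b) / N) p
      = M * Ibern (a / M) ((a + b) / N) + (N - M) * Ibern (b / (N - M)) ((a + b) / N)) := by
  have hM0 : (0:ℝ) < M := by linarith
  have hN : (0:ℝ) < N := by linarith
  have hNM : (0:ℝ) < N - M := by linarith
  have hMN : M < N := by linarith
  have hs0 : 0 ≤ a + b := by linarith
  have hsN : a + b ≤ N := by linarith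
  have hq0 : (0:ℝ) < M / N := by positivity
  have hq1 : M / N < 1 := (div_lt_one hN).2 hMN
  have K1 := stmt_13_key p a M hp0 hp1 hM0 ha0 ha
  have K2 := stmt_13_key p b (N - M) hp0 hp1 hNM hb0 hb
  have K3 := stmt_13_key p (a + b) N hp0 hp1 hN hs0 hsN
  constructor
  · rcases hs0.eq_or_lt' with hz | hsp
    · have ha' : a = 0 := by linarith
      have hb' : b = 0 := by linarith
      rw [ha', hb']
      simp only [zero_div, add_zero, zero_add, sub_zero, zero_mul]
      rw [stmt_13_IbernSelf (M / N) hq0.ne' hq1.ne]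
      ring
    · rcases hsN.eq_or_lt with he | hlt
      · have ha' : a = M := by linarith
        have hb' : b = N - M := by linarith
        rw [ha', hb', show M + (N - M) = N from by ring, div_self hM0.ne',
          div_self hNM.ne', div_self hN.ne', sub_self, zero_mul, add_zero,
          stmt_13_IbernSelf (M / N) hq0.ne' hq1.ne]
        ring
      · have K4 := stmt_13_key (M / N) a (a + b) hq0 hq1 hsp ha0 (by linarith)
        have K5 := stmt_13_key (M / N) (M - a) (N - (a + b)) hq0 hq1 (by linarith)
          (by linarith) (by linarith)
        have lq : Real.log (M / N) = Real.log M - Real.log N :=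
          Real.log_div hM0.ne' hN.ne'
        have l1q : Real.log (1 - M / N) = Real.log (N - M) - Real.log N := by
          rw [show (1:ℝ) - M / N = (N - M) / N from by field_simp,
            Real.log_div hNM.ne' hN.ne']
        rw [K1, K2, K3, K4, K5, lq, l1q, show a + b - a = b from by ring,
          show N - (a + b) - (M - a) = N - M - b from by ring]
        ring
  · rcases hs0.eq_or_lt' with hz | hsp
    · have ha' : a = 0 := by linarith
      have hb' : b = 0 := by linarith
      rw [ha', hb']
      simp only [zero_div, add_zero, zero_add]
      rw [stmt_13_Ibern00]
      ring
    · rcases hsN.eq_or_lt with he | hlt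
      · have ha' : a = M := by linarith
        have hb' : b = N - M := by linarith
        rw [ha', hb', show M + (N - M) = N from by ring, div_self hM0.ne',
          div_self hNM.ne', div_self hN.ne', stmt_13_Ibern11]
        ring
      · have hq0' : (0:ℝ) < (a + b) / N := by positivity
        have hq1' : (a + b) / N < 1 := (div_lt_one hN).2 hlt
        have K4 := stmt_13_key ((a + b) / N) a M hq0' hq1' hM0 ha0 ha
        have K5 := stmt_13_key ((a + b) / N) b (N - M) hq0' hq1' hNM hb0 hb
        have lq : Real.log ((a + b) / N) = Real.log (a + b) - Real.log N :=
          Real.log_div hsp.ne' hN.ne'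
        have l1q : Real.log (1 - (a + b) / N)
            = Real.log (N - (a + b)) - Real.log N := by
          rw [show (1:ℝ) - (a + b) / N = (N - (a + b)) / N from by field_simp,
            Real.log_div (by linarith) hN.ne']
        rw [K1, K2, K3, K4, K5, lq, l1q]
        ring

/-- Proposition (binomial Kullback–Leibler identities): for `p ∈ (0,1)`, `n ≥ 2`,
`1 ≤ m ≤ n-1`, `x₁ ≤ m`, `x₂ ≤ n-m` and `s = x₁+x₂`,
`m I(x₁/m : p) + (n-m) I(x₂/(n-m) : p) - n I(s/n : p)
  = s I(x₁/s : m/n) + (n-s) I((m-x₁)/(n-s) : m/n)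
  = m I(x₁/m : s/n) + (n-m) I(x₂/(n-m) : s/n)`. -/
theorem stmt_13 (p : ℝ) (hp0 : 0 < p) (hp1 : p < 1) (n m x₁ x₂ : ℕ)
    (hn : 2 ≤ n) (hm1 : 1 ≤ m) (hm2 : m ≤ n - 1) (hx₁ : x₁ ≤ m) (hx₂ : x₂ ≤ n - m) :
    ((m : ℝ) * Ibern ((x₁ : ℝ) / m) p
        + ((n : ℝ) - m) * Ibern ((x₂ : ℝ) / ((n : ℝ) - m)) p
        - (n : ℝ) * Ibern (((x₁ : ℝ) + x₂) / n) p
      = ((x₁ : ℝ) + x₂) * Ibern ((x₁ : ℝ) / ((x₁ : ℝ) + x₂)) ((m : ℝ) / n)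
        + ((n : ℝ) - ((x₁ : ℝ) + x₂))
          * Ibern (((m : ℝ) - x₁) / ((n : ℝ) - ((x₁ : ℝ) + x₂))) ((m : ℝ) / n))
    ∧ ((m : ℝ) * Ibern ((x₁ : ℝ) / m) p
        + ((n : ℝ) - m) * Ibern ((x₂ : ℝ) / ((n : ℝ) - m)) p
        - (n : ℝ) * Ibern (((x₁ : ℝ) + x₂) / n) p
      = (m : ℝ) * Ibern ((x₁ : ℝ) / m) (((x₁ : ℝ) + x₂) / n)
        + ((n : ℝ) - m) * Ibern ((x₂ : ℝ) / ((n : ℝ) - m)) (((x₁ : ℝ) + x₂) / n)) := by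
  have h1 : (1:ℕ) ≤ n := by omega
  have hmn : m ≤ n := by omega
  have hM1 : (1:ℝ) ≤ (m:ℝ) := by exact_mod_cast hm1
  have hM2 : (m:ℝ) ≤ (n:ℝ) - 1 := by
    have : (m:ℝ) ≤ ((n - 1 : ℕ) : ℝ) := by exact_mod_cast hm2
    rwa [Nat.cast_sub h1, Nat.cast_one] at this
  have hx₁' : (x₁:ℝ) ≤ (m:ℝ) := by exact_mod_cast hx₁
  have hx₂' : (x₂:ℝ) ≤ (n:ℝ) - (m:ℝ) := by
    have : (x₂:ℝ) ≤ ((n - m : ℕ) : ℝ) := by exact_mod_cast hx₂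
    rwa [Nat.cast_sub hmn] at this
  exact stmt_13_main p (x₁:ℝ) (x₂:ℝ) (m:ℝ) (n:ℝ) hp0 hp1 hM1 hM2
    (Nat.cast_nonneg x₁) hx₁' (Nat.cast_nonneg x₂) hx₂'
end

section
/- Consider the sequence (G_n, ξ_n) of stochastic block models based on relative block sizes (γ₁,…,γ_k) and an irreducible symmetric link-probability matrix D. For any ε > 0, with high probability every pair of distinct blocks (A_i^{(n)}, A_j^{(n)}) of the partition ξ_n is ε-regular in G_n. -/
open Finset Filter Real MeasureTheory

namespace RD

noncomputable section

/-- Natural-log binary entropy `H(p) = -p log p - (1-p) log(1-p)` (with `0 log 0 = 0`). -/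
def Hb (p : ℝ) : ℝ := -(p * Real.log p) - (1 - p) * Real.log (1 - p)

/-- The block index of a vertex `v : Fin n` (thought of as the point `(v+1)/n ∈ (0,1]`):
the least `i` with `(v+1)/n ≤ γ_1 + ⋯ + γ_i`. -/
def blockIdx (n : ℕ) {k : ℕ} (hk : 0 < k) (γ : Fin k → ℝ) (v : Fin n) : Fin k :=
  if h : (Finset.univ.filter fun i : Fin k =>
      ((v : ℝ) + 1) / n ≤ ∑ j ∈ Finset.Iic i, γ j).Nonempty then
    (Finset.univ.filter fun i : Fin k =>
      ((v : ℝ) + 1) / n ≤ ∑ j ∈ Finset.Iic i, γ j).min' h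
  else ⟨0, hk⟩

/-- The block `A_i^{(n)}` of the partition `ξ_n`. -/
def block (n : ℕ) {k : ℕ} (hk : 0 < k) (γ : Fin k → ℝ) (i : Fin k) : Finset (Fin n) :=
  Finset.univ.filter fun v => blockIdx n hk γ v = i

open Classical in
/-- The planted partition `ξ_n` of the vertex set. -/
def xi (n : ℕ) {k : ℕ} (hk : 0 < k) (γ : Fin k → ℝ) :
    Finpartition (Finset.univ : Finset (Fin n)) :=
  Finpartition.ofSetoid (Setoid.ker (blockIdx n hk γ))

open Classical in
/-- Probability that the stochastic block model `(γ, D)` produces the graph `G`. -/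
def graphProb (n : ℕ) {k : ℕ} (hk : 0 < k) (γ : Fin k → ℝ) (D : Fin k → Fin k → ℝ)
    (G : SimpleGraph (Fin n)) : ℝ :=
  ∏ p ∈ Finset.univ.filter (fun p : Fin n × Fin n => p.1 < p.2),
    if G.Adj p.1 p.2 then D (blockIdx n hk γ p.1) (blockIdx n hk γ p.2)
    else 1 - D (blockIdx n hk γ p.1) (blockIdx n hk γ p.2)

open Classical in
/-- Probability of a set (event) of graphs under the stochastic block model. -/
def Pr (n : ℕ) {k : ℕ} (hk : 0 < k) (γ : Fin k → ℝ) (D : Fin k → Fin k → ℝ)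
    (S : Set (SimpleGraph (Fin n))) : ℝ :=
  ∑ G ∈ Finset.univ.filter (· ∈ S), graphProb n hk γ D G

open Classical in
/-- Number of (ordered) adjacent pairs `(v,w) ∈ B × B'`, as a real number. -/
def ecount (n : ℕ) (G : SimpleGraph (Fin n)) (B B' : Finset (Fin n)) : ℝ :=
  ∑ v ∈ B, ∑ w ∈ B', if G.Adj v w then (1 : ℝ) else 0

/-- Link density inside a block: `d(B) = e(B)/C(|B|,2)`. -/
def dIn (n : ℕ) (G : SimpleGraph (Fin n)) (B : Finset (Fin n)) : ℝ :=
  (ecount n G B B / 2) / (B.card.choose 2 : ℝ)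

/-- Link density between two disjoint blocks: `d(B,B') = e(B,B')/(|B||B'|)`. -/
def dBet (n : ℕ) (G : SimpleGraph (Fin n)) (B B' : Finset (Fin n)) : ℝ :=
  ecount n G B B' / ((B.card : ℝ) * B'.card)

/-- The block-model code length `L(G|η)`. -/
def codeLen (n : ℕ) (G : SimpleGraph (Fin n))
    (η : Finpartition (Finset.univ : Finset (Fin n))) : ℝ :=
  (∑ B ∈ η.parts, Real.log (B.card : ℝ))
    + (∑ B ∈ η.parts, Real.log ((B.card.choose 2 : ℝ) * dIn n G B))
    + (1 / 2) * ∑ q ∈ η.parts.offDiag,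
        Real.log ((q.1.card : ℝ) * (q.2.card : ℝ) * dBet n G q.1 q.2)
    + (n : ℝ) * (-∑ B ∈ η.parts, ((B.card : ℝ) / n) * Real.log ((B.card : ℝ) / n))
    + (∑ B ∈ η.parts, (B.card.choose 2 : ℝ) * Hb (dIn n G B))
    + (1 / 2) * ∑ q ∈ η.parts.offDiag,
        (q.1.card : ℝ) * (q.2.card : ℝ) * Hb (dBet n G q.1 q.2)


/-- `(A,B)` is an `ε`-regular pair in `G`: all large sub-pairs have density within `ε`
of `d(A,B)`. -/
def epsRegular (n : ℕ) (G : SimpleGraph (Fin n)) (A B : Finset (Fin n)) (ε : ℝ) : Prop :=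
  ∀ X ⊆ A, ∀ Y ⊆ B, ε * A.card < X.card → ε * B.card < Y.card →
    |dBet n G X Y - dBet n G A B| < ε

end

end RD

open Finset Filter Real MeasureTheory RD

section Graphs
open Classical
variable {n : ℕ}

/-- The set of ordered pairs `(v,w)` with `v < w`. -/
def pairs (n : ℕ) : Finset (Fin n × Fin n) := Finset.univ.filter fun p => p.1 < p.2

def graphOf (f : {p : Fin n × Fin n // p.1 < p.2} → Bool) : SimpleGraph (Fin n) where
  Adj v w := if h : v < w then f ⟨(v,w), h⟩ = true else if h' : w < v then f ⟨(w,v), h'⟩ = true else False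
  symm := by
    constructor; intro v w hvw
    rcases lt_trichotomy v w with h | h | h
    · rw [dif_pos h] at hvw
      rw [dif_neg (asymm h), dif_pos h]; exact hvw
    · subst h; rw [dif_neg (lt_irrefl v), dif_neg (lt_irrefl v)] at hvw; exact hvw.elim
    · rw [dif_neg (asymm h), dif_pos h] at hvw
      rw [dif_pos h]; exact hvw
  loopless := by constructor; intro v h; rw [dif_neg (lt_irrefl v), dif_neg (lt_irrefl v)] at h; exact h

lemma graphOf_adj (f : {p : Fin n × Fin n // p.1 < p.2} → Bool) (q : {p : Fin n × Fin n // p.1 < p.2}) :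
    (graphOf f).Adj q.1.1 q.1.2 ↔ f q = true := by
  show (if h : q.1.1 < q.1.2 then _ else _) ↔ _
  rw [dif_pos q.2]

noncomputable def graphEquiv (n : ℕ) : SimpleGraph (Fin n) ≃ ({p : Fin n × Fin n // p.1 < p.2} → Bool) where
  toFun G q := if G.Adj q.1.1 q.1.2 then true else false
  invFun := graphOf
  left_inv G := by
    ext v w
    show (if h : v < w then _ else _) ↔ _
    rcases lt_trichotomy v w with h | h | h
    · rw [dif_pos h]
      by_cases ha : G.Adj v w <;> simp [ha]
    · subst h
      rw [dif_neg (lt_irrefl v), dif_neg (lt_irrefl v)]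
      simp [SimpleGraph.irrefl]
    · rw [dif_neg (asymm h), dif_pos h]
      by_cases ha : G.Adj v w
      · simp [ha, G.adj_comm v w, (G.adj_comm v w).mp ha]
      · have : ¬ G.Adj w v := fun hb => ha ((G.adj_comm w v).mp hb)
        simp [ha, this]
  right_inv f := by
    funext q
    have := graphOf_adj f q
    by_cases hf : f q = true
    · simp [this, hf]
    · simp only [Bool.not_eq_true] at hf
      simp [this, hf]

lemma sum_graph (F : Fin n × Fin n → Bool → ℝ) :
    ∑ G : SimpleGraph (Fin n),
      (∏ p ∈ pairs n, if G.Adj p.1 p.2 then F p true else F p false)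
    = ∏ p ∈ pairs n, (F p true + F p false) := by
  classical
  rw [← Equiv.sum_comp (graphEquiv n).symm]
  have hmem : ∀ p : Fin n × Fin n, p ∈ pairs n ↔ p.1 < p.2 := by
    intro p; simp [pairs]
  have step1 : ∀ f : {p : Fin n × Fin n // p.1 < p.2} → Bool,
      (∏ p ∈ pairs n, if ((graphEquiv n).symm f).Adj p.1 p.2 then F p true else F p false)
      = ∏ q : {p : Fin n × Fin n // p.1 < p.2}, (if f q then F q.1 true else F q.1 false) := by
    intro f
    rw [Finset.prod_subtype (pairs n) hmem
      (fun p => if ((graphEquiv n).symm f).Adj p.1 p.2 then F p true else F p false)]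
    refine Finset.prod_congr rfl fun q _ => ?_
    have h2 : ((graphEquiv n).symm f).Adj q.1.1 q.1.2 ↔ f q = true := graphOf_adj f q
    by_cases hf : f q = true
    · rw [if_pos (h2.mpr hf), hf]; simp
    · simp only [Bool.not_eq_true] at hf
      rw [if_neg (fun ha => by simp [h2.mp ha] at hf), hf]; simp
  simp only [step1]
  rw [Finset.prod_subtype (pairs n) hmem (fun p => F p true + F p false)]
  rw [show (∏ q : {p : Fin n × Fin n // p.1 < p.2}, (F q.1 true + F q.1 false))
      = ∏ q : {p : Fin n × Fin n // p.1 < p.2}, ∑ b : Bool, (if b then F q.1 true else F q.1 false) from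
    Finset.prod_congr rfl fun q _ => by simp]
  rw [Finset.prod_univ_sum, Fintype.piFinset_univ]

end Graphs
section Graphs2
open Classical
variable {n : ℕ}

lemma sum_graph' (Ft Ff : Fin n × Fin n → ℝ) :
    ∑ G : SimpleGraph (Fin n),
      (∏ p ∈ pairs n, if G.Adj p.1 p.2 then Ft p else Ff p)
    = ∏ p ∈ pairs n, (Ft p + Ff p) := by
  have h := sum_graph (n := n) (fun p b => if b then Ft p else Ff p)
  have l : (∑ G : SimpleGraph (Fin n),
      (∏ p ∈ pairs n, if G.Adj p.1 p.2 then Ft p else Ff p))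
      = ∑ G : SimpleGraph (Fin n),
      (∏ p ∈ pairs n, if G.Adj p.1 p.2
        then (fun (p : Fin n × Fin n) (b : Bool) => if b then Ft p else Ff p) p true
        else (fun (p : Fin n × Fin n) (b : Bool) => if b then Ft p else Ff p) p false) :=
    Finset.sum_congr rfl fun G _ => Finset.prod_congr rfl fun p _ => by
      by_cases hadj : G.Adj p.1 p.2
      · rw [if_pos hadj, if_pos hadj]; rfl
      · rw [if_neg hadj, if_neg hadj]; rfl
  have r : (∏ p ∈ pairs n,
        ((fun (p : Fin n × Fin n) (b : Bool) => if b then Ft p else Ff p) p true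
        + (fun (p : Fin n × Fin n) (b : Bool) => if b then Ft p else Ff p) p false))
      = ∏ p ∈ pairs n, (Ft p + Ff p) :=
    Finset.prod_congr rfl fun p _ => rfl
  rw [l, h, r]

end Graphs2
section PrBasics
open Classical
variable {k : ℕ} (hk : 0 < k) (γ : Fin k → ℝ) (D : Fin k → Fin k → ℝ) {n : ℕ}

lemma graphProb_nonneg (hD01 : ∀ i j, 0 ≤ D i j ∧ D i j ≤ 1) (G : SimpleGraph (Fin n)) :
    0 ≤ graphProb n hk γ D G := by
  apply Finset.prod_nonneg
  intro p _
  by_cases h : G.Adj p.1 p.2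
  · rw [if_pos h]; exact (hD01 _ _).1
  · rw [if_neg h]; linarith [(hD01 (blockIdx n hk γ p.1) (blockIdx n hk γ p.2)).2]

lemma sum_graphProb (hD01 : ∀ i j, 0 ≤ D i j ∧ D i j ≤ 1) :
    ∑ G : SimpleGraph (Fin n), graphProb n hk γ D G = 1 := by
  have h := sum_graph' (n := n)
    (fun p => D (blockIdx n hk γ p.1) (blockIdx n hk γ p.2))
    (fun p => 1 - D (blockIdx n hk γ p.1) (blockIdx n hk γ p.2))
  rw [show (∑ G : SimpleGraph (Fin n), graphProb n hk γ D G)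
      = ∑ G : SimpleGraph (Fin n), ∏ p ∈ pairs n,
        (if G.Adj p.1 p.2 then D (blockIdx n hk γ p.1) (blockIdx n hk γ p.2)
          else 1 - D (blockIdx n hk γ p.1) (blockIdx n hk γ p.2)) from rfl, h]
  rw [Finset.prod_congr rfl (fun p _ => by ring : ∀ p ∈ pairs n,
    (D (blockIdx n hk γ p.1) (blockIdx n hk γ p.2) + (1 - D (blockIdx n hk γ p.1) (blockIdx n hk γ p.2))) = 1)]
  exact Finset.prod_const_one

lemma Pr_nonneg (hD01 : ∀ i j, 0 ≤ D i j ∧ D i j ≤ 1) (S : Set (SimpleGraph (Fin n))) :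
    0 ≤ Pr n hk γ D S :=
  Finset.sum_nonneg fun G _ => graphProb_nonneg hk γ D hD01 G

lemma Pr_mono (hD01 : ∀ i j, 0 ≤ D i j ∧ D i j ≤ 1) {S T : Set (SimpleGraph (Fin n))}
    (hST : S ⊆ T) : Pr n hk γ D S ≤ Pr n hk γ D T := by
  apply Finset.sum_le_sum_of_subset_of_nonneg
  · intro G hG
    simp only [Finset.mem_filter, Finset.mem_univ, true_and] at hG ⊢
    exact hST hG
  · intro G _ _; exact graphProb_nonneg hk γ D hD01 G

lemma Pr_univ (hD01 : ∀ i j, 0 ≤ D i j ∧ D i j ≤ 1) :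
    Pr n hk γ D (Set.univ : Set (SimpleGraph (Fin n))) = 1 := by
  have : Pr n hk γ D (Set.univ : Set (SimpleGraph (Fin n)))
      = ∑ G : SimpleGraph (Fin n), graphProb n hk γ D G := by
    unfold Pr
    apply Finset.sum_congr ?_ (fun _ _ => rfl)
    ext G; simp
  rw [this]
  exact sum_graphProb hk γ D hD01

lemma Pr_compl (hD01 : ∀ i j, 0 ≤ D i j ∧ D i j ≤ 1) (S : Set (SimpleGraph (Fin n))) :
    Pr n hk γ D S = 1 - Pr n hk γ D Sᶜ := by
  have e : Pr n hk γ D Sᶜ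
      = ∑ G ∈ Finset.univ.filter (fun G : SimpleGraph (Fin n) => ¬ G ∈ S), graphProb n hk γ D G := by
    unfold Pr
    apply Finset.sum_congr ?_ (fun _ _ => rfl)
    ext G; simp
  have h := Finset.sum_filter_add_sum_filter_not Finset.univ
    (fun G : SimpleGraph (Fin n) => G ∈ S) (graphProb n hk γ D)
  have htot := sum_graphProb hk γ D hD01 (n := n)
  have : Pr n hk γ D S + Pr n hk γ D Sᶜ = 1 := by
    rw [e]; unfold Pr; rw [h]; exact htot
  linarith

/-- Union bound over a finite index type. -/
lemma Pr_iUnion_le {ι : Type*} [Fintype ι] (hD01 : ∀ i j, 0 ≤ D i j ∧ D i j ≤ 1)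
    (S : ι → Set (SimpleGraph (Fin n))) :
    Pr n hk γ D (⋃ x, S x) ≤ ∑ x : ι, Pr n hk γ D (S x) := by
  have key : Pr n hk γ D (⋃ x, S x)
      ≤ ∑ G ∈ Finset.univ.filter (· ∈ ⋃ x, S x),
          ∑ x : ι, (if G ∈ S x then (1:ℝ) else 0) * graphProb n hk γ D G := by
    apply Finset.sum_le_sum
    intro G hG
    simp only [Finset.mem_filter, Finset.mem_univ, true_and, Set.mem_iUnion] at hG
    obtain ⟨x₀, hx₀⟩ := hG
    rw [← Finset.sum_mul]
    have h1 : (1:ℝ) ≤ ∑ x : ι, if G ∈ S x then (1:ℝ) else 0 := by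
      have := Finset.single_le_sum (f := fun x : ι => if G ∈ S x then (1:ℝ) else 0)
        (fun x _ => by positivity) (Finset.mem_univ x₀)
      simp only [if_pos hx₀] at this
      exact this
    nlinarith [graphProb_nonneg hk γ D hD01 G]
  apply key.trans
  rw [Finset.sum_comm]
  apply Finset.sum_le_sum
  intro x _
  have : ∀ G ∈ Finset.univ.filter (· ∈ ⋃ y, S y),
      (if G ∈ S x then (1:ℝ) else 0) * graphProb n hk γ D G
      = if G ∈ S x then graphProb n hk γ D G else 0 := by
    intro G _; by_cases h : G ∈ S x <;> simp [h]
  rw [Finset.sum_congr rfl this, ← Finset.sum_filter]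
  apply Finset.sum_le_sum_of_subset_of_nonneg
  · exact (Finset.filter_subset_filter _ (Finset.subset_univ _)).trans (by rfl)
  · intro G _ _; exact graphProb_nonneg hk γ D hD01 G

end PrBasics
section Exp

lemma exp_quad {x : ℝ} (hx : |x| ≤ 1) : Real.exp x ≤ 1 + x + x^2 := by
  have h := Real.exp_bound hx (n := 2) (by norm_num)
  have hs : ∑ m ∈ Finset.range 2, x ^ m / (m.factorial : ℝ) = 1 + x := by
    simp [Finset.sum_range_succ]
  rw [hs] at h
  norm_num [Nat.factorial] at h
  have h2 := abs_le.mp h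
  nlinarith [sq_abs x, h2.1, h2.2, sq_abs x ▸ (sq_nonneg x)]

lemma mgf_bound {p u : ℝ} (hp0 : 0 ≤ p) (hp1 : p ≤ 1) (hu : |u| ≤ 1) :
    p * Real.exp (u*(1-p)) + (1-p) * Real.exp (u*(0-p)) ≤ Real.exp (u^2) := by
  have h1 : Real.exp (u*(1-p)) ≤ 1 + u*(1-p) + (u*(1-p))^2 := by
    apply exp_quad
    rw [abs_mul]
    have : |1 - p| ≤ 1 := by rw [abs_le]; constructor <;> linarith
    calc |u| * |1-p| ≤ 1 * 1 := by
          apply mul_le_mul hu this (abs_nonneg _) zero_le_one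
      _ = 1 := by ring
  have h2 : Real.exp (u*(0-p)) ≤ 1 + u*(0-p) + (u*(0-p))^2 := by
    apply exp_quad
    rw [abs_mul]
    have : |0 - p| ≤ 1 := by rw [abs_le]; constructor <;> linarith
    calc |u| * |0-p| ≤ 1 * 1 := by
          apply mul_le_mul hu this (abs_nonneg _) zero_le_one
      _ = 1 := by ring
  have h3 : (1:ℝ) + u^2 ≤ Real.exp (u^2) := by
    linarith [Real.add_one_le_exp (u^2)]
  have e1 : Real.exp (u*(1-p)) > 0 := Real.exp_pos _
  have e2 : Real.exp (u*(0-p)) > 0 := Real.exp_pos _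
  nlinarith [sq_nonneg u, sq_nonneg (u*p), sq_nonneg (u*(1-p)), mul_nonneg hp0 (sub_nonneg.mpr hp1)]

end Exp

section Chernoff
open Classical
variable {k : ℕ} (hk : 0 < k) (γ : Fin k → ℝ) (D : Fin k → Fin k → ℝ) {n : ℕ}

lemma chernoff_one_sided
    (hD01 : ∀ i j, 0 ≤ D i j ∧ D i j ≤ 1)
    (Q : Finset (Fin n × Fin n)) (hQ : Q ⊆ pairs n) (p σ t a : ℝ)
    (hp : ∀ q ∈ Q, D (blockIdx n hk γ q.1) (blockIdx n hk γ q.2) = p)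
    (hp0 : 0 ≤ p) (hp1 : p ≤ 1) (ht0 : 0 ≤ t) (ht1 : t ≤ 1) (hσ : σ = 1 ∨ σ = -1) :
    Pr n hk γ D {G | a ≤ σ * ∑ q ∈ Q, ((if G.Adj q.1 q.2 then (1:ℝ) else 0) - p)}
      ≤ Real.exp (t^2 * Q.card - t * a) := by
  classical
  set w : Fin n × Fin n → ℝ := fun q => D (blockIdx n hk γ q.1) (blockIdx n hk γ q.2) with hw
  set Ft : Fin n × Fin n → ℝ :=
    fun q => if q ∈ Q then w q * Real.exp (t*σ*(1-p)) else w q with hFt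
  set Ff : Fin n × Fin n → ℝ :=
    fun q => if q ∈ Q then (1 - w q) * Real.exp (t*σ*(0-p)) else 1 - w q with hFf
  set T : SimpleGraph (Fin n) → ℝ :=
    fun G => ∑ q ∈ Q, ((if G.Adj q.1 q.2 then (1:ℝ) else 0) - p) with hT
  set E : SimpleGraph (Fin n) → Fin n × Fin n → ℝ :=
    fun G q => Real.exp (t*σ*((if G.Adj q.1 q.2 then (1:ℝ) else 0) - p)) with hE
  have stepA : ∀ G : SimpleGraph (Fin n),
      graphProb n hk γ D G * Real.exp (t * σ * T G)
      = ∏ q ∈ pairs n, (if G.Adj q.1 q.2 then Ft q else Ff q) := by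
    intro G
    have e1 : Real.exp (t*σ*T G) = ∏ q ∈ Q, E G q := by
      rw [hT]; simp only []
      rw [Finset.mul_sum, Real.exp_sum]
    have e2 : graphProb n hk γ D G = ∏ q ∈ pairs n, (if G.Adj q.1 q.2 then w q else 1 - w q) := rfl
    have e3 : (∏ q ∈ Q, E G q) = ∏ q ∈ pairs n, (if q ∈ Q then E G q else 1) := by
      rw [Finset.prod_ite_mem, Finset.inter_eq_right.mpr hQ]
    rw [e1, e2, e3, ← Finset.prod_mul_distrib]
    apply Finset.prod_congr rfl
    intro q _
    simp only [hFt, hFf, hE]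
    by_cases hadj : G.Adj q.1 q.2 <;> by_cases hm : q ∈ Q <;> simp [hadj, hm]
  have step1 : Pr n hk γ D {G | a ≤ σ * T G}
      ≤ ∑ G : SimpleGraph (Fin n), graphProb n hk γ D G * Real.exp (t * (σ * T G - a)) := by
    unfold Pr
    calc ∑ G ∈ Finset.univ.filter (· ∈ {G | a ≤ σ * T G}), graphProb n hk γ D G
        ≤ ∑ G ∈ Finset.univ.filter (· ∈ {G | a ≤ σ * T G}),
            graphProb n hk γ D G * Real.exp (t * (σ * T G - a)) := by
          apply Finset.sum_le_sum
          intro G hG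
          simp only [Finset.mem_filter, Finset.mem_univ, true_and, Set.mem_setOf_eq] at hG
          have h1 : (1:ℝ) ≤ Real.exp (t * (σ * T G - a)) := by
            rw [show (1:ℝ) = Real.exp 0 from (Real.exp_zero).symm]
            apply Real.exp_le_exp.mpr
            have : 0 ≤ σ * T G - a := by linarith
            positivity
          nlinarith [graphProb_nonneg hk γ D hD01 G]
      _ ≤ ∑ G : SimpleGraph (Fin n), graphProb n hk γ D G * Real.exp (t * (σ * T G - a)) := by
          apply Finset.sum_le_sum_of_subset_of_nonneg (Finset.filter_subset _ _)
          intro G _ _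
          have := graphProb_nonneg hk γ D hD01 G
          positivity
  have step2 : (∑ G : SimpleGraph (Fin n), graphProb n hk γ D G * Real.exp (t * (σ * T G - a)))
      = Real.exp (-(t*a)) * ∏ q ∈ pairs n, (Ft q + Ff q) := by
    have : ∀ G : SimpleGraph (Fin n),
        graphProb n hk γ D G * Real.exp (t * (σ * T G - a))
        = Real.exp (-(t*a)) * ∏ q ∈ pairs n, (if G.Adj q.1 q.2 then Ft q else Ff q) := by
      intro G
      rw [← stepA G,
        show t * (σ * T G - a) = t * σ * T G + (-(t*a)) by ring, Real.exp_add]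
      ring
    rw [Finset.sum_congr rfl (fun G _ => this G), ← Finset.mul_sum, sum_graph']
  have step3 : (∏ q ∈ pairs n, (Ft q + Ff q)) ≤ Real.exp (t^2 * Q.card) := by
    have hval : ∀ q ∈ pairs n, Ft q + Ff q
        = if q ∈ Q then (p * Real.exp ((t*σ)*(1-p)) + (1-p) * Real.exp ((t*σ)*(0-p))) else 1 := by
      intro q _
      by_cases hm : q ∈ Q
      · simp only [hFt, hFf, if_pos hm, hw]
        rw [hp q hm]
      · simp only [hFt, hFf, if_neg hm]; ring
    rw [Finset.prod_congr rfl hval, Finset.prod_ite_mem, Finset.inter_eq_right.mpr hQ]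
    have hu : |t*σ| ≤ 1 := by
      rcases hσ with h | h <;> rw [h] <;> simp [abs_of_nonneg ht0, ht1, abs_mul]
    have hfac : p * Real.exp ((t*σ)*(1-p)) + (1-p) * Real.exp ((t*σ)*(0-p)) ≤ Real.exp (t^2) := by
      have := mgf_bound hp0 hp1 hu
      have hsq : (t*σ)^2 = t^2 := by rcases hσ with h | h <;> rw [h] <;> ring
      rw [hsq] at this
      exact this
    calc (∏ _q ∈ Q, (p * Real.exp ((t*σ)*(1-p)) + (1-p) * Real.exp ((t*σ)*(0-p))))
        ≤ ∏ _q ∈ Q, Real.exp (t^2) := by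
          apply Finset.prod_le_prod
          · intro q _
            have e1 := Real.exp_pos ((t*σ)*(1-p))
            have e2 := Real.exp_pos ((t*σ)*(0-p))
            nlinarith
          · intro q _; exact hfac
      _ = Real.exp (t^2) ^ Q.card := Finset.prod_const _
      _ = Real.exp (t^2 * Q.card) := by
          rw [← Real.exp_nat_mul]; ring_nf
  calc Pr n hk γ D {G | a ≤ σ * T G}
      ≤ Real.exp (-(t*a)) * ∏ q ∈ pairs n, (Ft q + Ff q) := by rw [← step2]; exact step1
    _ ≤ Real.exp (-(t*a)) * Real.exp (t^2 * Q.card) := by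
        apply mul_le_mul_of_nonneg_left step3 (le_of_lt (Real.exp_pos _))
    _ = Real.exp (t^2 * Q.card - t * a) := by rw [← Real.exp_add]; ring_nf

end Chernoff
section Blocks
variable {k : ℕ}

/-- Partial sums of `γ`. -/
def Ssum {k : ℕ} (γ : Fin k → ℝ) (i : Fin k) : ℝ := ∑ j ∈ Finset.Iic i, γ j

lemma Ssum_sub (γ : Fin k → ℝ) (i : Fin k) : Ssum γ i - γ i = ∑ j ∈ Finset.Iio i, γ j := by
  rw [Ssum, ← Finset.Iio_insert, Finset.sum_insert (by simp)]
  ring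

lemma Ssum_last (hk : 0 < k) (γ : Fin k → ℝ) (hγsum : ∑ i, γ i = 1) :
    Ssum γ ⟨k-1, by omega⟩ = 1 := by
  rw [Ssum, show Finset.Iic (⟨k-1, by omega⟩ : Fin k) = Finset.univ from ?_, hγsum]
  ext j
  simp only [Finset.mem_Iic, Finset.mem_univ, iff_true, Fin.le_def]
  omega

lemma Ssum_le_one (γ : Fin k → ℝ) (hγpos : ∀ i, 0 < γ i) (hγsum : ∑ i, γ i = 1) (i : Fin k) : Ssum γ i ≤ 1 := by
  rw [← hγsum, Ssum]
  apply Finset.sum_le_sum_of_subset_of_nonneg (Finset.subset_univ _)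
  intro j _ _; exact (hγpos j).le

lemma Ssum_prev_nonneg (γ : Fin k → ℝ) (hγpos : ∀ i, 0 < γ i) (i : Fin k) : 0 ≤ Ssum γ i - γ i := by
  rw [Ssum_sub]
  exact Finset.sum_nonneg fun j _ => (hγpos j).le

section WithN
variable {n : ℕ} (hk : 0 < k) (γ : Fin k → ℝ) (hγpos : ∀ i, 0 < γ i) (hγsum : ∑ i, γ i = 1)

include hk hγsum in
lemma blockIdx_filter_nonempty (v : Fin n) :
    (Finset.univ.filter fun i : Fin k =>
      ((v : ℝ) + 1) / n ≤ ∑ j ∈ Finset.Iic i, γ j).Nonempty := by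
  refine ⟨⟨k-1, by omega⟩, ?_⟩
  rw [Finset.mem_filter]
  refine ⟨Finset.mem_univ _, ?_⟩
  have := Ssum_last hk γ hγsum
  rw [Ssum] at this
  rw [this]
  have hn : (0:ℝ) < n := by
    have h0 : 0 < n := lt_of_le_of_lt (Nat.zero_le _) v.2
    exact_mod_cast h0
  rw [div_le_one hn]
  have := v.2
  exact_mod_cast Nat.succ_le_of_lt this

include hγsum in
lemma blockIdx_spec (v : Fin n) :
    ((v : ℝ) + 1) / n ≤ Ssum γ (blockIdx n hk γ v)
    ∧ ∀ j : Fin k, ((v : ℝ) + 1) / n ≤ Ssum γ j → blockIdx n hk γ v ≤ j := by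
  have hne := blockIdx_filter_nonempty hk γ hγsum v
  rw [blockIdx, dif_pos hne]
  constructor
  · have := Finset.min'_mem _ hne
    rw [Finset.mem_filter] at this
    exact this.2
  · intro j hj
    apply Finset.min'_le
    rw [Finset.mem_filter]
    exact ⟨Finset.mem_univ _, hj⟩

include hγpos hγsum in
lemma mem_block_iff (v : Fin n) (i : Fin k) :
    v ∈ block n hk γ i ↔
      (n:ℝ) * (Ssum γ i - γ i) < (v:ℝ) + 1 ∧ ((v:ℝ) + 1) ≤ n * Ssum γ i := by
  have hn : (0:ℝ) < n := by
    have h0 : 0 < n := lt_of_le_of_lt (Nat.zero_le _) v.2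
    exact_mod_cast h0
  obtain ⟨h1, h2⟩ := blockIdx_spec hk γ hγsum v
  rw [block, Finset.mem_filter]
  simp only [Finset.mem_univ, true_and]
  constructor
  · intro heq
    constructor
    · by_cases hi : i.val = 0
      · have : Ssum γ i - γ i = 0 := by
          rw [Ssum_sub]
          rw [show Finset.Iio i = (∅ : Finset (Fin k)) from ?_, Finset.sum_empty]
          ext j; simp only [Finset.mem_Iio, Finset.notMem_empty, iff_false, Fin.lt_def, hi]
          omega
        rw [this, mul_zero]
        positivity
      · set i' : Fin k := ⟨i.val - 1, by omega⟩ with hi'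
        have hlt : i' < i := by rw [Fin.lt_def]; simp only [hi']; omega
        have hSeq : Ssum γ i' = Ssum γ i - γ i := by
          rw [Ssum_sub, Ssum]
          apply Finset.sum_congr ?_ (fun _ _ => rfl)
          ext j
          simp only [Finset.mem_Iic, Finset.mem_Iio, Fin.le_def, Fin.lt_def, hi', Fin.val_mk]
          omega
        have hx : Ssum γ i' < ((v:ℝ)+1)/n := by
          by_contra hc
          push_neg at hc
          have := h2 i' hc
          rw [heq] at this
          exact absurd this (not_le.mpr hlt)
        rw [hSeq] at hx
        calc (n:ℝ) * (Ssum γ i - γ i) < n * (((v:ℝ)+1)/n) := by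
              apply mul_lt_mul_of_pos_left hx hn
          _ = (v:ℝ)+1 := by field_simp
    · rw [heq] at h1
      calc ((v:ℝ)+1) = n * (((v:ℝ)+1)/n) := by field_simp
        _ ≤ n * Ssum γ i := mul_le_mul_of_nonneg_left h1 hn.le
  · rintro ⟨hA, hB⟩
    have hxB : ((v:ℝ)+1)/n ≤ Ssum γ i := by
      rw [div_le_iff₀ hn]
      calc ((v:ℝ)+1) ≤ n * Ssum γ i := hB
        _ = Ssum γ i * n := by ring
    have hle : blockIdx n hk γ v ≤ i := h2 i hxB
    rcases lt_or_eq_of_le hle with hlt | heq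
    · exfalso
      have hsub : Ssum γ (blockIdx n hk γ v) ≤ Ssum γ i - γ i := by
        rw [Ssum_sub, Ssum]
        apply Finset.sum_le_sum_of_subset_of_nonneg
        · intro j hj
          rw [Finset.mem_Iic] at hj
          rw [Finset.mem_Iio]
          exact lt_of_le_of_lt hj hlt
        · intro j _ _; exact (hγpos j).le
      have : ((v:ℝ)+1)/n ≤ Ssum γ i - γ i := h1.trans hsub
      rw [div_le_iff₀ hn] at this
      nlinarith
    · exact heq

include hγpos hγsum in
lemma block_card_lb (i : Fin k) :
    (n:ℝ) * γ i - 1 ≤ ((block n hk γ i).card : ℝ) := by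
  rcases Nat.eq_zero_or_pos n with hn0 | hn0
  · subst hn0
    simp only [Nat.cast_zero, zero_mul]
    have : (0:ℝ) ≤ ((block 0 hk γ i).card : ℝ) := by positivity
    linarith
  set A : ℝ := (n:ℝ) * (Ssum γ i - γ i) with hA
  set B : ℝ := (n:ℝ) * Ssum γ i with hB
  have hA0 : 0 ≤ A := by
    rw [hA]
    exact mul_nonneg (Nat.cast_nonneg n) (Ssum_prev_nonneg γ hγpos i)
  have hAB : A ≤ B := by
    rw [hA, hB]
    apply mul_le_mul_of_nonneg_left ?_ (Nat.cast_nonneg n)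
    have := hγpos i; linarith
  have hBn : B ≤ n := by
    rw [hB]
    calc (n:ℝ) * Ssum γ i ≤ n * 1 :=
        mul_le_mul_of_nonneg_left (Ssum_le_one γ hγpos hγsum i) (Nat.cast_nonneg n)
      _ = n := by ring
  have hmap : ∀ m ∈ Finset.Ioc (Nat.floor A) (Nat.floor B), m - 1 < n := by
    intro m hm
    rw [Finset.mem_Ioc] at hm
    have h1 : (m:ℝ) ≤ B := by
      calc (m:ℝ) ≤ (Nat.floor B : ℝ) := Nat.cast_le.mpr hm.2
        _ ≤ B := Nat.floor_le (hA0.trans hAB)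
    have : (m:ℝ) ≤ n := h1.trans hBn
    have hmn : m ≤ n := by exact_mod_cast this
    have hm1 : 1 ≤ m := by omega
    omega
  set g : ℕ → Fin n := fun m => if h : m - 1 < n then ⟨m-1, h⟩ else ⟨0, hn0⟩ with hg
  have hinj : Set.InjOn g (Finset.Ioc (Nat.floor A) (Nat.floor B)) := by
    intro m hm m' hm' heq
    simp only [Finset.coe_Ioc, Set.mem_Ioc] at hm hm'
    have h1 : m - 1 < n := hmap m (Finset.mem_Ioc.mpr hm)
    have h2 : m' - 1 < n := hmap m' (Finset.mem_Ioc.mpr hm')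
    rw [hg] at heq
    simp only [dif_pos h1, dif_pos h2, Fin.mk.injEq] at heq
    omega
  have hmaps : ∀ m ∈ Finset.Ioc (Nat.floor A) (Nat.floor B), g m ∈ block n hk γ i := by
    intro m hm
    have hlt := hmap m hm
    rw [Finset.mem_Ioc] at hm
    have hm1 : 1 ≤ m := by omega
    rw [hg]
    simp only [dif_pos hlt]
    rw [mem_block_iff hk γ hγpos hγsum]
    have hcast : ((( ⟨m-1, hlt⟩ : Fin n) : ℕ) : ℝ) + 1 = (m:ℝ) := by
      simp only []
      rw [Nat.cast_sub hm1]
      push_cast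
      ring
    constructor
    · rw [show (n:ℝ) * (Ssum γ i - γ i) = A from rfl, hcast]
      calc A < (Nat.floor A : ℝ) + 1 := Nat.lt_floor_add_one A
        _ ≤ (m:ℝ) := by exact_mod_cast Nat.succ_le_of_lt hm.1
    · rw [hcast, show (n:ℝ) * Ssum γ i = B from rfl]
      calc (m:ℝ) ≤ (Nat.floor B : ℝ) := Nat.cast_le.mpr hm.2
        _ ≤ B := Nat.floor_le (hA0.trans hAB)
  have hcard := Finset.card_le_card_of_injOn g hmaps hinj
  rw [Nat.card_Ioc] at hcard
  have hfloorAB : Nat.floor A ≤ Nat.floor B := Nat.floor_mono hAB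
  have hcast2 : ((Nat.floor B - Nat.floor A : ℕ) : ℝ)
      = (Nat.floor B : ℝ) - (Nat.floor A : ℝ) := by
    rw [Nat.cast_sub hfloorAB]
  have hfB : B - 1 < (Nat.floor B : ℝ) := by
    have := Nat.lt_floor_add_one B
    linarith
  have hfA : (Nat.floor A : ℝ) ≤ A := Nat.floor_le hA0
  have : (n:ℝ) * γ i - 1 ≤ ((Nat.floor B - Nat.floor A : ℕ) : ℝ) := by
    rw [hcast2]
    have : B - A = (n:ℝ) * γ i := by rw [hA, hB]; ring
    linarith
  calc (n:ℝ) * γ i - 1 ≤ ((Nat.floor B - Nat.floor A : ℕ) : ℝ) := this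
    _ ≤ ((block n hk γ i).card : ℝ) := Nat.cast_le.mpr hcard

lemma block_disjoint (hk : 0 < k) (γ : Fin k → ℝ) {i j : Fin k} (hij : i ≠ j) :
    ∀ v : Fin n, v ∈ block n hk γ i → v ∉ block n hk γ j := by
  intro v hi hj
  rw [block, Finset.mem_filter] at hi hj
  exact hij (hi.2 ▸ hj.2 ▸ rfl)

end WithN
end Blocks
section Dev
open Classical
variable {k : ℕ} (hk : 0 < k) (γ : Fin k → ℝ) (D : Fin k → Fin k → ℝ) {n : ℕ}

lemma Pr_union_le (hD01 : ∀ i j, 0 ≤ D i j ∧ D i j ≤ 1) (S₁ S₂ : Set (SimpleGraph (Fin n))) :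
    Pr n hk γ D (S₁ ∪ S₂) ≤ Pr n hk γ D S₁ + Pr n hk γ D S₂ := by
  have h := Pr_iUnion_le hk γ D hD01 (fun b : Bool => if b then S₁ else S₂)
  have e1 : (⋃ b : Bool, if b then S₁ else S₂) = S₁ ∪ S₂ := by
    ext G
    constructor
    · intro hG
      rw [Set.mem_iUnion] at hG
      obtain ⟨b, hb⟩ := hG
      cases b
      · exact Set.mem_union_right _ (by simpa using hb)
      · exact Set.mem_union_left _ (by simpa using hb)
    · intro hG
      rcases (Set.mem_union _ _ _).mp hG with h | h
      · exact Set.mem_iUnion.mpr ⟨true, by simpa⟩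
      · exact Set.mem_iUnion.mpr ⟨false, by simpa⟩
  have e2 : (∑ b : Bool, Pr n hk γ D (if b then S₁ else S₂)) = Pr n hk γ D S₁ + Pr n hk γ D S₂ := by
    rw [Fintype.sum_bool]; simp
  rw [e1, e2] at h
  exact h

/-- The per-pair deviation bound via Chernoff. -/
lemma dev_pair (hD01 : ∀ i j, 0 ≤ D i j ∧ D i j ≤ 1) (hDsymm : ∀ i j, D i j = D j i)
    (hγpos : ∀ i, 0 < γ i) (hγsum : ∑ i, γ i = 1)
    {i j : Fin k} (hij : i ≠ j) (X Y : Finset (Fin n))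
    (hX : X ⊆ block n hk γ i) (hY : Y ⊆ block n hk γ j)
    (δ : ℝ) (hδ0 : 0 < δ) (hδ1 : δ ≤ 1/2) :
    Pr n hk γ D {G | δ * ((X.card : ℝ) * (Y.card : ℝ))
        ≤ |ecount n G X Y - D i j * ((X.card : ℝ) * (Y.card : ℝ))|}
      ≤ 2 * Real.exp (-(δ^2/4) * ((X.card : ℝ) * (Y.card : ℝ))) := by
  classical
  -- vertices in X and Y are distinct
  have hdisjvw : ∀ v ∈ X, ∀ w ∈ Y, v ≠ w := by
    intro v hv w hw hvw
    subst hvw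
    exact block_disjoint hk γ hij v (hX hv) (hY hw)
  set φ : Fin n × Fin n → Fin n × Fin n := fun p => if p.1 < p.2 then p else (p.2, p.1) with hφ
  set Q : Finset (Fin n × Fin n) := (X ×ˢ Y).image φ with hQdef
  have hinj : ∀ x ∈ X ×ˢ Y, ∀ y ∈ X ×ˢ Y, φ x = φ y → x = y := by
    intro x hx y hy hxy
    rw [Finset.mem_product] at hx hy
    have hxne : x.1 ≠ x.2 := hdisjvw _ hx.1 _ hx.2
    have hyne : y.1 ≠ y.2 := hdisjvw _ hy.1 _ hy.2
    rw [hφ] at hxy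
    simp only [] at hxy
    by_cases h1 : x.1 < x.2 <;> by_cases h2 : y.1 < y.2
    · rwa [if_pos h1, if_pos h2] at hxy
    · rw [if_pos h1, if_neg h2] at hxy
      exfalso
      have : x.1 = y.2 := by rw [Prod.ext_iff] at hxy; exact hxy.1
      exact hdisjvw _ hx.1 _ hy.2 this
    · rw [if_neg h1, if_pos h2] at hxy
      exfalso
      have h3 : x.2 = y.1 := by rw [Prod.ext_iff] at hxy; exact hxy.1
      exact hdisjvw _ hy.1 _ hx.2 h3.symm
    · rw [if_neg h1, if_neg h2] at hxy
      rw [Prod.ext_iff] at hxy ⊢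
      exact ⟨hxy.2, hxy.1⟩
  have hQsub : Q ⊆ pairs n := by
    intro q hq
    rw [hQdef, Finset.mem_image] at hq
    obtain ⟨p, hp, rfl⟩ := hq
    rw [Finset.mem_product] at hp
    have hne : p.1 ≠ p.2 := hdisjvw _ hp.1 _ hp.2
    rw [hφ]
    simp only [pairs, Finset.mem_filter, Finset.mem_univ, true_and]
    by_cases h : p.1 < p.2
    · rw [if_pos h]; exact h
    · rw [if_neg h]
      exact lt_of_le_of_ne (not_lt.mp h) (Ne.symm hne)
  have hQcard : (Q.card : ℝ) = (X.card : ℝ) * (Y.card : ℝ) := by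
    rw [hQdef, Finset.card_image_of_injOn (fun x hx y hy => hinj x hx y hy), Finset.card_product]
    push_cast; ring
  have hQp : ∀ q ∈ Q, D (blockIdx n hk γ q.1) (blockIdx n hk γ q.2) = D i j := by
    intro q hq
    rw [hQdef, Finset.mem_image] at hq
    obtain ⟨p, hp, rfl⟩ := hq
    rw [Finset.mem_product] at hp
    have hbv : blockIdx n hk γ p.1 = i := by
      have := hX hp.1; rw [block, Finset.mem_filter] at this; exact this.2
    have hbw : blockIdx n hk γ p.2 = j := by
      have := hY hp.2; rw [block, Finset.mem_filter] at this; exact this.2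
    rw [hφ]
    by_cases h : p.1 < p.2
    · simp only [if_pos h]; rw [hbv, hbw]
    · simp only [if_neg h]; rw [hbw, hbv]; exact hDsymm j i
  have hecount : ∀ G : SimpleGraph (Fin n),
      ecount n G X Y = ∑ q ∈ Q, (if G.Adj q.1 q.2 then (1:ℝ) else 0) := by
    intro G
    rw [hQdef, Finset.sum_image (fun x hx y hy => hinj x hx y hy)]
    rw [ecount, ← Finset.sum_product']
    apply Finset.sum_congr rfl
    intro p _
    rw [hφ]
    by_cases h : p.1 < p.2
    · simp only [if_pos h]
    · simp only [if_neg h]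
      by_cases ha : G.Adj p.1 p.2
      · rw [if_pos ha, if_pos ((G.adj_comm p.1 p.2).mp ha)]
      · rw [if_neg ha, if_neg (fun hb => ha ((G.adj_comm p.2 p.1).mp hb))]
  set m : ℝ := (X.card : ℝ) * (Y.card : ℝ) with hm
  have hm0 : 0 ≤ m := by rw [hm]; positivity
  set p₀ : ℝ := D i j with hp₀
  have hT : ∀ G : SimpleGraph (Fin n),
      (∑ q ∈ Q, ((if G.Adj q.1 q.2 then (1:ℝ) else 0) - p₀)) = ecount n G X Y - p₀ * m := by
    intro G
    rw [Finset.sum_sub_distrib, Finset.sum_const, ← hecount G, nsmul_eq_mul, ← hQcard]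
    ring
  -- event inclusion into two one-sided events
  have hsub : {G : SimpleGraph (Fin n) | δ * m ≤ |ecount n G X Y - p₀ * m|}
      ⊆ {G : SimpleGraph (Fin n) | δ * m ≤ (1:ℝ) * ∑ q ∈ Q, ((if G.Adj q.1 q.2 then (1:ℝ) else 0) - p₀)}
        ∪ {G : SimpleGraph (Fin n) | δ * m ≤ (-1:ℝ) * ∑ q ∈ Q, ((if G.Adj q.1 q.2 then (1:ℝ) else 0) - p₀)} := by
    intro G hG
    simp only [Set.mem_setOf_eq] at hG
    rw [Set.mem_union]
    simp only [Set.mem_setOf_eq, hT G]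
    rcases le_abs.mp hG with h | h
    · left; linarith
    · right; linarith
  have hchern1 := chernoff_one_sided hk γ D hD01 Q hQsub p₀ 1 (δ/2) (δ * m)
    hQp (hD01 i j).1 (hD01 i j).2 (by linarith) (by linarith) (Or.inl rfl)
  have hchern2 := chernoff_one_sided hk γ D hD01 Q hQsub p₀ (-1) (δ/2) (δ * m)
    hQp (hD01 i j).1 (hD01 i j).2 (by linarith) (by linarith) (Or.inr rfl)
  have hexp : Real.exp ((δ/2)^2 * Q.card - (δ/2) * (δ * m)) = Real.exp (-(δ^2/4) * m) := by
    congr 1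
    rw [hQcard]
    ring
  calc Pr n hk γ D {G | δ * m ≤ |ecount n G X Y - p₀ * m|}
      ≤ Pr n hk γ D ({G : SimpleGraph (Fin n) | δ * m ≤ (1:ℝ) * ∑ q ∈ Q, ((if G.Adj q.1 q.2 then (1:ℝ) else 0) - p₀)}
        ∪ {G : SimpleGraph (Fin n) | δ * m ≤ (-1:ℝ) * ∑ q ∈ Q, ((if G.Adj q.1 q.2 then (1:ℝ) else 0) - p₀)}) :=
        Pr_mono hk γ D hD01 hsub
    _ ≤ Pr n hk γ D {G : SimpleGraph (Fin n) | δ * m ≤ (1:ℝ) * ∑ q ∈ Q, ((if G.Adj q.1 q.2 then (1:ℝ) else 0) - p₀)}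
        + Pr n hk γ D {G : SimpleGraph (Fin n) | δ * m ≤ (-1:ℝ) * ∑ q ∈ Q, ((if G.Adj q.1 q.2 then (1:ℝ) else 0) - p₀)} :=
        Pr_union_le hk γ D hD01 _ _
    _ ≤ Real.exp ((δ/2)^2 * Q.card - (δ/2) * (δ * m)) + Real.exp ((δ/2)^2 * Q.card - (δ/2) * (δ * m)) := by
        exact add_le_add hchern1 hchern2
    _ = 2 * Real.exp (-(δ^2/4) * m) := by rw [hexp]; ring

end Dev
section Helpers
open Classical Filter
variable {k : ℕ} (hk : 0 < k) (γ : Fin k → ℝ) (D : Fin k → Fin k → ℝ) {n : ℕ}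

lemma Pr_eq_zero (S : Set (SimpleGraph (Fin n))) (h : ∀ G, G ∉ S) :
    Pr n hk γ D S = 0 := by
  rw [Pr]
  refine Finset.sum_eq_zero fun G hG => ?_
  rw [Finset.mem_filter] at hG
  exact absurd hG.2 (h G)

lemma Pr_le_one (hD01 : ∀ i j, 0 ≤ D i j ∧ D i j ≤ 1) (S : Set (SimpleGraph (Fin n))) :
    Pr n hk γ D S ≤ 1 := by
  calc Pr n hk γ D S ≤ Pr n hk γ D Set.univ := Pr_mono hk γ D hD01 (Set.subset_univ S)
    _ = 1 := Pr_univ hk γ D hD01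

lemma tendsto_bound_zero (c : ℝ) (hc : 0 < c) (C : ℝ) :
    Tendsto (fun n : ℕ => C * ((4:ℝ)^n * Real.exp (-c * (n:ℝ)^2))) atTop (nhds 0) := by
  have key : Tendsto (fun n : ℕ => (4:ℝ)^n * Real.exp (-c * (n:ℝ)^2)) atTop (nhds 0) := by
    have heq : ∀ n : ℕ, (4:ℝ)^n * Real.exp (-c * (n:ℝ)^2)
        = Real.exp (Real.log 4 * n - c * (n:ℝ)^2) := by
      intro n
      rw [show Real.log 4 * n - c * (n:ℝ)^2 = Real.log 4 * n + (-c * (n:ℝ)^2) by ring,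
        Real.exp_add]
      congr 1
      rw [show Real.log 4 * (n:ℝ) = (n:ℝ) * Real.log 4 by ring, Real.exp_nat_mul,
        Real.exp_log (by norm_num : (0:ℝ) < 4)]
    rw [show (fun n : ℕ => (4:ℝ)^n * Real.exp (-c * (n:ℝ)^2))
        = fun n : ℕ => Real.exp (Real.log 4 * n - c * (n:ℝ)^2) from funext heq]
    apply Filter.Tendsto.comp Real.tendsto_exp_atBot
    apply Filter.tendsto_atBot_mono' atTop (f₁ := fun n : ℕ => -(n:ℝ)) ?_ ?_
    · rw [Filter.EventuallyLE, Filter.eventually_atTop]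
      refine ⟨Nat.ceil ((Real.log 4 + 1)/c) + 1, fun n hn => ?_⟩
      have h1 : ((Real.log 4 + 1)/c) ≤ (n:ℝ) := by
        calc ((Real.log 4 + 1)/c) ≤ (Nat.ceil ((Real.log 4 + 1)/c) : ℝ) := Nat.le_ceil _
          _ ≤ (n:ℝ) := by exact_mod_cast Nat.le_of_succ_le hn
      have h2 : Real.log 4 + 1 ≤ c * n := by
        rw [div_le_iff₀ hc] at h1
        linarith
      have hn0 : (0:ℝ) ≤ (n:ℝ) := Nat.cast_nonneg n
      nlinarith
    · have h3 : Tendsto (fun n : ℕ => (n:ℝ)) atTop atTop := tendsto_natCast_atTop_atTop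
      exact Filter.tendsto_neg_atBot_iff.mpr h3
  have := key.const_mul C
  simpa using this

end Helpers
section Assembly
open Classical Filter
variable {k : ℕ}

/-- The bad event for a pair of blocks and a pair of subsets. -/
def SevSet (n : ℕ) (hk : 0 < k) (γ : Fin k → ℝ) (D : Fin k → Fin k → ℝ) (ε : ℝ)
    (i j : Fin k) (X Y : Finset (Fin n)) : Set (SimpleGraph (Fin n)) :=
  {G | i ≠ j ∧ X ⊆ block n hk γ i ∧ Y ⊆ block n hk γ j
      ∧ ε * ((block n hk γ i).card : ℝ) < (X.card : ℝ)
      ∧ ε * ((block n hk γ j).card : ℝ) < (Y.card : ℝ)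
      ∧ ε/2 ≤ |dBet n G X Y - D i j|}

lemma SevSet_le (hk : 0 < k) (γ : Fin k → ℝ) (D : Fin k → Fin k → ℝ)
    (hD01 : ∀ i j, 0 ≤ D i j ∧ D i j ≤ 1) (hDsymm : ∀ i j, D i j = D j i)
    (hγpos : ∀ i, 0 < γ i) (hγsum : ∑ i, γ i = 1)
    (ε δ c g0 : ℝ) (hε : 0 < ε)
    (hδ0 : 0 < δ) (hδhalf : δ ≤ 1/2) (hδε : δ ≤ ε/2)
    (hg0 : 0 < g0) (hg0le : ∀ i, g0 ≤ γ i)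
    (hc : c = (δ^2/4) * (ε^2 * g0^2 / 4))
    (n : ℕ) (hbig : ∀ i : Fin k, (γ i * n)/2 ≤ ((block n hk γ i).card : ℝ))
    (i j : Fin k) (X Y : Finset (Fin n)) :
    Pr n hk γ D (SevSet n hk γ D ε i j X Y) ≤ 2 * Real.exp (-c * (n:ℝ)^2) := by
  classical
  by_cases hcond : i ≠ j ∧ X ⊆ block n hk γ i ∧ Y ⊆ block n hk γ j
      ∧ ε * ((block n hk γ i).card : ℝ) < (X.card : ℝ)
      ∧ ε * ((block n hk γ j).card : ℝ) < (Y.card : ℝ)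
  · obtain ⟨hij, hX, hY, hXc, hYc⟩ := hcond
    have hAi : (0:ℝ) ≤ ((block n hk γ i).card : ℝ) := Nat.cast_nonneg _
    have hAj : (0:ℝ) ≤ ((block n hk γ j).card : ℝ) := Nat.cast_nonneg _
    have hXpos : (0:ℝ) < (X.card : ℝ) := lt_of_le_of_lt (mul_nonneg hε.le hAi) hXc
    have hYpos : (0:ℝ) < (Y.card : ℝ) := lt_of_le_of_lt (mul_nonneg hε.le hAj) hYc
    have hmpos : (0:ℝ) < (X.card : ℝ) * (Y.card : ℝ) := mul_pos hXpos hYpos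
    have hsub : SevSet n hk γ D ε i j X Y
        ⊆ {G | δ * ((X.card : ℝ) * (Y.card : ℝ))
            ≤ |ecount n G X Y - D i j * ((X.card : ℝ) * (Y.card : ℝ))|} := by
      intro G hG
      obtain ⟨_, _, _, _, _, hdev⟩ := hG
      simp only [Set.mem_setOf_eq]
      have heq : dBet n G X Y - D i j
          = (ecount n G X Y - D i j * ((X.card : ℝ) * (Y.card : ℝ)))
            / ((X.card : ℝ) * (Y.card : ℝ)) := by
        rw [dBet]; field_simp
      rw [heq, abs_div, abs_of_pos hmpos, le_div_iff₀ hmpos] at hdev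
      calc δ * ((X.card : ℝ) * (Y.card : ℝ))
          ≤ (ε/2) * ((X.card : ℝ) * (Y.card : ℝ)) := by nlinarith
        _ ≤ |ecount n G X Y - D i j * ((X.card : ℝ) * (Y.card : ℝ))| := hdev
    have hdevp := dev_pair hk γ D hD01 hDsymm hγpos hγsum hij X Y hX hY δ hδ0 hδhalf
    have hm_lb : (ε * g0 * n / 2)^2 ≤ (X.card : ℝ) * (Y.card : ℝ) := by
      have hn0 : (0:ℝ) ≤ (n:ℝ) := Nat.cast_nonneg n
      have h1 : ε * g0 * n / 2 ≤ (X.card : ℝ) := by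
        calc ε * g0 * n / 2 = ε * ((g0 * n)/2) := by ring
          _ ≤ ε * ((γ i * n)/2) := by
              apply mul_le_mul_of_nonneg_left ?_ hε.le
              nlinarith [hg0le i]
          _ ≤ ε * ((block n hk γ i).card : ℝ) := mul_le_mul_of_nonneg_left (hbig i) hε.le
          _ ≤ (X.card : ℝ) := le_of_lt hXc
      have h2 : ε * g0 * n / 2 ≤ (Y.card : ℝ) := by
        calc ε * g0 * n / 2 = ε * ((g0 * n)/2) := by ring
          _ ≤ ε * ((γ j * n)/2) := by
              apply mul_le_mul_of_nonneg_left ?_ hε.le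
              nlinarith [hg0le j]
          _ ≤ ε * ((block n hk γ j).card : ℝ) := mul_le_mul_of_nonneg_left (hbig j) hε.le
          _ ≤ (Y.card : ℝ) := le_of_lt hYc
      have h0 : (0:ℝ) ≤ ε * g0 * n / 2 := by positivity
      nlinarith
    calc Pr n hk γ D (SevSet n hk γ D ε i j X Y)
        ≤ Pr n hk γ D {G | δ * ((X.card : ℝ) * (Y.card : ℝ))
            ≤ |ecount n G X Y - D i j * ((X.card : ℝ) * (Y.card : ℝ))|} :=
          Pr_mono hk γ D hD01 hsub
      _ ≤ 2 * Real.exp (-(δ^2/4) * ((X.card : ℝ) * (Y.card : ℝ))) := hdevp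
      _ ≤ 2 * Real.exp (-c * (n:ℝ)^2) := by
          apply mul_le_mul_of_nonneg_left ?_ (by norm_num : (0:ℝ) ≤ 2)
          apply Real.exp_le_exp.mpr
          have : c * (n:ℝ)^2 ≤ (δ^2/4) * ((X.card : ℝ) * (Y.card : ℝ)) := by
            rw [hc]
            calc (δ^2/4) * (ε^2 * g0^2 / 4) * (n:ℝ)^2
                = (δ^2/4) * ((ε * g0 * n / 2)^2) := by ring
              _ ≤ (δ^2/4) * ((X.card : ℝ) * (Y.card : ℝ)) := by
                  apply mul_le_mul_of_nonneg_left hm_lb (by positivity)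
          linarith
  · have hz : Pr n hk γ D (SevSet n hk γ D ε i j X Y) = 0 := by
      apply Pr_eq_zero
      intro G hG
      exact hcond ⟨hG.1, hG.2.1, hG.2.2.1, hG.2.2.2.1, hG.2.2.2.2.1⟩
    rw [hz]
    positivity

end Assembly
set_option maxHeartbeats 2000000 in
/-- Lemma: for any `ε > 0`, with high probability every pair of distinct blocks of the
planted partition `ξ_n` is `ε`-regular in `G_n`. -/
theorem stmt_17
    {k : ℕ} (hk : 0 < k) (γ : Fin k → ℝ) (hγpos : ∀ i, 0 < γ i)
    (hγsum : ∑ i, γ i = 1) (D : Fin k → Fin k → ℝ)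
    (hD01 : ∀ i j, 0 ≤ D i j ∧ D i j ≤ 1) (hDsymm : ∀ i j, D i j = D j i)
    (hirr : ∀ i j : Fin k, i ≠ j → ∃ q, D i q ≠ D j q)
    (ε : ℝ) (hε : 0 < ε) :
    Tendsto (fun n : ℕ => Pr n hk γ D
      {G : SimpleGraph (Fin n) |
        ∀ i j : Fin k, i ≠ j →
          epsRegular n G (block n hk γ i) (block n hk γ j) ε})
      atTop (nhds 1) := by
  classical
  by_cases hε1 : 1 ≤ ε
  · -- vacuous case : `ε ≥ 1` makes regularity trivial
    have hset : ∀ n : ℕ, {G : SimpleGraph (Fin n) |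
        ∀ i j : Fin k, i ≠ j →
          epsRegular n G (block n hk γ i) (block n hk γ j) ε} = Set.univ := by
      intro n
      apply Set.eq_univ_of_forall
      intro G
      simp only [Set.mem_setOf_eq]
      intro i j _
      intro X hXs Y _ hXc _
      exfalso
      have h1 : (X.card:ℝ) ≤ ((block n hk γ i).card : ℝ) :=
        Nat.cast_le.mpr (Finset.card_le_card hXs)
      have h0 : (0:ℝ) ≤ ((block n hk γ i).card:ℝ) := Nat.cast_nonneg _
      nlinarith
    have heq : (fun n : ℕ => Pr n hk γ D
        {G : SimpleGraph (Fin n) |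
          ∀ i j : Fin k, i ≠ j →
            epsRegular n G (block n hk γ i) (block n hk γ j) ε}) = fun _ => (1:ℝ) :=
      funext fun n => by rw [hset n]; exact Pr_univ hk γ D hD01
    rw [heq]
    exact tendsto_const_nhds
  · push_neg at hε1
    set δ : ℝ := min (ε/2) (1/2) with hδ
    have hδ0 : 0 < δ := lt_min (by linarith) (by norm_num)
    have hδhalf : δ ≤ 1/2 := min_le_right _ _
    have hδε : δ ≤ ε/2 := min_le_left _ _
    have : Nonempty (Fin k) := ⟨⟨0, hk⟩⟩
    set g0 : ℝ := Finset.univ.inf' Finset.univ_nonempty γ with hg0def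
    have hg0le : ∀ i, g0 ≤ γ i := fun i => Finset.inf'_le γ (Finset.mem_univ i)
    have hg0 : 0 < g0 := by
      rw [hg0def, Finset.lt_inf'_iff]
      exact fun i _ => hγpos i
    set c : ℝ := (δ^2/4) * (ε^2 * g0^2 / 4) with hc
    have hc0 : 0 < c := by rw [hc]; positivity
    set Bn : ℕ → ℝ := fun n => ((k:ℝ) * k * 2) * ((4:ℝ)^n * Real.exp (-c * (n:ℝ)^2)) with hBn
    have hB0 : Tendsto Bn atTop (nhds 0) := by
      rw [hBn]
      exact tendsto_bound_zero c hc0 _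
    have hlow : Tendsto (fun n => 1 - Bn n) atTop (nhds 1) := by
      have := (tendsto_const_nhds (α := ℕ) (x := (1:ℝ)) (f := atTop)).sub hB0
      simpa using this
    refine tendsto_of_tendsto_of_tendsto_of_le_of_le' hlow
      (tendsto_const_nhds (α := ℕ) (x := (1:ℝ)) (f := atTop)) ?_ ?_
    · -- eventual lower bound
      rw [Filter.eventually_atTop]
      refine ⟨Nat.ceil (2/g0), fun n hn => ?_⟩
      have hnR : 2/g0 ≤ (n:ℝ) := (Nat.le_ceil _).trans (Nat.cast_le.mpr hn)
      have hbig : ∀ i : Fin k, (γ i * n)/2 ≤ ((block n hk γ i).card : ℝ)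
          ∧ (1:ℝ) ≤ ((block n hk γ i).card : ℝ) := by
        intro i
        have hlb := block_card_lb hk γ hγpos hγsum (n := n) i
        have h2 : 2 ≤ (n:ℝ) * γ i := by
          have hgi := hg0le i
          have hγi := hγpos i
          rw [div_le_iff₀ hg0] at hnR
          nlinarith
        constructor <;> nlinarith
      set Sev : (Fin k × Fin k) × Finset (Fin n) × Finset (Fin n) → Set (SimpleGraph (Fin n)) :=
        fun x => SevSet n hk γ D ε x.1.1 x.1.2 x.2.1 x.2.2 with hSevdef
      set good : Set (SimpleGraph (Fin n)) := {G : SimpleGraph (Fin n) |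
        ∀ i j : Fin k, i ≠ j →
          epsRegular n G (block n hk γ i) (block n hk γ j) ε} with hgood
      have hsubU : goodᶜ ⊆ ⋃ x, Sev x := by
        intro G hG
        rw [Set.mem_compl_iff, hgood] at hG
        simp only [Set.mem_setOf_eq] at hG
        push_neg at hG
        obtain ⟨i, j, hij, hreg⟩ := hG
        unfold epsRegular at hreg
        push_neg at hreg
        obtain ⟨X, hXs, Y, hYs, hXc, hYc, hdev⟩ := hreg
        by_cases hcase : ε/2 ≤ |dBet n G X Y - D i j|
        · exact Set.mem_iUnion.mpr ⟨((i,j),(X,Y)),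
            show _ ∧ _ ∧ _ ∧ _ ∧ _ ∧ _ from ⟨hij, hXs, hYs, hXc, hYc, hcase⟩⟩
        · push_neg at hcase
          have htri := abs_sub_le (dBet n G X Y) (D i j)
            (dBet n G (block n hk γ i) (block n hk γ j))
          have habs : |D i j - dBet n G (block n hk γ i) (block n hk γ j)|
              = |dBet n G (block n hk γ i) (block n hk γ j) - D i j| := abs_sub_comm _ _
          have hcase2 : ε/2 ≤ |dBet n G (block n hk γ i) (block n hk γ j) - D i j| := by
            linarith
          have hcardi := (hbig i).2
          have hcardj := (hbig j).2
          refine Set.mem_iUnion.mpr ⟨((i,j),(block n hk γ i, block n hk γ j)),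
            show _ ∧ _ ∧ _ ∧ _ ∧ _ ∧ _ from
              ⟨hij, subset_rfl, subset_rfl, ?_, ?_, hcase2⟩⟩
          · nlinarith
          · nlinarith
      have hUn := Pr_iUnion_le hk γ D hD01 Sev
      have hEach : ∀ x, Pr n hk γ D (Sev x) ≤ 2 * Real.exp (-c * (n:ℝ)^2) := by
        intro x
        rw [hSevdef]
        exact SevSet_le hk γ D hD01 hDsymm hγpos hγsum ε δ c g0 hε hδ0 hδhalf hδε hg0 hg0le hc
          n (fun i => (hbig i).1) x.1.1 x.1.2 x.2.1 x.2.2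
      have hsum : (∑ x : (Fin k × Fin k) × Finset (Fin n) × Finset (Fin n),
          Pr n hk γ D (Sev x)) ≤ Bn n := by
        calc (∑ x : (Fin k × Fin k) × Finset (Fin n) × Finset (Fin n), Pr n hk γ D (Sev x))
            ≤ ∑ _x : (Fin k × Fin k) × Finset (Fin n) × Finset (Fin n),
                (2 * Real.exp (-c * (n:ℝ)^2)) :=
              Finset.sum_le_sum (fun x _ => hEach x)
          _ = (Fintype.card ((Fin k × Fin k) × Finset (Fin n) × Finset (Fin n)) : ℝ)
                * (2 * Real.exp (-c * (n:ℝ)^2)) := by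
              rw [Finset.sum_const, nsmul_eq_mul]
              congr 1
          _ = Bn n := by
              rw [hBn]
              have hcard : Fintype.card ((Fin k × Fin k) × Finset (Fin n) × Finset (Fin n))
                  = (k * k) * (2^n * 2^n) := by
                simp [Fintype.card_prod, Fintype.card_finset, Fintype.card_fin]
              rw [hcard]
              push_cast
              have h4 : (2:ℝ)^n * (2:ℝ)^n = (4:ℝ)^n := by
                rw [← mul_pow]; norm_num
              rw [← h4]
              ring
      have hPrcompl : Pr n hk γ D goodᶜ ≤ Bn n :=
        le_trans (Pr_mono hk γ D hD01 hsubU) (le_trans hUn hsum)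
      have hPr := Pr_compl hk γ D hD01 good
      rw [hgood] at hPr hPrcompl
      rw [← hgood] at hPr hPrcompl
      show 1 - Bn n ≤ Pr n hk γ D good
      linarith
    · exact Filter.Eventually.of_forall fun n => Pr_le_one hk γ D hD01 _
end

section
/- The entropy H_P(α) of the Poisson(α) distribution is, as a function of α > 0, increasing and concave; moreover its first two derivatives are d/dα H_P(α) = E[ log( (X+1)/α ) ] and d²/dα² H_P(α) = −1/α + E[ log( 1 + 1/(X+1) ) ], where X is a random variable with distribution Poisson(α). -/
open Real

namespace RD

noncomputable section

/-- The entropy of the `Poisson(α)` distribution (natural logarithms):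
`H_P(α) = α - α log α + e^{-α} ∑_{k≥0} (α^k/k!) log k!`. -/
def HPois (α : ℝ) : ℝ :=
  α - α * Real.log α
    + Real.exp (-α) * ∑' k : ℕ, α ^ k / (k.factorial : ℝ) * Real.log (k.factorial : ℝ)

/-- `E[log((X+1)/α)]` for `X ∼ Poisson(α)`: the first derivative of `H_P`. -/
def HPois' (α : ℝ) : ℝ :=
  ∑' k : ℕ, Real.exp (-α) * α ^ k / (k.factorial : ℝ)
    * Real.log (((k : ℝ) + 1) / α)

/-- `-1/α + E[log(1 + 1/(X+1))]` for `X ∼ Poisson(α)`: the second derivative of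
`H_P`. -/
def HPois'' (α : ℝ) : ℝ :=
  -1 / α + ∑' k : ℕ, Real.exp (-α) * α ^ k / (k.factorial : ℝ)
    * Real.log (1 + 1 / ((k : ℝ) + 1))

end

end RD

open Real RD


namespace RDAux

/-- Power series sum. -/
noncomputable def S (c : ℕ → ℝ) (x : ℝ) : ℝ := ∑' n : ℕ, c n * x ^ n

/-- Derived coefficient sequence. -/
noncomputable def dc (c : ℕ → ℝ) (n : ℕ) : ℝ := ((n : ℝ) + 1) * c (n + 1)

/-- Coefficients with infinite radius of convergence. -/
def Good (c : ℕ → ℝ) : Prop := ∀ r : ℝ, 0 < r → Summable fun n => |c n| * r ^ n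

lemma good_of_bound {c : ℕ → ℝ} (C B : ℝ) (hB : 0 ≤ B)
    (h : ∀ n, |c n| ≤ C * B ^ n / n.factorial) : Good c := by
  intro r hr
  have hs := (Real.summable_pow_div_factorial (B * r)).mul_left C
  refine Summable.of_nonneg_of_le (fun n => by positivity) (fun n => ?_) hs
  have h1 : |c n| * r ^ n ≤ (C * B ^ n / n.factorial) * r ^ n := by
    apply mul_le_mul_of_nonneg_right (h n) (by positivity)
  refine h1.trans (le_of_eq ?_)
  rw [mul_pow]
  ring

lemma Good.summable {c : ℕ → ℝ} (hc : Good c) (x : ℝ) :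
    Summable fun n => c n * x ^ n := by
  refine Summable.of_norm_bounded (hc (|x| + 1) (by positivity)) (fun n => ?_)
  rw [norm_mul, norm_pow, Real.norm_eq_abs, Real.norm_eq_abs]
  have : |x| ^ n ≤ (|x| + 1) ^ n := by gcongr <;> simp [abs_nonneg]
  exact mul_le_mul_of_nonneg_left this (abs_nonneg _)

lemma good_dc {c : ℕ → ℝ} (hc : Good c) : Good (dc c) := by
  intro r hr
  have hs := ((hc (2 * r) (by positivity)).comp_injective Nat.succ_injective).mul_left (1 / r)
  refine Summable.of_nonneg_of_le (fun n => by positivity) (fun n => ?_) hs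
  simp only [Function.comp]
  have hn : ((n : ℝ) + 1) ≤ 2 ^ (n + 1) := by
    have h1 : (n : ℝ) < 2 ^ n := by exact_mod_cast (Nat.lt_two_pow_self (n := n))
    have h2 : (1 : ℝ) ≤ 2 ^ n := one_le_pow₀ (by norm_num)
    calc ((n : ℝ) + 1) ≤ 2 ^ n + 2 ^ n := by linarith
    _ = 2 ^ (n + 1) := by ring
  have : |RDAux.dc c n| * r ^ n = ((n : ℝ) + 1) * |c (n + 1)| * r ^ n := by
    rw [RDAux.dc, abs_mul, abs_of_nonneg (by positivity : (0:ℝ) ≤ (n:ℝ) + 1)]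
  rw [this]
  calc ((n : ℝ) + 1) * |c (n + 1)| * r ^ n
      ≤ 2 ^ (n + 1) * |c (n + 1)| * r ^ n := by
        apply mul_le_mul_of_nonneg_right (mul_le_mul_of_nonneg_right hn (abs_nonneg _))
        positivity
    _ = 1 / r * (|c (n + 1)| * (2 * r) ^ (n + 1)) := by
        rw [mul_pow]; field_simp; ring

lemma Good.hasDerivAt {c : ℕ → ℝ} (hc : Good c) (x : ℝ) :
    HasDerivAt (S c) (S (dc c) x) x := by
  set R : ℝ := |x| + 1 with hRdef
  have hR : 0 < R := by positivity
  have hxR : |x| < R := by simp [hRdef]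
  set u : ℕ → ℝ := fun n => 1 / R * (|c n| * (2 * R) ^ n) with hu_def
  have hu : Summable u := ((hc (2 * R) (by positivity)).mul_left (1 / R))
  have hub : ∀ n : ℕ, ∀ y : ℝ, y ∈ Metric.ball (0 : ℝ) R →
      ‖c n * ((n : ℝ) * y ^ (n - 1))‖ ≤ u n := by
    intro n y hy
    rw [Metric.mem_ball, dist_zero_right, Real.norm_eq_abs] at hy
    rw [norm_mul, norm_mul, norm_pow, Real.norm_eq_abs, Real.norm_eq_abs,
      Real.norm_eq_abs, Nat.abs_cast]
    rcases Nat.eq_zero_or_pos n with h0 | hpos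
    · subst h0; simp [hu_def]; positivity
    · have hyR : |y| ^ (n - 1) ≤ R ^ (n - 1) :=
        pow_le_pow_left₀ (abs_nonneg y) hy.le _
      have hn2 : (n : ℝ) ≤ 2 ^ n := by exact_mod_cast ((Nat.lt_two_pow_self (n := n))).le
      have hRpow : R ^ (n - 1) = R ^ n / R := by
        rw [eq_div_iff hR.ne', ← pow_succ, Nat.sub_add_cancel hpos]
      calc |c n| * ((n : ℝ) * |y| ^ (n - 1))
          ≤ |c n| * (2 ^ n * R ^ (n - 1)) := by
            apply mul_le_mul_of_nonneg_left _ (abs_nonneg _)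
            exact mul_le_mul hn2 hyR (by positivity) (by positivity)
        _ = u n := by rw [hu_def]; simp only; rw [hRpow, mul_pow]; field_simp
  have hderiv : ∀ n : ℕ, ∀ y : ℝ, y ∈ Metric.ball (0 : ℝ) R →
      HasDerivAt (fun z => c n * z ^ n) (c n * ((n : ℝ) * y ^ (n - 1))) y := by
    intro n y _
    exact (hasDerivAt_pow n y).const_mul (c n)
  have hx_mem : x ∈ Metric.ball (0 : ℝ) R := by
    rw [Metric.mem_ball, dist_zero_right, Real.norm_eq_abs]; exact hxR
  have key := hasDerivAt_tsum_of_isPreconnected hu Metric.isOpen_ball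
    (convex_ball (0:ℝ) R).isPreconnected
    hderiv hub hx_mem (hc.summable x) hx_mem
  have hsum : Summable fun n : ℕ => c n * ((n : ℝ) * x ^ (n - 1)) :=
    Summable.of_norm_bounded hu (fun n => hub n x hx_mem)
  have : (∑' n : ℕ, c n * ((n : ℝ) * x ^ (n - 1))) = S (dc c) x := by
    rw [hsum.tsum_eq_zero_add]
    simp only [Nat.cast_zero, zero_mul, mul_zero, zero_add, Nat.add_sub_cancel]
    rw [S]
    exact tsum_congr fun n => by rw [dc]; push_cast; ring
  rw [this] at key
  exact key

/-! ### Specific coefficient sequences -/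

noncomputable def cF (n : ℕ) : ℝ := Real.log n.factorial / n.factorial
noncomputable def cG (n : ℕ) : ℝ := Real.log ((n : ℝ) + 1) / n.factorial
noncomputable def cK (n : ℕ) : ℝ := Real.log (1 + 1 / ((n : ℝ) + 1)) / n.factorial
noncomputable def cE (n : ℕ) : ℝ := 1 / n.factorial

lemma fact_pos (n : ℕ) : (0 : ℝ) < n.factorial := by
  exact_mod_cast n.factorial_pos

lemma log_fact_nonneg (n : ℕ) : 0 ≤ Real.log n.factorial :=
  Real.log_nonneg (by exact_mod_cast n.factorial_pos)

lemma log_le_self_of_pos {x : ℝ} (hx : 0 < x) : Real.log x ≤ x :=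
  (Real.log_le_sub_one_of_pos hx).trans (by linarith)

lemma cast_le_two_pow (n : ℕ) : (n : ℝ) ≤ 2 ^ n := by
  exact_mod_cast ((Nat.lt_two_pow_self (n := n))).le

lemma log_fact_le (n : ℕ) : Real.log n.factorial ≤ 4 ^ n := by
  have h1 : Real.log n.factorial ≤ Real.log ((n : ℝ) ^ n) := by
    apply Real.log_le_log (fact_pos n)
    exact_mod_cast Nat.factorial_le_pow n
  have h2 : Real.log ((n : ℝ) ^ n) = n * Real.log n := Real.log_pow n n
  have h3 : Real.log (n : ℝ) ≤ (n : ℝ) := by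
    rcases Nat.eq_zero_or_pos n with h | h
    · subst h; simp
    · exact log_le_self_of_pos (by exact_mod_cast h)
  have h4 : (n : ℝ) * Real.log n ≤ (n : ℝ) * n :=
    mul_le_mul_of_nonneg_left h3 (Nat.cast_nonneg n)
  have h5 : (n : ℝ) * n ≤ 2 ^ n * 2 ^ n :=
    mul_le_mul (cast_le_two_pow n) (cast_le_two_pow n) (Nat.cast_nonneg n) (by positivity)
  calc Real.log n.factorial ≤ (n : ℝ) * Real.log n := by rw [← h2]; exact h1
    _ ≤ 2 ^ n * 2 ^ n := le_trans h4 h5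
    _ = 4 ^ n := by rw [← mul_pow]; norm_num

lemma goodF : Good cF := by
  apply good_of_bound 1 4 (by norm_num)
  intro n
  rw [cF, abs_of_nonneg (div_nonneg (log_fact_nonneg n) (fact_pos n).le), one_mul]
  exact div_le_div_of_nonneg_right (log_fact_le n) (fact_pos n).le

lemma goodG : Good cG := by
  apply good_of_bound 2 2 (by norm_num)
  intro n
  have hpos : (0 : ℝ) < (n : ℝ) + 1 := by positivity
  have h1 : Real.log ((n : ℝ) + 1) ≤ 2 * 2 ^ n := by
    calc Real.log ((n : ℝ) + 1) ≤ (n : ℝ) + 1 := log_le_self_of_pos hpos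
      _ ≤ 2 ^ n + 2 ^ n := by
          have := cast_le_two_pow n
          have h2 : (1:ℝ) ≤ 2 ^ n := one_le_pow₀ (by norm_num)
          linarith
      _ = 2 * 2 ^ n := by ring
  rw [cG, abs_of_nonneg (div_nonneg (Real.log_nonneg (by linarith)) (fact_pos n).le)]
  rw [div_le_div_iff₀ (fact_pos n) (fact_pos n)] at *
  · nlinarith [fact_pos n]

lemma goodK : Good cK := by
  apply good_of_bound 1 1 (by norm_num)
  intro n
  have hpos : (0 : ℝ) < (n : ℝ) + 1 := by positivity
  have h0 : (0:ℝ) < 1 + 1 / ((n : ℝ) + 1) := by positivity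
  have h1 : Real.log (1 + 1 / ((n : ℝ) + 1)) ≤ 1 := by
    calc Real.log (1 + 1 / ((n : ℝ) + 1)) ≤ (1 + 1 / ((n : ℝ) + 1)) - 1 :=
          Real.log_le_sub_one_of_pos h0
      _ = 1 / ((n : ℝ) + 1) := by ring
      _ ≤ 1 := by rw [div_le_one hpos]; linarith
  rw [cK, abs_of_nonneg (div_nonneg (Real.log_nonneg (by linarith [one_div_pos.mpr hpos])) (fact_pos n).le),
    one_pow, one_mul]
  exact div_le_div_of_nonneg_right h1 (fact_pos n).le

lemma goodE : Good cE := by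
  apply good_of_bound 1 1 (by norm_num)
  intro n
  rw [cE, abs_of_nonneg (by positivity), one_pow, one_mul]

lemma S_cE (x : ℝ) : S cE x = Real.exp x := by
  rw [Real.exp_eq_exp_ℝ, NormedSpace.exp_eq_tsum_div, S]
  exact tsum_congr fun n => by rw [cE]; ring

/-- coefficient identity for the first derivative -/
lemma dcF_sub (n : ℕ) : dc cF n - cF n = cG n := by
  have hfs : ((n + 1).factorial : ℝ) = ((n : ℝ) + 1) * n.factorial := by
    rw [Nat.factorial_succ]; push_cast; ring
  have hlog : Real.log ((n + 1).factorial : ℝ) =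
      Real.log ((n : ℝ) + 1) + Real.log (n.factorial : ℝ) := by
    rw [hfs, Real.log_mul (by positivity) (fact_pos n).ne']
  rw [dc, cF, cF, cG, hlog, hfs]
  have h1 : (0:ℝ) < (n : ℝ) + 1 := by positivity
  field_simp
  ring

/-- coefficient identity for the second derivative -/
lemma dcG_sub (n : ℕ) : dc cG n - cG n = cK n := by
  have hfs : ((n + 1).factorial : ℝ) = ((n : ℝ) + 1) * n.factorial := by
    rw [Nat.factorial_succ]; push_cast; ring
  have h1 : (0:ℝ) < (n : ℝ) + 1 := by positivity
  have h2 : (0:ℝ) < (n : ℝ) + 2 := by positivity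
  have harg : 1 + 1 / ((n : ℝ) + 1) = ((n : ℝ) + 2) / ((n : ℝ) + 1) := by
    field_simp
    ring
  have hlog : Real.log (1 + 1 / ((n : ℝ) + 1)) =
      Real.log ((n : ℝ) + 2) - Real.log ((n : ℝ) + 1) := by
    rw [harg, Real.log_div h2.ne' h1.ne']
  have hcast : ((n + 1 : ℕ) : ℝ) + 1 = (n : ℝ) + 2 := by push_cast; ring
  rw [dc, cG, cG, cK, hlog, hfs, hcast]
  field_simp

lemma S_sub {b c : ℕ → ℝ} (hb : Good b) (hc : Good c) (x : ℝ) :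
    S b x - S c x = S (fun n => b n - c n) x := by
  rw [S, S, S, ← Summable.tsum_sub (hb.summable x) (hc.summable x)]
  exact tsum_congr fun n => by ring

end RDAux

namespace RDAux
open RD

variable {α : ℝ}

lemma HPois_eq (a : ℝ) : HPois a = a - a * Real.log a + Real.exp (-a) * S cF a := by
  rw [RD.HPois, S]
  congr 2
  exact tsum_congr fun k => by rw [cF]; ring

lemma SdcF (x : ℝ) : S (dc cF) x - S cF x = S cG x := by
  rw [S_sub (good_dc goodF) goodF, S, S]
  exact tsum_congr fun n => by rw [dcF_sub]

lemma SdcG (x : ℝ) : S (dc cG) x - S cG x = S cK x := by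
  rw [S_sub (good_dc goodG) goodG, S, S]
  exact tsum_congr fun n => by rw [dcG_sub]

lemma hasDerivAt_HPois (hα : 0 < α) :
    HasDerivAt HPois (-Real.log α + Real.exp (-α) * S cG α) α := by
  have hF := goodF.hasDerivAt α
  have hid : HasDerivAt (fun a : ℝ => a) 1 α := hasDerivAt_id α
  have hlog : HasDerivAt Real.log α⁻¹ α := Real.hasDerivAt_log hα.ne'
  have hmul : HasDerivAt (fun a : ℝ => a * Real.log a) (1 * Real.log α + α * α⁻¹) α :=
    hid.mul hlog
  have hexp : HasDerivAt (fun a : ℝ => Real.exp (-a)) (Real.exp (-α) * (-1)) α :=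
    ((hasDerivAt_id α).neg).exp
  have hprod : HasDerivAt (fun a : ℝ => Real.exp (-a) * S cF a)
      (Real.exp (-α) * (-1) * S cF α + Real.exp (-α) * S (dc cF) α) α := hexp.mul hF
  have htotal := (hid.sub hmul).add hprod
  have : HPois = fun a : ℝ => a - a * Real.log a + Real.exp (-a) * S cF a :=
    funext HPois_eq
  rw [this]
  refine htotal.congr_deriv ?_
  have hS : S cG α = S (dc cF) α - S cF α := (SdcF α).symm
  rw [hS]
  field_simp
  ring

lemma hasDerivAt_aux2 (hα : 0 < α) :
    HasDerivAt (fun a : ℝ => -Real.log a + Real.exp (-a) * S cG a)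
      (-1 / α + Real.exp (-α) * S cK α) α := by
  have hG := goodG.hasDerivAt α
  have hlog : HasDerivAt (fun a : ℝ => -Real.log a) (-α⁻¹) α :=
    (Real.hasDerivAt_log hα.ne').neg
  have hexp : HasDerivAt (fun a : ℝ => Real.exp (-a)) (Real.exp (-α) * (-1)) α :=
    ((hasDerivAt_id α).neg).exp
  have hprod : HasDerivAt (fun a : ℝ => Real.exp (-a) * S cG a)
      (Real.exp (-α) * (-1) * S cG α + Real.exp (-α) * S (dc cG) α) α := hexp.mul hG
  have htotal := hlog.add hprod
  refine htotal.congr_deriv ?_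
  have hS : S cK α = S (dc cG) α - S cG α := (SdcG α).symm
  rw [hS, show (-1:ℝ)/α = -α⁻¹ by field_simp]
  ring

/-- the terms of `HPois'` written as a difference of two nice series -/
lemma term1_eq (hα : 0 < α) (k : ℕ) :
    Real.exp (-α) * α ^ k / (k.factorial : ℝ) * Real.log (((k : ℝ) + 1) / α)
      = Real.exp (-α) * (cG k * α ^ k)
        - Real.log α * (Real.exp (-α) * (cE k * α ^ k)) := by
  rw [Real.log_div (by positivity) hα.ne', cG, cE]
  have := fact_pos k
  field_simp

lemma exp_tsum (x : ℝ) : Real.exp x = ∑' n : ℕ, x ^ n / (n.factorial : ℝ) := by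
  rw [← S_cE, S]
  exact tsum_congr fun n => by rw [cE]; ring

lemma summable_shift (x : ℝ) :
    Summable fun k : ℕ => x ^ (k + 1) / ((k + 1).factorial : ℝ) := by
  have := (Real.summable_pow_div_factorial x).comp_injective Nat.succ_injective
  simpa [Function.comp_def] using this

lemma tsum_shift (x : ℝ) :
    ∑' k : ℕ, x ^ (k + 1) / ((k + 1).factorial : ℝ) = Real.exp x - 1 := by
  have hexp := exp_tsum x
  rw [(Real.summable_pow_div_factorial x).tsum_eq_zero_add] at hexp
  simp only [pow_zero, Nat.factorial_zero, Nat.cast_one, div_one] at hexp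
  linarith

lemma termshift (k : ℕ) :
    Real.exp (-α) * α ^ k / (k.factorial : ℝ) * (α / ((k : ℝ) + 1))
      = Real.exp (-α) * (α ^ (k + 1) / ((k + 1).factorial : ℝ)) := by
  have h1 : ((k + 1).factorial : ℝ) = ((k : ℝ) + 1) * k.factorial := by
    rw [Nat.factorial_succ]; push_cast; ring
  have := fact_pos k
  have h2 : (0:ℝ) < (k:ℝ) + 1 := by positivity
  rw [h1]
  field_simp
  ring

lemma summable_p : Summable fun k : ℕ => Real.exp (-α) * α ^ k / (k.factorial : ℝ) :=
  ((Real.summable_pow_div_factorial α).mul_left (Real.exp (-α))).congr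
    fun k => (mul_div_assoc _ _ _).symm

lemma summable_p_shift :
    Summable fun k : ℕ => Real.exp (-α) * α ^ k / (k.factorial : ℝ) * (α / ((k : ℝ) + 1)) :=
  (((summable_shift α).mul_left (Real.exp (-α)))).congr fun k => (termshift k).symm

lemma sum_p : ∑' k : ℕ, Real.exp (-α) * α ^ k / (k.factorial : ℝ) = 1 := by
  have h : ∀ k : ℕ, Real.exp (-α) * α ^ k / (k.factorial : ℝ)
      = Real.exp (-α) * (α ^ k / (k.factorial : ℝ)) := fun k => mul_div_assoc _ _ _
  rw [tsum_congr h, tsum_mul_left, ← exp_tsum, Real.exp_neg,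
    inv_mul_cancel₀ (Real.exp_ne_zero α)]

lemma sum_p_shift :
    ∑' k : ℕ, Real.exp (-α) * α ^ k / (k.factorial : ℝ) * (α / ((k : ℝ) + 1))
      = 1 - Real.exp (-α) := by
  rw [tsum_congr (fun k => termshift (α := α) k), tsum_mul_left, tsum_shift,
    mul_sub, mul_one, Real.exp_neg, inv_mul_cancel₀ (Real.exp_ne_zero α)]

lemma summable_HPois'_terms (hα : 0 < α) :
    Summable fun k : ℕ => Real.exp (-α) * α ^ k / (k.factorial : ℝ)
      * Real.log (((k : ℝ) + 1) / α) := by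
  have hA : Summable fun k => Real.exp (-α) * (cG k * α ^ k) :=
    (goodG.summable α).mul_left _
  have hB : Summable fun k => Real.log α * (Real.exp (-α) * (cE k * α ^ k)) :=
    ((goodE.summable α).mul_left _).mul_left _
  exact (hA.sub hB).congr fun k => (term1_eq hα k).symm

lemma HPois'_eq (hα : 0 < α) :
    HPois' α = -Real.log α + Real.exp (-α) * S cG α := by
  have hA : Summable fun k => Real.exp (-α) * (cG k * α ^ k) :=
    (goodG.summable α).mul_left _
  have hB : Summable fun k => Real.log α * (Real.exp (-α) * (cE k * α ^ k)) :=
    ((goodE.summable α).mul_left _).mul_left _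
  rw [RD.HPois', tsum_congr (term1_eq hα), Summable.tsum_sub hA hB, tsum_mul_left, tsum_mul_left,
    tsum_mul_left, ← S, ← S, S_cE, Real.exp_neg, inv_mul_cancel₀ (Real.exp_ne_zero α)]
  ring

lemma HPois''_eq :
    HPois'' α = -1 / α + Real.exp (-α) * S cK α := by
  rw [RD.HPois'']
  congr 1
  have hterm : ∀ k : ℕ, Real.exp (-α) * α ^ k / (k.factorial : ℝ)
      * Real.log (1 + 1 / ((k : ℝ) + 1))
      = Real.exp (-α) * (cK k * α ^ k) := by
    intro k
    rw [cK]
    have := fact_pos k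
    field_simp
  rw [tsum_congr hterm, tsum_mul_left, ← S]

lemma HPois'_pos (hα : 0 < α) : 0 < HPois' α := by
  have hE : (0:ℝ) < Real.exp (-α) := Real.exp_pos _
  have hlow : ∀ k : ℕ,
      Real.exp (-α) * α ^ k / (k.factorial : ℝ) * (1 - α / ((k : ℝ) + 1))
        ≤ Real.exp (-α) * α ^ k / (k.factorial : ℝ) * Real.log (((k : ℝ) + 1) / α) := by
    intro k
    have hp : (0:ℝ) ≤ Real.exp (-α) * α ^ k / (k.factorial : ℝ) := by positivity
    apply mul_le_mul_of_nonneg_left _ hp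
    have hx : (0:ℝ) < (((k : ℝ) + 1) / α)⁻¹ := by positivity
    have h := Real.log_le_sub_one_of_pos hx
    rw [Real.log_inv, inv_div] at h
    linarith
  have hsumlow : Summable fun k : ℕ =>
      Real.exp (-α) * α ^ k / (k.factorial : ℝ) * (1 - α / ((k : ℝ) + 1)) :=
    ((summable_p (α := α)).sub (summable_p_shift (α := α))).congr fun k => by ring
  have hlowsum : ∑' k : ℕ,
      Real.exp (-α) * α ^ k / (k.factorial : ℝ) * (1 - α / ((k : ℝ) + 1))
      = Real.exp (-α) := by
    have h : ∀ k : ℕ, Real.exp (-α) * α ^ k / (k.factorial : ℝ) * (1 - α / ((k : ℝ) + 1))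
        = Real.exp (-α) * α ^ k / (k.factorial : ℝ)
          - Real.exp (-α) * α ^ k / (k.factorial : ℝ) * (α / ((k : ℝ) + 1)) := fun k => by ring
    rw [tsum_congr h, Summable.tsum_sub (summable_p (α := α)) (summable_p_shift (α := α)),
      sum_p (α := α), sum_p_shift (α := α)]
    ring
  have hle := Summable.tsum_le_tsum hlow hsumlow (summable_HPois'_terms hα)
  rw [hlowsum] at hle
  rw [RD.HPois']
  linarith

lemma summable_HPois''_terms :
    Summable fun k : ℕ => Real.exp (-α) * α ^ k / (k.factorial : ℝ)
      * Real.log (1 + 1 / ((k : ℝ) + 1)) :=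
  ((goodK.summable α).mul_left (Real.exp (-α))).congr fun k => by
    rw [cK]
    have := fact_pos k
    field_simp

lemma HPois''_nonpos (hα : 0 < α) : HPois'' α ≤ 0 := by
  have hE : (0:ℝ) < Real.exp (-α) := Real.exp_pos _
  have hub : ∀ k : ℕ,
      Real.exp (-α) * α ^ k / (k.factorial : ℝ) * Real.log (1 + 1 / ((k : ℝ) + 1))
        ≤ Real.exp (-α) * α ^ k / (k.factorial : ℝ) * (α / ((k : ℝ) + 1)) * (1 / α) := by
    intro k
    have hp : (0:ℝ) ≤ Real.exp (-α) * α ^ k / (k.factorial : ℝ) := by positivity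
    have hk1 : (0:ℝ) < (k : ℝ) + 1 := by positivity
    have h0 : (0:ℝ) < 1 + 1 / ((k : ℝ) + 1) := by positivity
    have hlog : Real.log (1 + 1 / ((k : ℝ) + 1)) ≤ 1 / ((k : ℝ) + 1) := by
      have := Real.log_le_sub_one_of_pos h0
      linarith
    have heq : Real.exp (-α) * α ^ k / (k.factorial : ℝ) * (α / ((k : ℝ) + 1)) * (1 / α)
        = Real.exp (-α) * α ^ k / (k.factorial : ℝ) * (1 / ((k : ℝ) + 1)) := by
      field_simp
    rw [heq]
    exact mul_le_mul_of_nonneg_left hlog hp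
  have hsumub : Summable fun k : ℕ =>
      Real.exp (-α) * α ^ k / (k.factorial : ℝ) * (α / ((k : ℝ) + 1)) * (1 / α) :=
    (summable_p_shift (α := α)).mul_right _
  have hubsum : ∑' k : ℕ,
      Real.exp (-α) * α ^ k / (k.factorial : ℝ) * (α / ((k : ℝ) + 1)) * (1 / α)
      = (1 - Real.exp (-α)) * (1 / α) := by
    rw [tsum_mul_right, sum_p_shift (α := α)]
  have hle := Summable.tsum_le_tsum hub (summable_HPois''_terms (α := α)) hsumub
  rw [hubsum] at hle
  rw [RD.HPois'']
  have key : -1 / α + (1 - Real.exp (-α)) * (1 / α) = -Real.exp (-α) / α := by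
    field_simp
    ring
  have hneg : -Real.exp (-α) / α ≤ 0 := by
    apply div_nonpos_of_nonpos_of_nonneg <;> [linarith; exact hα.le]
  linarith

end RDAux

open Real RD RDAux

/-- Lemma: the Poisson entropy `H_P` is increasing and concave on `(0,∞)`, with
`(H_P)'(α) = E[log((X+1)/α)]` and `(H_P)''(α) = -1/α + E[log(1 + 1/(X+1))]`,
where `X ∼ Poisson(α)`. -/
theorem stmt_19 :
    StrictMonoOn HPois (Set.Ioi (0 : ℝ))
    ∧ ConcaveOn ℝ (Set.Ioi (0 : ℝ)) HPois
    ∧ (∀ α : ℝ, 0 < α → HasDerivAt HPois (HPois' α) α)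
    ∧ (∀ α : ℝ, 0 < α → HasDerivAt (deriv HPois) (HPois'' α) α) := by
  have hd1 : ∀ α : ℝ, 0 < α → HasDerivAt HPois (HPois' α) α := by
    intro α hα
    rw [HPois'_eq hα]
    exact hasDerivAt_HPois hα
  have hd2 : ∀ α : ℝ, 0 < α → HasDerivAt (deriv HPois) (HPois'' α) α := by
    intro α hα
    have hev : deriv HPois =ᶠ[nhds α]
        (fun a : ℝ => -Real.log a + Real.exp (-a) * S cG a) := by
      filter_upwards [isOpen_Ioi.mem_nhds (show α ∈ Set.Ioi (0:ℝ) from hα)] with b hb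
      exact (hasDerivAt_HPois hb).deriv
    rw [HPois''_eq]
    exact (hasDerivAt_aux2 hα).congr_of_eventuallyEq hev
  have hcont : ContinuousOn HPois (Set.Ioi (0 : ℝ)) := fun x hx =>
    ((hd1 x hx).differentiableAt).continuousAt.continuousWithinAt
  refine ⟨?_, ?_, hd1, hd2⟩
  · apply strictMonoOn_of_deriv_pos (convex_Ioi 0) hcont
    intro x hx
    rw [interior_Ioi] at hx
    rw [(hd1 x hx).deriv]
    exact HPois'_pos hx
  · apply concaveOn_of_deriv2_nonpos (convex_Ioi 0) hcont
    · intro x hx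
      rw [interior_Ioi] at hx
      exact ((hd1 x hx).differentiableAt).differentiableWithinAt
    · intro x hx
      rw [interior_Ioi] at hx
      exact ((hd2 x hx).differentiableAt).differentiableWithinAt
    · intro x hx
      rw [interior_Ioi] at hx
      have : deriv^[2] HPois x = deriv (deriv HPois) x := rfl
      rw [this, (hd2 x hx).deriv]
      exact HPois''_nonpos hx
end
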